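/- arXiv:2510.11571 — 11 statements merged into one kernel-verified Lean document; each statement's English description precedes it below -/
import Mathlib

section
/- Let n ≥ 1 and let 0 ≤ x_1 ≤ x_2 ≤ … ≤ x_n ≤ 1. Then there exists k ∈ {1, …, n+1} such that the point x* = k/(n+1) minimizes the function x ↦ E(x_1, …, x_n, x) over x ∈ [0,1]; moreover, if 2 ≤ k ≤ n, then x_{k−1} ≤ k/(n+1) ≤ x_k. -/
/-- The energy of a configuration of `N` points in `[0,1]`:
`E(x_1, …, x_N) = min_{π ∈ S_N} ∑_{i=1}^N |x_{π(i)} − i/N|`. -/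
noncomputable def energy {N : ℕ} (x : Fin N → ℝ) : ℝ :=
  Finset.univ.inf' Finset.univ_nonempty
    (fun π : Equiv.Perm (Fin N) => ∑ i : Fin N, |x (π i) - (((i : ℕ) : ℝ) + 1) / (N : ℝ)|)

/-!
In an optimal matching of `x_1 ≤ … ≤ x_n` and an extra point `y` with the grid `t_i = i/(n+1)`,
`y` goes to some `t_k` and the `x_j` go to the remaining grid points. Uncrossing two matched pairs
never increases the cost, so the `x_j` are best matched in order, at cost `skipCost x t k`. Hence
`E(x, y) = min_k (|y - t_k| + skipCost x t k)`, which is minimised by `y = t_k` for any `k`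
minimising `skipCost x t`. Moving the hole from `k` to a neighbour only changes the partner of
the single point `x_j` between them, so minimality of `k` forces `x_{k-1} ≤ t_k ≤ x_k`.
-/

open Finset Equiv

theorem abs_sub_add_abs_sub_le_of_le {a b c d : ℝ} (hab : a ≤ b) (hcd : c ≤ d) :
    |a - c| + |b - d| ≤ |a - d| + |b - c| := by
  rcases abs_cases (a - c) with ⟨h1, _⟩ | ⟨h1, _⟩ <;>
  rcases abs_cases (b - d) with ⟨h2, _⟩ | ⟨h2, _⟩ <;>
  rcases abs_cases (a - d) with ⟨h3, _⟩ | ⟨h3, _⟩ <;>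
  rcases abs_cases (b - c) with ⟨h4, _⟩ | ⟨h4, _⟩ <;>
  linarith

theorem le_of_abs_sub_le_abs_sub {a b x : ℝ} (hab : a < b) (h : |x - b| ≤ |x - a|) : a ≤ x := by
  by_contra! hx
  rw [abs_of_neg (by linarith), abs_of_neg (by linarith)] at h
  linarith

theorem le_of_abs_sub_le_abs_sub' {a b x : ℝ} (hab : a < b) (h : |x - a| ≤ |x - b|) : x ≤ b := by
  by_contra! hx
  rw [abs_of_pos (by linarith), abs_of_pos (by linarith)] at h
  linarith

theorem sum_abs_sub_le_sum_abs_sub_comp_perm {ι : Type*} [LinearOrder ι] [Fintype ι]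
    {a b : ι → ℝ} (ha : Monotone a) (hb : Monotone b) (σ : Perm ι) :
    ∑ i, |a i - b i| ≤ ∑ i, |a i - b (σ i)| := by
  rcases σ.support.eq_empty_or_nonempty with hσ | hσ
  · simp [Perm.support_eq_empty_iff.mp hσ]
  set m := σ.support.max' hσ
  set q := σ.symm m
  have hmm : σ m ≠ m := Perm.mem_support.mp (max'_mem _ _)
  have hσq : σ q = m := σ.apply_symm_apply m
  have hqm : q ≠ m := fun h => hmm (h ▸ hσq)
  have hq : q ≤ m := le_max' _ _ (Perm.mem_support.mpr (hσq ▸ hqm.symm))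
  have hσm : σ m ≤ m := le_max' _ _ (Perm.apply_mem_support.mpr (max'_mem _ _))
  -- Uncross at the largest moved index `m`: `τ` fixes `m`, sends `q` to `σ m`,
  -- and moves fewer points than `σ`.
  set τ := swap m (σ m) * σ
  have hτ : ∀ i ∉ ({q, m} : Finset ι), τ i = σ i := by
    intro i hi
    simp only [mem_insert, mem_singleton, not_or] at hi
    refine swap_apply_of_ne_of_ne (fun h => hi.1 ?_) (fun h => hi.2 (σ.injective h))
    rw [← hσq] at h; exact σ.injective h
  have hτq : τ q = σ m := by simp [τ, hσq]
  have hτm : τ m = m := by simp [τ]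
  calc ∑ i, |a i - b i| ≤ ∑ i, |a i - b (τ i)| := sum_abs_sub_le_sum_abs_sub_comp_perm ha hb τ
    _ ≤ ∑ i, |a i - b (σ i)| := by
      rw [← sum_add_sum_compl {q, m}, ← sum_add_sum_compl {q, m} (fun i => |a i - b (σ i)|),
        sum_pair hqm, sum_pair hqm, hτq, hτm, hσq,
        sum_congr rfl fun i hi => by rw [hτ i (mem_compl.mp hi)]]
      linarith [abs_sub_add_abs_sub_le_of_le (ha hq) (hb hσm)]
termination_by σ.support.card
decreasing_by exact Perm.card_support_swap_mul hmm

theorem Equiv.Perm.exists_apply_succAbove {n : ℕ} (π : Perm (Fin (n + 1))) (a : Fin (n + 1)) :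
    ∃ ρ : Perm (Fin n), ∀ j, π (a.succAbove j) = (π a).succAbove (ρ j) := by
  set e := (finSuccEquiv' a).symm.trans (π.trans (finSuccEquiv' (π a)))
  refine ⟨removeNone e, fun j => ?_⟩
  have he : ∃ j', e (some j) = some j' := by
    refine Option.ne_none_iff_exists'.mp ?_
    simp only [e, trans_apply, finSuccEquiv'_symm_some, Ne, finSuccEquiv'_eq_none,
      π.injective.eq_iff]
    exact (Fin.succAbove_ne a j).symm
  rw [← finSuccEquiv'_symm_some (π a), removeNone_some e he]
  simp [e]

theorem Equiv.Perm.exists_apply_eq_and_apply_succAbove {n : ℕ} (a b : Fin (n + 1)) :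
    ∃ σ : Perm (Fin (n + 1)), σ a = b ∧ ∀ j, σ (a.succAbove j) = b.succAbove j :=
  ⟨(finSuccEquiv' a).trans (finSuccEquiv' b).symm, by simp, by simp⟩

noncomputable def matchingCost {N : ℕ} (x t : Fin N → ℝ) : ℝ :=
  univ.inf' univ_nonempty fun σ : Perm (Fin N) => ∑ i, |x i - t (σ i)|

noncomputable def skipCost {n : ℕ} (x : Fin n → ℝ) (t : Fin (n + 1) → ℝ) (k : Fin (n + 1)) : ℝ :=
  ∑ j, |x j - t (k.succAbove j)|

noncomputable def grid (N : ℕ) (i : Fin N) : ℝ := (((i : ℕ) : ℝ) + 1) / (N : ℝ)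

theorem grid_strictMono (n : ℕ) : StrictMono (grid (n + 1)) := fun i j hij => by
  unfold grid
  gcongr
  exact_mod_cast hij

theorem energy_eq_matchingCost {N : ℕ} (x : Fin N → ℝ) : energy x = matchingCost x (grid N) := by
  refine le_antisymm (le_inf' _ _ fun σ _ => ?_) (le_inf' _ _ fun π _ => ?_)
  · calc energy x ≤ ∑ i, |x (σ⁻¹ i) - grid N i| := inf'_le _ (mem_univ σ⁻¹)
      _ = ∑ i, |x i - grid N (σ i)| := by rw [← Equiv.sum_comp σ]; simp
  · calc matchingCost x (grid N) ≤ ∑ i, |x i - grid N (π⁻¹ i)| := inf'_le _ (mem_univ π⁻¹)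
      _ = ∑ i, |x (π i) - grid N i| := by rw [← Equiv.sum_comp π]; simp

section snoc

variable {n : ℕ} {x : Fin n → ℝ} {t : Fin (n + 1) → ℝ}

theorem matchingCost_snoc_le (y : ℝ) (k : Fin (n + 1)) :
    matchingCost (Fin.snoc x y) t ≤ |y - t k| + skipCost x t k := by
  obtain ⟨σ, hσlast, hσ⟩ := Perm.exists_apply_eq_and_apply_succAbove (Fin.last n) k
  calc matchingCost (Fin.snoc x y) t ≤ ∑ i, |(Fin.snoc x y : Fin (n + 1) → ℝ) i - t (σ i)| :=
        inf'_le _ (mem_univ σ)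
    _ = |y - t k| + skipCost x t k := by
      simp [Fin.sum_univ_castSucc, skipCost, hσlast, ← hσ, add_comm]

theorem exists_le_matchingCost_snoc (hx : Monotone x) (ht : Monotone t) (y : ℝ) :
    ∃ k, |y - t k| + skipCost x t k ≤ matchingCost (Fin.snoc x y) t := by
  obtain ⟨σ, -, hσ⟩ := exists_mem_eq_inf' univ_nonempty
    fun σ : Perm (Fin (n + 1)) => ∑ i, |(Fin.snoc x y : Fin (n + 1) → ℝ) i - t (σ i)|
  obtain ⟨ρ, hρ⟩ := σ.exists_apply_succAbove (Fin.last n)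
  simp only [Fin.succAbove_last] at hρ
  refine ⟨σ (Fin.last n), ?_⟩
  have hrearr := sum_abs_sub_le_sum_abs_sub_comp_perm hx
    (ht.comp (Fin.strictMono_succAbove (σ (Fin.last n))).monotone) ρ
  rw [matchingCost, hσ, Fin.sum_univ_castSucc]
  simp only [Fin.snoc_castSucc, Fin.snoc_last, hρ]
  rw [add_comm]
  exact add_le_add_left hrearr _

theorem skipCost_castSucc_add (i : Fin n) :
    skipCost x t i.castSucc + |x i - t i.castSucc| = skipCost x t i.succ + |x i - t i.succ| := by
  have hne : ∀ j ∈ univ.erase i, i.castSucc.succAbove j = i.succ.succAbove j := by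
    intro j hj
    rcases lt_or_gt_of_ne (ne_of_mem_erase hj) with h | h
    · rw [Fin.succAbove_castSucc_of_lt _ _ h, Fin.succAbove_succ_of_le _ _ h.le]
    · rw [Fin.succAbove_castSucc_of_le _ _ h.le, Fin.succAbove_succ_of_lt _ _ h]
  unfold skipCost
  rw [← sum_erase_add _ _ (mem_univ i), ← sum_erase_add _ _ (mem_univ i),
    sum_congr rfl fun j hj => by rw [hne j hj], Fin.succAbove_castSucc_self,
    Fin.succAbove_succ_self]
  ring

theorem le_of_skipCost_castSucc_le {i : Fin n} (ht : t i.castSucc < t i.succ)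
    (h : skipCost x t i.castSucc ≤ skipCost x t i.succ) : t i.castSucc ≤ x i :=
  le_of_abs_sub_le_abs_sub ht (by linarith [skipCost_castSucc_add (x := x) (t := t) i])

theorem le_of_skipCost_succ_le {i : Fin n} (ht : t i.castSucc < t i.succ)
    (h : skipCost x t i.succ ≤ skipCost x t i.castSucc) : x i ≤ t i.succ :=
  le_of_abs_sub_le_abs_sub' ht (by linarith [skipCost_castSucc_add (x := x) (t := t) i])

end snoc

/-- for sorted points `0 ≤ x_1 ≤ … ≤ x_n ≤ 1`, some `x* = k/(n+1)` with
`1 ≤ k ≤ n+1` minimizes `x ↦ E(x_1,…,x_n,x)` over `[0,1]`; moreover if `2 ≤ k ≤ n` then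
`x_{k−1} ≤ k/(n+1) ≤ x_k`. -/
theorem stmt_0 (n : ℕ) (x : Fin n → ℝ)
    (hmono : Monotone x) :
    ∃ k : ℕ, 1 ≤ k ∧ k ≤ n + 1 ∧
      (∀ y ∈ Set.Icc (0 : ℝ) 1,
        energy (Fin.snoc x ((k : ℝ) / ((n : ℝ) + 1))) ≤ energy (Fin.snoc x y)) ∧
      (∀ (h2 : 2 ≤ k) (hkn : k ≤ n),
        x ⟨k - 2, by omega⟩ ≤ (k : ℝ) / ((n : ℝ) + 1) ∧
        (k : ℝ) / ((n : ℝ) + 1) ≤ x ⟨k - 1, by omega⟩) := by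
  set t := grid (n + 1)
  obtain ⟨k, -, hk⟩ := exists_min_image univ (skipCost x t) univ_nonempty
  have hgrid : ((k + 1 : ℕ) : ℝ) / ((n : ℝ) + 1) = t k := by simp [t, grid]
  refine ⟨k + 1, by omega, by omega, fun y _ => ?_, fun h2 hkn => ?_⟩
  · obtain ⟨k', hk'⟩ := exists_le_matchingCost_snoc hmono (grid_strictMono n).monotone y
    rw [hgrid, energy_eq_matchingCost, energy_eq_matchingCost]
    calc matchingCost (Fin.snoc x (t k)) t ≤ |t k - t k| + skipCost x t k :=
          matchingCost_snoc_le _ k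
      _ ≤ |y - t k'| + skipCost x t k' := by
          rw [sub_self, abs_zero, zero_add]
          linarith [hk k' (mem_univ _), abs_nonneg (y - t k')]
      _ ≤ _ := hk'
  · rw [hgrid]
    constructor
    · obtain ⟨i, rfl⟩ : ∃ i : Fin n, i.succ = k := ⟨⟨k - 1, by omega⟩, Fin.ext (by simp; omega)⟩
      simpa using le_of_skipCost_succ_le (grid_strictMono n Fin.castSucc_lt_succ)
        (hk _ (mem_univ _))
    · obtain ⟨i, rfl⟩ : ∃ i : Fin n, i.castSucc = k := ⟨⟨k, by omega⟩, rfl⟩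
      simpa using le_of_skipCost_castSucc_le (grid_strictMono n Fin.castSucc_lt_succ)
        (hk _ (mem_univ _))
end

section
/- Let n ≥ 1, let x_1, …, x_n ∈ [0,1] and let x ∈ [0,1]. Then E(x_1, …, x_n) + E(x_1, …, x_n, x) ≥ (1/(n(n+1))) · ∑_{i=1}^{n} min(i, n−i). -/
open Finset

theorem exists_perm_energy_eq {N : ℕ} (x : Fin N → ℝ) :
    ∃ σ : Equiv.Perm (Fin N), energy x = ∑ k, |x k - (((σ k : ℕ) : ℝ) + 1) / N| := by
  obtain ⟨π, -, hπ⟩ := exists_mem_eq_inf' univ_nonempty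
    (fun π : Equiv.Perm (Fin N) => ∑ i, |x (π i) - (((i : ℕ) : ℝ) + 1) / N|)
  refine ⟨π⁻¹, ?_⟩
  rw [energy, hπ, ← Equiv.sum_comp π (fun k => |x k - (((π⁻¹ k : ℕ) : ℝ) + 1) / N|)]
  simp

theorem Int.min_le_abs_mul_add_one_sub_mul {n : ℤ} (hn : 0 ≤ n) (a b : ℤ) :
    min a (n - a) ≤ |a * (n + 1) - b * n| := by
  rcases le_or_gt b a with hba | hab
  · calc min a (n - a) ≤ a := min_le_left _ _
      _ ≤ a * (n + 1) - b * n := by nlinarith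
      _ ≤ _ := le_abs_self _
  · calc min a (n - a) ≤ n - a := min_le_right _ _
      _ ≤ -(a * (n + 1) - b * n) := by nlinarith
      _ ≤ _ := neg_le_abs _

theorem min_div_le_abs_div_sub_div {n a : ℕ} (hn : 0 < n) (ha : a ≤ n) (b : ℕ) :
    ((min a (n - a) : ℕ) : ℝ) / (n * (n + 1)) ≤ |(a : ℝ) / n - b / (n + 1)| := by
  have hD : (0 : ℝ) < n * (n + 1) := by positivity
  have hsplit : (a : ℝ) / n - b / (n + 1) = (a * (n + 1) - b * n) / (n * (n + 1)) := by
    field_simp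
  rw [hsplit, abs_div, abs_of_pos hD, div_le_div_iff_of_pos_right hD]
  exact_mod_cast Int.min_le_abs_mul_add_one_sub_mul (Int.natCast_nonneg n) a b

theorem sum_Icc_one_eq_sum_perm {M : Type*} [AddCommMonoid M] {n : ℕ} (f : ℕ → M)
    (σ : Equiv.Perm (Fin n)) : ∑ i ∈ Icc 1 n, f i = ∑ k, f ((σ k : ℕ) + 1) := by
  rw [Equiv.sum_comp σ (fun k : Fin n => f ((k : ℕ) + 1)), Fin.sum_univ_eq_sum_range
    (fun i => f (i + 1)), range_eq_Ico, sum_Ico_add', Ico_add_one_right_eq_Icc, zero_add]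

theorem stmt_1_general (n : ℕ) (x : Fin n → ℝ)
    (y : ℝ) :
    energy x + energy (Fin.snoc x y) ≥
      (1 / ((n : ℝ) * ((n : ℝ) + 1))) * ∑ i ∈ Finset.Icc 1 n, ((min i (n - i) : ℕ) : ℝ) := by
  obtain ⟨σ, hσ⟩ := exists_perm_energy_eq x
  obtain ⟨τ, hτ⟩ := exists_perm_energy_eq (Fin.snoc x y : Fin (n + 1) → ℝ)
  set A : Fin n → ℝ := fun k => (((σ k : ℕ) : ℝ) + 1) / n
  set B : Fin n → ℝ := fun k => (((τ k.castSucc : ℕ) : ℝ) + 1) / (n + 1)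
  have hrank (k : Fin n) :
      ((min ((σ k : ℕ) + 1) (n - ((σ k : ℕ) + 1)) : ℕ) : ℝ) / (n * (n + 1)) ≤ |A k - B k| := by
    have := min_div_le_abs_div_sub_div k.pos (σ k).is_lt ((τ k.castSucc : ℕ) + 1)
    simpa [A, B] using this
  have hsnoc : energy (Fin.snoc x y) ≥ ∑ k, |x k - B k| := by
    rw [hτ, Fin.sum_univ_castSucc]
    simp [B]
  calc (1 / ((n : ℝ) * (n + 1))) * ∑ i ∈ Icc 1 n, ((min i (n - i) : ℕ) : ℝ)
      = ∑ k, ((min ((σ k : ℕ) + 1) (n - ((σ k : ℕ) + 1)) : ℕ) : ℝ) / (n * (n + 1)) := by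
        rw [sum_Icc_one_eq_sum_perm _ σ, one_div_mul_eq_div, sum_div]
    _ ≤ ∑ k, |A k - B k| := sum_le_sum fun k _ => hrank k
    _ ≤ ∑ k, (|x k - A k| + |x k - B k|) := sum_le_sum fun k _ =>
        abs_sub_comm (A k) (x k) ▸ abs_sub_le (A k) (x k) (B k)
    _ ≤ energy x + energy (Fin.snoc x y) := by
        rw [sum_add_distrib, hσ]
        exact add_le_add_right hsnoc _

/-- `E(x_1,…,x_n) + E(x_1,…,x_n,x) ≥ (1/(n(n+1))) ∑_{i=1}^n min(i, n−i)`. -/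
theorem stmt_1 (n : ℕ) (hn : 1 ≤ n) (x : Fin n → ℝ) (hx : ∀ i, x i ∈ Set.Icc (0 : ℝ) 1)
    (y : ℝ) (hy : y ∈ Set.Icc (0 : ℝ) 1) :
    energy x + energy (Fin.snoc x y) ≥
      (1 / ((n : ℝ) * ((n : ℝ) + 1))) * ∑ i ∈ Finset.Icc 1 n, ((min i (n - i) : ℕ) : ℝ) :=
  stmt_1_general n x y
end

section
/- There exists a constant c > 0 such that for every infinite sequence (x_k)_{k=1}^∞ of points in [0,1] there are infinitely many n ∈ ℕ with min over permutations π of {1, …, n} of ∑_{i=1}^{n} |x_{π(i)} − i/n| ≥ c·√(log n). Equivalently: for every N ∈ ℕ there exists n ≥ N with E(x_1, …, x_n) ≥ c·√(log n). -/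
/-!
The easy half of Kantorovich duality gives `E(x_1, …, x_n) ≥ ∑ f(x_k) - ∑ f(i/n)` for every
1-Lipschitz `f`. Taking for `f` a primitive of a bounded step function `g`, the right-hand side
is, up to `O(1)`, the pairing of `g` with the discrepancy function
`a ↦ #{k ≤ n | x_k ≤ a} - n a`.

With `M = 2^m`, view the first `M` points as the planar set `{(x_k, k/M)}`; at height `b ≈ n/M`
its discrepancy function is the one above. Halász's Riesz product
`Im ∏_{j ≤ m+1} (1 + i γ f_j)`, `γ = (m+2)^(-1/2)`, built from signed Haar functions `f_j` on
the dyadic rectangles of area `1/(2M)` and shape `2^-j × 2^(j-m-1)`, is bounded by `2` and pairs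
with the planar discrepancy to at least `√(m+2)/64 - 5/16`: each scale contributes `1/64` since
at least half of its rectangles contain no point, and a product of scales `a < b` contributes
only `O(2^(a-b))`. One of the `M` horizontal strips of height `1/M`, i.e. one `n < M`, carries at
least the average share, whence `E(x_1, …, x_n) ≥ √(m+2)/128 - 2`.
-/

open Finset
open scoped NNReal

namespace Halasz

noncomputable section

section Sums

lemma sum_range_mul {M : Type*} [AddCommMonoid M] (f : ℕ → M) (C D : ℕ) :
    ∑ u ∈ range (C * D), f u = ∑ c ∈ range C, ∑ i ∈ range D, f (c * D + i) := by
  induction C with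
  | zero => simp
  | succ C ih => rw [add_mul, one_mul, sum_range_add, ih, sum_range_succ]

lemma prod_one_add_ordered_gt {ι R : Type*} [CommRing R] [LinearOrder ι] (s : Finset ι)
    (f : ι → R) :
    ∏ i ∈ s, (1 + f i) = 1 + ∑ i ∈ s, f i * ∏ j ∈ s with i < j, (1 + f j) :=
  prod_one_add_ordered (ι := ιᵒᵈ) s f

lemma prod_range_one_add_eq {R : Type*} [CommRing R] (n : ℕ) (z : ℕ → R) :
    ∏ j ∈ range n, (1 + z j) =
      1 + ∑ b ∈ range n, z b +
        ∑ b ∈ range n, ∑ a ∈ range b, z b * z a * ∏ j ∈ Ioo a b, (1 + z j) := by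
  rw [prod_one_add_ordered, add_assoc, ← sum_add_distrib]
  refine congrArg _ (sum_congr rfl fun b hb => ?_)
  have hfb : ({j ∈ range n | j < b} : Finset ℕ) = range b := by
    ext j; simp only [mem_filter, mem_range] at hb ⊢; omega
  rw [hfb, prod_one_add_ordered_gt, mul_add, mul_one, mul_sum]
  refine congrArg _ (sum_congr rfl fun a ha => ?_)
  have hfa : ({j ∈ range b | a < j} : Finset ℕ) = Ioo a b := by
    ext j; simp only [mem_filter, mem_range, mem_Ioo] at ha ⊢; omega
  rw [hfa, mul_assoc]

lemma norm_prod_one_add_I_mul_le {ι : Type*} (s : Finset ι) (r : ι → ℝ) :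
    ‖∏ j ∈ s, (1 + Complex.I * r j)‖ ≤ Real.exp ((∑ j ∈ s, r j ^ 2) / 2) := by
  rw [norm_prod, sum_div, Real.exp_sum]
  refine prod_le_prod (fun _ _ => norm_nonneg _) fun j _ => ?_
  have h : ‖1 + Complex.I * r j‖ = √(1 + r j ^ 2) := by
    rw [show (1 : ℂ) + Complex.I * r j = ((1 : ℝ) : ℂ) + (r j : ℂ) * Complex.I by
      push_cast; ring, Complex.norm_add_mul_I, one_pow]
  rw [h, Real.sqrt_le_left (by positivity), ← Real.exp_nat_mul]
  rw [Nat.cast_ofNat, mul_div_cancel₀ _ two_ne_zero, add_comm]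
  exact Real.add_one_le_exp _

lemma sum_range_sum_range_pow_le {ρ : ℝ} (hρ0 : 0 ≤ ρ) (hρ1 : ρ < 1) (n : ℕ) :
    ∑ b ∈ range n, ∑ a ∈ range b, ρ ^ (b - a - 1) ≤ n / (1 - ρ) := by
  have hgeom : ∀ b, ∑ a ∈ range b, ρ ^ (b - a - 1) ≤ 1 / (1 - ρ) := fun b => by
    rw [← sum_range_reflect]
    calc _ = ∑ d ∈ Ico 0 b, ρ ^ d := by
          rw [← range_eq_Ico]
          exact sum_congr rfl fun d hd => by rw [mem_range] at hd; congr 1; omega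
      _ ≤ ρ ^ 0 / (1 - ρ) := geom_sum_Ico_le_of_lt_one hρ0 hρ1
      _ = 1 / (1 - ρ) := by rw [pow_zero]
  calc _ ≤ ∑ _b ∈ range n, 1 / (1 - ρ) := sum_le_sum fun b _ => hgeom b
    _ = n / (1 - ρ) := by simp [div_eq_mul_inv]

lemma lipschitzWith_fract_mul_one_sub_fract :
    LipschitzWith 1 fun s : ℝ => Int.fract s * (1 - Int.fract s) := by
  have key : ∀ s s' : ℝ, s ≤ s' →
      |Int.fract s * (1 - Int.fract s) - Int.fract s' * (1 - Int.fract s')| ≤ s' - s := by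
    intro s s' h
    have hθ := Int.fract_nonneg s
    have hθ1 := Int.fract_lt_one s
    have hθ' := Int.fract_nonneg s'
    have hθ1' := Int.fract_lt_one s'
    rw [abs_le]
    rcases (Int.floor_mono h).eq_or_lt with heq | hlt
    · have hd : Int.fract s' - Int.fract s = s' - s := by
        rw [← Int.self_sub_floor, ← Int.self_sub_floor, heq]; ring
      constructor <;> nlinarith
    · have hd : 1 - Int.fract s + Int.fract s' ≤ s' - s := by
        have : (⌊s⌋ : ℝ) + 1 ≤ ⌊s'⌋ := by exact_mod_cast hlt
        rw [← Int.self_sub_floor, ← Int.self_sub_floor]; linarith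
      constructor <;> nlinarith
  refine LipschitzWith.of_dist_le_mul fun s s' => ?_
  simp only [NNReal.coe_one, one_mul, Real.dist_eq]
  rcases le_total s s' with h | h
  · rw [abs_sub_comm s, abs_of_nonneg (sub_nonneg.2 h)]; exact key s s' h
  · rw [abs_sub_comm, abs_of_nonneg (sub_nonneg.2 h)]; exact key s' s h

lemma sum_range_min_grid {n : ℕ} (hn : n ≠ 0) {t : ℝ} (ht0 : 0 ≤ t) (ht1 : t ≤ 1) :
    ∑ i ∈ range n, min (((i : ℝ) + 1) / n) t =
      n * (t - t ^ 2 / 2) + t / 2 - Int.fract (n * t) * (1 - Int.fract (n * t)) / (2 * n) := by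
  have hn' : (0 : ℝ) < n := by positivity
  set F := ⌊(n : ℝ) * t⌋₊
  have hF : (F : ℝ) ≤ n * t := Nat.floor_le (by positivity)
  have hF' : (n : ℝ) * t < F + 1 := Nat.lt_floor_add_one _
  have hFn : F ≤ n := by
    have : (F : ℝ) ≤ n := by nlinarith
    exact_mod_cast this
  have hfract : Int.fract ((n : ℝ) * t) = n * t - F := by
    rw [← Int.self_sub_floor, ← natCast_floor_eq_intCast_floor (by positivity)]
  rw [← Nat.add_sub_cancel' hFn, sum_range_add, Nat.add_sub_cancel' hFn, hfract]
  have h1 : ∀ i ∈ range F, min (((i : ℝ) + 1) / n) t = ((i : ℝ) + 1) / n := fun i hi => by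
    have : (i : ℝ) + 1 ≤ F := by exact_mod_cast mem_range.1 hi
    exact min_eq_left ((div_le_iff₀ hn').2 (by nlinarith))
  have h2 : ∀ i ∈ range (n - F), min ((((F + i : ℕ) : ℝ) + 1) / n) t = t := fun i _ => by
    refine min_eq_right ((le_div_iff₀ hn').2 ?_)
    push_cast
    nlinarith [(by positivity : (0 : ℝ) ≤ i)]
  rw [sum_congr rfl h1, sum_congr rfl h2, ← sum_div, sum_const, card_range, nsmul_eq_mul,
    Nat.cast_sub hFn]
  have hgauss : ∑ i ∈ range F, ((i : ℝ) + 1) = F * (F + 1) / 2 := by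
    induction F with
    | zero => simp
    | succ k ih => rw [sum_range_succ, ih]; push_cast; ring
  rw [hgauss]
  field_simp
  ring

lemma one_div_sqrt_sq_mul {a : ℝ} (ha : 0 < a) : (1 / √a) ^ 2 * a = 1 := by
  rw [div_pow, Real.sq_sqrt ha.le]; field_simp

end Sums

section Energy

lemma sum_sub_sum_le_mul_energy {n : ℕ} (x : Fin n → ℝ) {f : ℝ → ℝ} {L : ℝ≥0}
    (hf : LipschitzWith L f) :
    ∑ i, f (x i) - ∑ i : Fin n, f (((i : ℕ) + 1) / n) ≤ L * energy x := by
  obtain ⟨π, -, hπ⟩ := exists_mem_eq_inf' (univ_nonempty (α := Equiv.Perm (Fin n)))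
    (fun π => ∑ i : Fin n, |x (π i) - (((i : ℕ) : ℝ) + 1) / n|)
  rw [energy, hπ, ← Equiv.sum_comp π, ← sum_sub_distrib, mul_sum]
  refine sum_le_sum fun i _ => (le_abs_self _).trans ?_
  simpa [Real.dist_eq] using hf.dist_le_mul (x (π i)) (((i : ℕ) + 1) / n)

lemma energy_le_card {n : ℕ} (x : Fin n → ℝ) (hx : ∀ i, x i ∈ Set.Icc (0 : ℝ) 1) :
    energy x ≤ n := by
  refine (inf'_le _ (mem_univ 1)).trans ?_
  calc _ ≤ ∑ _i : Fin n, (1 : ℝ) := sum_le_sum fun i _ => by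
        have hn : (0 : ℝ) < n := by exact_mod_cast i.pos
        have : (((i : ℕ) : ℝ) + 1) / n ≤ 1 := (div_le_one hn).2 (by exact_mod_cast i.isLt)
        obtain ⟨h0, h1⟩ := hx i
        rw [Equiv.Perm.one_apply, abs_le]
        constructor <;> linarith [(by positivity : (0 : ℝ) ≤ (((i : ℕ) : ℝ) + 1) / n)]
    _ = n := by simp

end Energy

section Cells

variable (K : ℕ)

def cellLeft (t : ℝ) (u : ℕ) : ℝ := min t ((u + 1) / K) - min t (u / K)

/-- The integral over the cell `[u/K, (u+1)/K]` of the counting function `a ↦ 1[t ≤ a]`. -/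
def cellRight (t : ℝ) (u : ℕ) : ℝ := 1 / K - cellLeft K t u

/-- `∫ a da` over the cell `[u/K, (u+1)/K]`. -/
def cellMoment (u : ℕ) : ℝ := (2 * u + 1) / (2 * K ^ 2)

variable {K}

lemma cell_le_succ (u : ℕ) : (u : ℝ) / K ≤ (u + 1) / K := by gcongr; linarith

lemma succ_div_sub_div (u : ℕ) : ((u : ℝ) + 1) / K - u / K = 1 / K := by ring

lemma cellLeft_nonneg (t : ℝ) (u : ℕ) : 0 ≤ cellLeft K t u := by
  have := cell_le_succ (K := K) u
  unfold cellLeft; simp only [min_def]; split_ifs <;> linarith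

lemma cellLeft_le (t : ℝ) (u : ℕ) : cellLeft K t u ≤ 1 / K := by
  have := cell_le_succ (K := K) u
  have := succ_div_sub_div (K := K) u
  unfold cellLeft; simp only [min_def]; split_ifs <;> linarith

lemma monotone_cellLeft (u : ℕ) : Monotone fun t => cellLeft K t u := by
  intro t t' h
  have := cell_le_succ (K := K) u
  simp only [cellLeft, min_def]; split_ifs <;> linarith

lemma sum_range_cellLeft (t : ℝ) (L : ℕ) :
    ∑ u ∈ range L, cellLeft K t u = min t (L / K) - min t 0 := by
  simpa [cellLeft] using sum_range_sub (fun u : ℕ => min t ((u : ℝ) / K)) L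

lemma cellRight_nonneg (t : ℝ) (u : ℕ) : 0 ≤ cellRight K t u :=
  sub_nonneg.2 (cellLeft_le t u)

lemma cellRight_le (t : ℝ) (u : ℕ) : cellRight K t u ≤ 1 / K :=
  sub_le_self _ (cellLeft_nonneg t u)

lemma cellRight_of_le {t : ℝ} {u : ℕ} (h : t ≤ u / K) : cellRight K t u = 1 / K := by
  simp [cellRight, cellLeft, min_eq_left h, min_eq_left (h.trans (cell_le_succ u))]

lemma cellRight_of_ge {t : ℝ} {u : ℕ} (h : (u + 1) / K ≤ t) : cellRight K t u = 0 := by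
  rw [cellRight, cellLeft, min_eq_right h, min_eq_right ((cell_le_succ u).trans h),
    succ_div_sub_div, sub_self]

lemma sum_range_cellMoment (L : ℕ) : ∑ u ∈ range L, cellMoment K u = L ^ 2 / (2 * K ^ 2) := by
  induction L with
  | zero => simp
  | succ L ih => rw [sum_range_succ, ih, cellMoment]; push_cast; ring

lemma sum_cellMoment (hK : K ≠ 0) : ∑ u ∈ range K, cellMoment K u = 1 / 2 := by
  rw [sum_range_cellMoment]
  field_simp

lemma abs_sum_cellRight_grid_sub_le {K : ℕ} (n : ℕ) {u : ℕ} (hu : u < K) :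
    |∑ i ∈ range n, cellRight K ((i + 1) / n) u - n * cellMoment K u| ≤ 1 / K := by
  rcases eq_or_ne n 0 with rfl | hn
  · simp
  have hK : (0 : ℝ) < K := by exact_mod_cast (Nat.zero_le u).trans_lt hu
  have hn' : (0 : ℝ) < n := by positivity
  have hB1 : ((u : ℝ) + 1) / K ≤ 1 := (div_le_one hK).2 (by exact_mod_cast hu)
  have hA0 : (0 : ℝ) ≤ u / K := by positivity
  have hAB := cell_le_succ (K := K) u
  have hψ := lipschitzWith_fract_mul_one_sub_fract.dist_le_mul (n * ((u + 1) / K)) (n * (u / K))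
  simp only [Real.dist_eq, NNReal.coe_one, one_mul, ← mul_sub, succ_div_sub_div] at hψ
  rw [abs_of_nonneg (a := (n : ℝ) * (1 / K)) (by positivity), mul_one_div] at hψ
  have hsum : ∑ i ∈ range n, cellRight K ((i + 1) / n) u =
      n * (1 / K) - ∑ i ∈ range n, min (((i : ℝ) + 1) / n) ((u + 1) / K) +
        ∑ i ∈ range n, min (((i : ℝ) + 1) / n) (u / K) := by
    simp only [cellRight, cellLeft, sum_sub_distrib, sum_const, card_range, nsmul_eq_mul]
    ring
  rw [hsum, sum_range_min_grid hn (hA0.trans hAB) hB1, sum_range_min_grid hn hA0 (hAB.trans hB1)]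
  generalize
    (Int.fract ((n : ℝ) * ((u + 1) / K)) * (1 - Int.fract ((n : ℝ) * ((u + 1) / K))) : ℝ) = P
    at hψ ⊢
  generalize (Int.fract ((n : ℝ) * (u / K)) * (1 - Int.fract ((n : ℝ) * (u / K))) : ℝ) = Q
    at hψ ⊢
  have key : n * (1 / K) - (n * ((u + 1) / K - ((u + 1) / K) ^ 2 / 2) + (u + 1) / K / 2 -
      P / (2 * n)) + (n * (u / K - (u / K) ^ 2 / 2) + u / K / 2 - Q / (2 * n)) -
        n * cellMoment K u = -(1 / (2 * K)) + (P - Q) / (2 * n) := by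
    simp only [cellMoment]; field_simp; ring
  have hPQ : |(P - Q) / (2 * n)| ≤ 1 / (2 * K) := by
    rw [abs_div, abs_of_pos (a := 2 * (n : ℝ)) (by positivity),
      div_le_div_iff₀ (by positivity) (by positivity)]
    calc |P - Q| * (2 * K) ≤ n / K * (2 * K) := by gcongr
      _ = 1 * (2 * n) := by field_simp
  rw [key]
  calc _ ≤ |-(1 / (2 * (K : ℝ)))| + |(P - Q) / (2 * n)| := abs_add_le _ _
    _ ≤ 1 / (2 * K) + 1 / (2 * K) := by rw [abs_neg, abs_of_pos (by positivity)]; gcongr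
    _ = 1 / K := by field_simp; norm_num

lemma lipschitzWith_sum_mul_cellLeft {g : ℕ → ℝ} {C : ℝ≥0} (hg : ∀ u, |g u| ≤ C) :
    LipschitzWith C fun t => ∑ u ∈ range K, g u * cellLeft K t u := by
  have key : ∀ t t' : ℝ, t ≤ t' → |∑ u ∈ range K, g u * cellLeft K t u -
      ∑ u ∈ range K, g u * cellLeft K t' u| ≤ C * (t' - t) := by
    intro t t' h
    rw [abs_sub_comm, ← sum_sub_distrib]
    simp only [← mul_sub]
    have hmono : ∀ u, 0 ≤ cellLeft K t' u - cellLeft K t u := fun u =>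
      sub_nonneg.2 (monotone_cellLeft u h)
    calc _ ≤ ∑ u ∈ range K, C * (cellLeft K t' u - cellLeft K t u) :=
          (abs_sum_le_sum_abs _ _).trans (sum_le_sum fun u _ => by
            rw [abs_mul, abs_of_nonneg (hmono u)]
            exact mul_le_mul_of_nonneg_right (hg u) (hmono u))
      _ ≤ C * (t' - t) := by
          rw [← mul_sum, sum_sub_distrib, sum_range_cellLeft, sum_range_cellLeft]
          refine mul_le_mul_of_nonneg_left ?_ C.2
          simp only [min_def]; split_ifs <;> linarith
  refine LipschitzWith.of_dist_le_mul fun t t' => ?_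
  rw [Real.dist_eq, Real.dist_eq]
  rcases le_total t t' with h | h
  · rw [abs_sub_comm t, abs_of_nonneg (sub_nonneg.2 h)]; exact key t t' h
  · rw [abs_of_nonneg (sub_nonneg.2 h), abs_sub_comm]; exact key t' t h

/-- Integrate the step function to a `C`-Lipschitz test function and compare the regular grid
`(i + 1) / n` with Lebesgue measure. -/
lemma sum_mul_discrepancy_le_energy (hK : K ≠ 0) (x : ℕ → ℝ) (n : ℕ) {g : ℕ → ℝ}
    {C : ℝ≥0} (hg : ∀ u, |g u| ≤ C) :
    ∑ u ∈ range K, g u * (∑ k ∈ range n, cellRight K (x k) u - n * cellMoment K u) ≤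
      C * (energy (fun i : Fin n => x i) + 1) := by
  set F := fun t => -∑ u ∈ range K, g u * cellLeft K t u
  have hF : LipschitzWith C F := (lipschitzWith_sum_mul_cellLeft (K := K) hg).neg
  have htest := sum_sub_sum_le_mul_energy (fun i : Fin n => x i) hF
  rw [Fin.sum_univ_eq_sum_range (fun k => F (x k)),
    Fin.sum_univ_eq_sum_range (fun i => F (((i : ℝ) + 1) / n))] at htest
  have hgrid : ∑ u ∈ range K, g u *
      (∑ i ∈ range n, cellRight K ((i + 1) / n) u - n * cellMoment K u) ≤ C := by
    calc _ ≤ ∑ _u ∈ range K, (C : ℝ) * (1 / K) := sum_le_sum fun u hu => by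
          refine (le_abs_self _).trans ?_
          rw [abs_mul]
          exact mul_le_mul (hg u) (abs_sum_cellRight_grid_sub_le n (mem_range.1 hu))
            (abs_nonneg _) C.2
      _ = C := by
          have : (K : ℝ) ≠ 0 := by exact_mod_cast hK
          rw [sum_const, card_range, nsmul_eq_mul]; field_simp
  have hsplit : ∑ u ∈ range K, g u *
      (∑ k ∈ range n, cellRight K (x k) u - n * cellMoment K u) =
        (∑ k ∈ range n, F (x k) - ∑ i ∈ range n, F (((i : ℝ) + 1) / n)) +
          ∑ u ∈ range K, g u *
            (∑ i ∈ range n, cellRight K ((i + 1) / n) u - n * cellMoment K u) := by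
    simp only [F, cellRight, sum_neg_distrib, sum_sub_distrib, mul_sub, mul_sum, sum_const,
      card_range, nsmul_eq_mul]
    rw [sum_comm (s := range n), sum_comm (s := range n)]
    ring
  rw [hsplit, mul_add, mul_one]
  exact add_le_add htest hgrid

end Cells

section Dyadic

def rad (i u : ℕ) : ℝ := if u / 2 ^ i % 2 = 1 then 1 else -1

lemma abs_rad (i u : ℕ) : |rad i u| = 1 := by
  unfold rad; split_ifs <;> norm_num

lemma div_pow_eq_of_div_pow_eq {A i u u' : ℕ} (h : A ≤ i) (huu : u / 2 ^ A = u' / 2 ^ A) :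
    u / 2 ^ i = u' / 2 ^ i := by
  obtain ⟨d, rfl⟩ := Nat.exists_eq_add_of_le h
  simp only [pow_add, ← Nat.div_div_eq_div_mul, huu]

lemma rad_eq_of_div_pow_eq {A i u u' : ℕ} (h : A ≤ i) (huu : u / 2 ^ A = u' / 2 ^ A) :
    rad i u = rad i u' := by
  rw [rad, rad, div_pow_eq_of_div_pow_eq h huu]

lemma rad_block_left {α c t : ℕ} (ht : t < 2 ^ α) : rad α (c * 2 ^ (α + 1) + t) = -1 := by
  have : (c * 2 ^ (α + 1) + t) / 2 ^ α = 2 * c := by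
    rw [show c * 2 ^ (α + 1) + t = t + 2 ^ α * (2 * c) by ring,
      Nat.add_mul_div_left _ _ (by positivity), Nat.div_eq_of_lt ht, zero_add]
  simp [rad, this]

lemma rad_block_right {α c t : ℕ} (ht : t < 2 ^ α) :
    rad α (c * 2 ^ (α + 1) + (2 ^ α + t)) = 1 := by
  have : (c * 2 ^ (α + 1) + (2 ^ α + t)) / 2 ^ α = 2 * c + 1 := by
    rw [show c * 2 ^ (α + 1) + (2 ^ α + t) = t + 2 ^ α * (2 * c + 1) by ring,
      Nat.add_mul_div_left _ _ (by positivity), Nat.div_eq_of_lt ht, zero_add]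
  simp [rad, this, Nat.add_mod]

lemma sum_mul_rad_block (F : ℕ → ℝ) (α c : ℕ) :
    ∑ i ∈ range (2 ^ (α + 1)), F (c * 2 ^ (α + 1) + i) * rad α (c * 2 ^ (α + 1) + i) =
      ∑ i ∈ range (2 ^ α),
        (F (c * 2 ^ (α + 1) + (2 ^ α + i)) - F (c * 2 ^ (α + 1) + i)) := by
  rw [show 2 ^ (α + 1) = 2 ^ α + 2 ^ α by ring, sum_range_add, ← sub_neg_eq_add,
    ← sum_neg_distrib, ← sum_sub_distrib, ← show 2 ^ (α + 1) = 2 ^ α + 2 ^ α by ring]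
  refine sum_congr rfl fun i hi => ?_
  rw [rad_block_left (mem_range.1 hi), rad_block_right (mem_range.1 hi)]
  ring

lemma mul_pow_add_div {A : ℕ} (c : ℕ) {i : ℕ} (hi : i < 2 ^ A) :
    (c * 2 ^ A + i) / 2 ^ A = c := by
  rw [add_comm, Nat.add_mul_div_right _ _ (by positivity), Nat.div_eq_of_lt hi, zero_add]

end Dyadic

section Haar

variable {K : ℕ}

/-- The coefficient of the counting function `a ↦ 1[t ≤ a]` (integrated over the cells of
size `1/K`) against the Haar function `r_α` of the dyadic block `c` of `2^(α+1)` cells. -/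
def haarCoeff (K : ℕ) (t : ℝ) (α c : ℕ) : ℝ :=
  ∑ i ∈ range (2 ^ (α + 1)),
    cellRight K t (c * 2 ^ (α + 1) + i) * rad α (c * 2 ^ (α + 1) + i)

lemma abs_haarCoeff_le (t : ℝ) (α c : ℕ) : |haarCoeff K t α c| ≤ 2 ^ α / K := by
  rw [haarCoeff, sum_mul_rad_block]
  refine (abs_sum_le_sum_abs _ _).trans ?_
  calc _ ≤ ∑ _i ∈ range (2 ^ α), (1 / K : ℝ) := by
        refine sum_le_sum fun i _ => abs_sub_le_iff.2 ⟨?_, ?_⟩ <;>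
          linarith [cellRight_nonneg (K := K) t (c * 2 ^ (α + 1) + i),
            cellRight_le (K := K) t (c * 2 ^ (α + 1) + i),
            cellRight_nonneg (K := K) t (c * 2 ^ (α + 1) + (2 ^ α + i)),
            cellRight_le (K := K) t (c * 2 ^ (α + 1) + (2 ^ α + i))]
    _ = 2 ^ α / K := by simp [div_eq_mul_inv]

lemma haarCoeff_eq_zero_of_le {t : ℝ} {α c : ℕ} (h : t ≤ c * 2 ^ (α + 1) / K) :
    haarCoeff K t α c = 0 := by
  rw [haarCoeff, sum_mul_rad_block]
  refine sum_eq_zero fun i _ => ?_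
  rw [cellRight_of_le, cellRight_of_le, sub_self] <;> refine h.trans ?_ <;> gcongr <;> push_cast <;>
    linarith [(by positivity : (0 : ℝ) ≤ 2 ^ α), (by positivity : (0 : ℝ) ≤ i)]

lemma haarCoeff_eq_zero_of_ge {t : ℝ} {α c : ℕ} (h : (c + 1) * 2 ^ (α + 1) / K ≤ t) :
    haarCoeff K t α c = 0 := by
  refine sum_eq_zero fun i hi => ?_
  have hi : (i : ℝ) + 1 ≤ 2 ^ (α + 1) := by exact_mod_cast mem_range.1 hi
  rw [cellRight_of_ge, zero_mul]
  refine le_trans ?_ h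
  gcongr
  push_cast
  linarith

lemma mem_Ioo_of_haarCoeff_ne_zero {t : ℝ} {α c : ℕ} (h : haarCoeff K t α c ≠ 0) :
    t ∈ Set.Ioo (c * 2 ^ (α + 1) / K : ℝ) ((c + 1) * 2 ^ (α + 1) / K) :=
  ⟨lt_of_not_ge fun h' => h (haarCoeff_eq_zero_of_le h'),
    lt_of_not_ge fun h' => h (haarCoeff_eq_zero_of_ge h')⟩

lemma card_filter_haarCoeff_ne_zero_le_one (t : ℝ) (α : ℕ) (s : Finset ℕ) :
    #{c ∈ s | haarCoeff K t α c ≠ 0} ≤ 1 := by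
  suffices key :
      ∀ c c', haarCoeff K t α c ≠ 0 → haarCoeff K t α c' ≠ 0 → c < c' → False by
    refine card_le_one.2 fun c hc c' hc' => ?_
    rcases lt_trichotomy c c' with h | h | h
    · exact (key c c' (mem_filter.1 hc).2 (mem_filter.1 hc').2 h).elim
    · exact h
    · exact (key c' c (mem_filter.1 hc').2 (mem_filter.1 hc).2 h).elim
  intro c c' hc hc' hlt
  have h1 := (mem_Ioo_of_haarCoeff_ne_zero hc).2
  have h2 := (mem_Ioo_of_haarCoeff_ne_zero hc').1
  have : ((c : ℝ) + 1) * 2 ^ (α + 1) / K ≤ c' * 2 ^ (α + 1) / K := by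
    gcongr
    exact_mod_cast hlt
  linarith

lemma sum_abs_haarCoeff_le (t : ℝ) (α : ℕ) (s : Finset ℕ) :
    ∑ c ∈ s, |haarCoeff K t α c| ≤ 2 ^ α / K := by
  rw [← sum_filter_ne_zero]
  simp only [ne_eq, abs_eq_zero]
  calc _ ≤ #{c ∈ s | haarCoeff K t α c ≠ 0} • (2 ^ α / K : ℝ) :=
        sum_le_card_nsmul _ _ _ fun c _ => abs_haarCoeff_le t α c
    _ ≤ 1 • (2 ^ α / K : ℝ) := by
        gcongr
        exact card_filter_haarCoeff_ne_zero_le_one t α s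
    _ = 2 ^ α / K := one_smul _ _

lemma sum_cellMoment_mul_rad (α c : ℕ) :
    ∑ i ∈ range (2 ^ (α + 1)),
      cellMoment K (c * 2 ^ (α + 1) + i) * rad α (c * 2 ^ (α + 1) + i) = (2 ^ α / K) ^ 2 := by
  rw [sum_mul_rad_block]
  simp only [cellMoment]
  push_cast
  rw [sum_congr rfl fun i _ => (by ring : _ = (2 : ℝ) ^ α / K ^ 2)]
  simp [div_pow]
  ring

end Haar

section BlockConst

def BlockConst {γ : Type*} (A B : ℕ) (g : ℕ → ℕ → γ) : Prop :=
  ∀ u u' v v', u / 2 ^ A = u' / 2 ^ A → v / 2 ^ B = v' / 2 ^ B → g u v = g u' v'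

variable {γ δ : Type*} {A B : ℕ}

lemma BlockConst.comp {g : ℕ → ℕ → γ} (hg : BlockConst A B g) (φ : γ → δ) :
    BlockConst A B fun u v => φ (g u v) :=
  fun u u' v v' hu hv => congrArg φ (hg u u' v v' hu hv)

lemma BlockConst.mul [Mul γ] {g h : ℕ → ℕ → γ} (hg : BlockConst A B g)
    (hh : BlockConst A B h) :
    BlockConst A B fun u v => g u v * h u v :=
  fun u u' v v' hu hv => congrArg₂ (· * ·) (hg u u' v v' hu hv) (hh u u' v v' hu hv)

lemma BlockConst.prod {ι : Type*} [CommMonoid γ] (s : Finset ι) {g : ι → ℕ → ℕ → γ}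
    (hg : ∀ j ∈ s, BlockConst A B (g j)) : BlockConst A B fun u v => ∏ j ∈ s, g j u v :=
  fun u u' v v' hu hv => prod_congr rfl fun j hj => hg j hj u u' v v' hu hv

lemma blockConst_div (q : ℕ → ℕ → γ) {i j : ℕ} (hi : A ≤ i) (hj : B ≤ j) :
    BlockConst A B fun u v => q (u / 2 ^ i) (v / 2 ^ j) :=
  fun _ _ _ _ hu hv => by
    simp only [div_pow_eq_of_div_pow_eq hi hu, div_pow_eq_of_div_pow_eq hj hv]

lemma blockConst_rad_left {i : ℕ} (hi : A ≤ i) : BlockConst A B fun u _ => rad i u :=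
  fun _ _ _ _ hu _ => rad_eq_of_div_pow_eq hi hu

lemma blockConst_rad_right {i : ℕ} (hi : B ≤ i) : BlockConst A B fun _ v => rad i v :=
  fun _ _ _ _ _ hv => rad_eq_of_div_pow_eq hi hv

lemma BlockConst.apply_block {g : ℕ → ℕ → γ} (hg : BlockConst A B g) (c c' : ℕ)
    {i j : ℕ} (hi : i < 2 ^ A) (hj : j < 2 ^ B) :
    g (c * 2 ^ A + i) (c' * 2 ^ B + j) = g (c * 2 ^ A) (c' * 2 ^ B) :=
  hg _ _ _ _ (by rw [mul_pow_add_div c hi, Nat.mul_div_cancel _ (by positivity)])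
    (by rw [mul_pow_add_div c' hj, Nat.mul_div_cancel _ (by positivity)])

end BlockConst

section Discrepancy

variable (m : ℕ) (x y : ℕ → ℝ)

/-- The integral over the cell `u × v` of the grid of mesh `2^-(m+2)` of the discrepancy function
`(a, b) ↦ #{k < 2^m | x k ≤ a ∧ y k ≤ b} - 2^m a b`. -/
def cellDisc (u v : ℕ) : ℝ :=
  ∑ k ∈ range (2 ^ m), cellRight (2 ^ (m + 2)) (x k) u * cellRight (2 ^ (m + 2)) (y k) v -
    2 ^ m * (cellMoment (2 ^ (m + 2)) u * cellMoment (2 ^ (m + 2)) v)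

def pairing : (ℕ → ℕ → ℂ) →ₗ[ℂ] ℂ where
  toFun g :=
    ∑ u ∈ range (2 ^ (m + 2)), ∑ v ∈ range (2 ^ (m + 2)), (cellDisc m x y u v : ℂ) * g u v
  map_add' g h := by simp only [Pi.add_apply, mul_add, sum_add_distrib]
  map_smul' c g := by
    simp only [Pi.smul_apply, smul_eq_mul, RingHom.id_apply, mul_sum]
    exact sum_congr rfl fun _ _ => sum_congr rfl fun _ _ => by ring

lemma pairing_apply (g : ℕ → ℕ → ℂ) :
    pairing m x y g =
      ∑ u ∈ range (2 ^ (m + 2)), ∑ v ∈ range (2 ^ (m + 2)),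
        (cellDisc m x y u v : ℂ) * g u v :=
  rfl

/-- The coefficient of the discrepancy against the product Haar function `r_α ⊗ r_β` of the
dyadic rectangle `(c, c')` of `2^(α+1) × 2^(β+1)` cells. -/
def rectCoeff (α β c c' : ℕ) : ℝ :=
  ∑ i ∈ range (2 ^ (α + 1)), ∑ j ∈ range (2 ^ (β + 1)),
    cellDisc m x y (c * 2 ^ (α + 1) + i) (c' * 2 ^ (β + 1) + j) *
      (rad α (c * 2 ^ (α + 1) + i) * rad β (c' * 2 ^ (β + 1) + j))

lemma rectCoeff_eq (α β c c' : ℕ) :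
    rectCoeff m x y α β c c' =
      ∑ k ∈ range (2 ^ m),
          haarCoeff (2 ^ (m + 2)) (x k) α c * haarCoeff (2 ^ (m + 2)) (y k) β c' -
        2 ^ m * ((2 ^ α / (2 ^ (m + 2) : ℕ)) ^ 2 * (2 ^ β / (2 ^ (m + 2) : ℕ)) ^ 2) := by
  rw [← sum_cellMoment_mul_rad α c, ← sum_cellMoment_mul_rad β c', sum_mul_sum]
  simp only [rectCoeff, cellDisc, haarCoeff, sub_mul, sum_mul, sum_sub_distrib, mul_sum]
  congr 1
  · simp_rw [sum_comm (s := range (2 ^ m))]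
    rw [sum_comm]
    exact sum_congr rfl fun _ _ => sum_congr rfl fun _ _ => sum_congr rfl fun _ _ => by ring
  · exact sum_congr rfl fun _ _ => sum_congr rfl fun _ _ => by ring

lemma pairing_mul_rad_mul_rad {α β : ℕ} (hα : α ≤ m + 1) (hβ : β ≤ m + 1)
    {g : ℕ → ℕ → ℂ} (hg : BlockConst (α + 1) (β + 1) g) :
    pairing m x y (fun u v => g u v * rad α u * rad β v) =
      ∑ c ∈ range (2 ^ (m + 1 - α)), ∑ c' ∈ range (2 ^ (m + 1 - β)),
        g (c * 2 ^ (α + 1)) (c' * 2 ^ (β + 1)) * rectCoeff m x y α β c c' := by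
  have hsplit : ∀ {γ : ℕ}, γ ≤ m + 1 → 2 ^ (m + 2) = 2 ^ (m + 1 - γ) * 2 ^ (γ + 1) :=
    fun h => by rw [← pow_add]; congr 1; omega
  rw [pairing_apply]
  nth_rewrite 1 [hsplit hα]
  rw [hsplit hβ]
  simp only [sum_range_mul]
  simp only [rectCoeff, Complex.ofReal_sum, Complex.ofReal_mul, mul_sum]
  refine sum_congr rfl fun c _ => ?_
  rw [sum_comm]
  refine sum_congr rfl fun c' _ => sum_congr rfl fun i hi => sum_congr rfl fun j hj => ?_
  rw [hg.apply_block c c' (mem_range.1 hi) (mem_range.1 hj)]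
  ring

lemma sum_abs_rectCoeff_le {α β : ℕ} (hα : α ≤ m + 1) (hβ : β ≤ m + 1) :
    ∑ c ∈ range (2 ^ (m + 1 - α)), ∑ c' ∈ range (2 ^ (m + 1 - β)),
      |rectCoeff m x y α β c c'| ≤ 5 * 2 ^ (α + β) / 2 ^ (m + 6) := by
  let K : ℕ := 2 ^ (m + 2)
  have hpoints : ∑ c ∈ range (2 ^ (m + 1 - α)), ∑ c' ∈ range (2 ^ (m + 1 - β)),
      ∑ k ∈ range (2 ^ m), |haarCoeff K (x k) α c| * |haarCoeff K (y k) β c'| ≤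
        2 ^ m * (2 ^ α / K * (2 ^ β / K)) := by
    calc _ = ∑ k ∈ range (2 ^ m),
          (∑ c ∈ range (2 ^ (m + 1 - α)), |haarCoeff K (x k) α c|) *
            ∑ c' ∈ range (2 ^ (m + 1 - β)), |haarCoeff K (y k) β c'| := by
          simp only [sum_mul_sum]
          exact (sum_congr rfl fun _ _ => sum_comm).trans sum_comm
      _ ≤ ∑ _k ∈ range (2 ^ m), 2 ^ α / K * (2 ^ β / (K : ℝ)) :=
          sum_le_sum fun k _ => mul_le_mul (sum_abs_haarCoeff_le _ _ _)
            (sum_abs_haarCoeff_le _ _ _) (sum_nonneg fun _ _ => abs_nonneg _) (by positivity)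
      _ = _ := by simp
  calc _ ≤ ∑ c ∈ range (2 ^ (m + 1 - α)), ∑ c' ∈ range (2 ^ (m + 1 - β)),
        (∑ k ∈ range (2 ^ m), |haarCoeff K (x k) α c| * |haarCoeff K (y k) β c'| +
          2 ^ m * ((2 ^ α / (K : ℝ)) ^ 2 * (2 ^ β / (K : ℝ)) ^ 2)) := by
        refine sum_le_sum fun c _ => sum_le_sum fun c' _ => ?_
        rw [rectCoeff_eq]
        refine (abs_sub _ _).trans (add_le_add ((abs_sum_le_sum_abs _ _).trans_eq ?_) ?_)
        · simp only [abs_mul]; rfl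
        · rw [abs_of_nonneg (by positivity)]
    _ ≤ 2 ^ m * (2 ^ α / K * (2 ^ β / K)) + 2 ^ (m + 1 - α) * 2 ^ (m + 1 - β) *
          (2 ^ m * ((2 ^ α / (K : ℝ)) ^ 2 * (2 ^ β / (K : ℝ)) ^ 2)) := by
        simp only [sum_add_distrib, sum_const, card_range, nsmul_eq_mul]
        push_cast
        linarith
    _ = 5 * 2 ^ (α + β) / 2 ^ (m + 6) := by
        have h1 : (2 : ℝ) ^ (m + 1 - α) = 2 * 2 ^ m / 2 ^ α := by
          rw [eq_div_iff (by positivity), ← pow_add, Nat.sub_add_cancel hα, pow_succ']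
        have h2 : (2 : ℝ) ^ (m + 1 - β) = 2 * 2 ^ m / 2 ^ β := by
          rw [eq_div_iff (by positivity), ← pow_add, Nat.sub_add_cancel hβ, pow_succ']
        have hK : (K : ℝ) = 4 * 2 ^ m := by simp [K, pow_add]; ring
        rw [h1, h2, hK, pow_add 2 m 6, pow_add 2 α β]
        field_simp
        ring

lemma norm_pairing_mul_rad_mul_rad_le {α β : ℕ} (hα : α ≤ m + 1) (hβ : β ≤ m + 1)
    {g : ℕ → ℕ → ℂ} (hg : BlockConst (α + 1) (β + 1) g) {C : ℝ}
    (hC : ∀ u v, ‖g u v‖ ≤ C) :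
    ‖pairing m x y (fun u v => g u v * rad α u * rad β v)‖ ≤
      C * (5 * 2 ^ (α + β) / 2 ^ (m + 6)) := by
  have hC0 : 0 ≤ C := (norm_nonneg _).trans (hC 0 0)
  rw [pairing_mul_rad_mul_rad m x y hα hβ hg]
  calc _ ≤ ∑ c ∈ range (2 ^ (m + 1 - α)), ∑ c' ∈ range (2 ^ (m + 1 - β)),
        C * |rectCoeff m x y α β c c'| :=
        (norm_sum_le _ _).trans (sum_le_sum fun c _ => (norm_sum_le _ _).trans
          (sum_le_sum fun c' _ => by
            rw [norm_mul, Complex.norm_real, Real.norm_eq_abs]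
            exact mul_le_mul_of_nonneg_right (hC _ _) (abs_nonneg _)))
    _ ≤ _ := by
        simp only [← mul_sum]
        exact mul_le_mul_of_nonneg_left (sum_abs_rectCoeff_le m x y hα hβ) hC0

def occupants (α β c c' : ℕ) : Finset ℕ :=
  {k ∈ range (2 ^ m) |
    haarCoeff (2 ^ (m + 2)) (x k) α c ≠ 0 ∧ haarCoeff (2 ^ (m + 2)) (y k) β c' ≠ 0}

lemma sum_card_occupants_le (α β : ℕ) :
    ∑ c ∈ range (2 ^ (m + 1 - α)), ∑ c' ∈ range (2 ^ (m + 1 - β)),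
      #(occupants m x y α β c c') ≤ 2 ^ m := by
  calc _ = ∑ k ∈ range (2 ^ m),
        #{c ∈ range (2 ^ (m + 1 - α)) | haarCoeff (2 ^ (m + 2)) (x k) α c ≠ 0} *
          #{c' ∈ range (2 ^ (m + 1 - β)) | haarCoeff (2 ^ (m + 2)) (y k) β c' ≠ 0} := by
        simp only [occupants, card_filter, sum_mul_sum, ite_zero_mul_ite_zero, mul_one]
        exact (sum_congr rfl fun _ _ => sum_comm).trans sum_comm
    _ ≤ ∑ _k ∈ range (2 ^ m), 1 * 1 :=
        sum_le_sum fun k _ => Nat.mul_le_mul (card_filter_haarCoeff_ne_zero_le_one _ _ _)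
          (card_filter_haarCoeff_ne_zero_le_one _ _ _)
    _ = 2 ^ m := by simp

lemma abs_rectCoeff_of_occupants_eq_empty {α β c c' : ℕ}
    (h : occupants m x y α β c c' = ∅) :
    |rectCoeff m x y α β c c'| =
      2 ^ m * ((2 ^ α / (2 ^ (m + 2) : ℕ)) ^ 2 * (2 ^ β / (2 ^ (m + 2) : ℕ)) ^ 2) := by
  have hzero : ∀ k ∈ range (2 ^ m),
      haarCoeff (2 ^ (m + 2)) (x k) α c * haarCoeff (2 ^ (m + 2)) (y k) β c' = 0 := by
    intro k hk
    by_contra hne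
    have : k ∈ occupants m x y α β c c' :=
      mem_filter.2 ⟨hk, left_ne_zero_of_mul hne, right_ne_zero_of_mul hne⟩
    simp [h] at this
  rw [rectCoeff_eq, sum_eq_zero hzero, zero_sub, abs_neg, abs_of_nonneg (by positivity)]

/-- There are `2^(m+1)` rectangles but only `2^m` points: at least half of the rectangles are
empty, and on an empty rectangle the coefficient is the full area term. -/
lemma one_div_sixtyFour_le_sum_abs_rectCoeff {α β : ℕ} (h : α + β = m + 1) :
    1 / 64 ≤ ∑ c ∈ range (2 ^ (m + 1 - α)), ∑ c' ∈ range (2 ^ (m + 1 - β)),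
      |rectCoeff m x y α β c c'| := by
  set A : ℝ := 2 ^ m * ((2 ^ α / (2 ^ (m + 2) : ℕ)) ^ 2 * (2 ^ β / (2 ^ (m + 2) : ℕ)) ^ 2)
    with hA
  have hrect : ∀ c c',
      A - A * #(occupants m x y α β c c') ≤ |rectCoeff m x y α β c c'| := by
    intro c c'
    rcases (occupants m x y α β c c').eq_empty_or_nonempty with h0 | hne
    · rw [abs_rectCoeff_of_occupants_eq_empty m x y h0, h0, card_empty, Nat.cast_zero, mul_zero,
        sub_zero]
    · have : A ≤ A * #(occupants m x y α β c c') :=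
        le_mul_of_one_le_right (by positivity) (by exact_mod_cast hne.card_pos)
      linarith [abs_nonneg (rectCoeff m x y α β c c')]
  have hocc : (∑ c ∈ range (2 ^ (m + 1 - α)), ∑ c' ∈ range (2 ^ (m + 1 - β)),
      #(occupants m x y α β c c') : ℝ) ≤ 2 ^ m := by
    exact_mod_cast sum_card_occupants_le m x y α β
  have hcount : (2 : ℝ) ^ (m + 1 - α) * 2 ^ (m + 1 - β) = 2 * 2 ^ m := by
    rw [← pow_add, show m + 1 - α + (m + 1 - β) = m + 1 by omega, pow_succ']
  have hA' : A * 2 ^ m = 1 / 64 := by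
    have hαβ : (2 : ℝ) ^ α * 2 ^ β = 2 * 2 ^ m := by rw [← pow_add, h, pow_succ']
    calc A * 2 ^ m = 2 ^ m * 2 ^ m * (2 ^ α * 2 ^ β) ^ 2 / (4 * 2 ^ m) ^ 4 := by
          rw [hA]; push_cast; ring
      _ = 1 / 64 := by rw [hαβ]; field_simp; ring
  calc (1 : ℝ) / 64 = A * (2 * 2 ^ m) - A * 2 ^ m := by rw [← hA']; ring
    _ ≤ A * (2 ^ (m + 1 - α) * 2 ^ (m + 1 - β)) - A * ∑ c ∈ range (2 ^ (m + 1 - α)),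
          ∑ c' ∈ range (2 ^ (m + 1 - β)), (#(occupants m x y α β c c') : ℝ) := by
        rw [hcount]; gcongr
    _ = ∑ c ∈ range (2 ^ (m + 1 - α)), ∑ c' ∈ range (2 ^ (m + 1 - β)),
          (A - A * #(occupants m x y α β c c')) := by
        simp only [sum_sub_distrib, sum_const, card_range, nsmul_eq_mul, mul_sum]
        push_cast; ring
    _ ≤ _ := sum_le_sum fun c _ => sum_le_sum fun c' _ => hrect c c'

end Discrepancy

section Scales

def signOf (q : ℝ) : ℝ := if q < 0 then -1 else 1

lemma abs_signOf (q : ℝ) : |signOf q| = 1 := by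
  unfold signOf; split_ifs <;> norm_num

lemma signOf_mul_self (q : ℝ) : signOf q * q = |q| := by
  unfold signOf; split_ifs with h
  · rw [abs_of_neg h]; ring
  · rw [abs_of_nonneg (not_lt.1 h), one_mul]

variable (m : ℕ) (x y : ℕ → ℝ)

def scaleSign (j u v : ℕ) : ℝ :=
  signOf (rectCoeff m x y (m + 1 - j) j (u / 2 ^ (m + 2 - j)) (v / 2 ^ (j + 1)))

/-- The Halász function of scale `j ≤ m + 1`: on each dyadic rectangle of `2^(m+2-j) × 2^(j+1)`
cells it is the product Haar function of the rectangle, signed so as to correlate positively with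
the discrepancy. -/
def scaleFun (j u v : ℕ) : ℝ := scaleSign m x y j u v * rad (m + 1 - j) u * rad j v

lemma abs_scaleFun (j u v : ℕ) : |scaleFun m x y j u v| = 1 := by
  simp [scaleFun, scaleSign, abs_mul, abs_signOf, abs_rad]

lemma blockConst_scaleSign {A B j : ℕ} (hA : A ≤ m + 2 - j) (hB : B ≤ j + 1) :
    BlockConst A B (scaleSign m x y j) :=
  blockConst_div (fun c c' => signOf (rectCoeff m x y (m + 1 - j) j c c')) hA hB

lemma blockConst_scaleFun {A B j : ℕ} (hA : A ≤ m + 1 - j) (hB : B ≤ j) :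
    BlockConst A B (scaleFun m x y j) :=
  ((blockConst_scaleSign m x y (by omega) (by omega)).mul (blockConst_rad_left hA)).mul
    (blockConst_rad_right hB)

lemma pairing_scaleFun {j : ℕ} (hj : j ≤ m + 1) :
    pairing m x y (fun u v => (scaleFun m x y j u v : ℂ)) =
      ((∑ c ∈ range (2 ^ j), ∑ c' ∈ range (2 ^ (m + 1 - j)),
        |rectCoeff m x y (m + 1 - j) j c c'| : ℝ) : ℂ) := by
  have e : m + 1 - j + 1 = m + 2 - j := by omega
  have hg : BlockConst (m + 1 - j + 1) (j + 1) fun u v => (scaleSign m x y j u v : ℂ) :=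
    e ▸ (blockConst_scaleSign m x y le_rfl le_rfl).comp _
  simp only [scaleFun, Complex.ofReal_mul]
  rw [pairing_mul_rad_mul_rad m x y (by omega) hj hg, show m + 1 - (m + 1 - j) = j by omega]
  push_cast
  refine sum_congr rfl fun c _ => sum_congr rfl fun c' _ => ?_
  rw [scaleSign, e, Nat.mul_div_cancel _ (by positivity), Nat.mul_div_cancel _ (by positivity),
    ← Complex.ofReal_mul, signOf_mul_self]

lemma one_div_sixtyFour_le_re_pairing_scaleFun {j : ℕ} (hj : j ≤ m + 1) :
    1 / 64 ≤ (pairing m x y fun u v => (scaleFun m x y j u v : ℂ)).re := by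
  have h := one_div_sixtyFour_le_sum_abs_rectCoeff m x y (α := m + 1 - j) (β := j) (by omega)
  rw [show m + 1 - (m + 1 - j) = j by omega] at h
  rwa [pairing_scaleFun m x y hj, Complex.ofReal_re]

end Scales

section Riesz

variable (m : ℕ) (x y : ℕ → ℝ)

lemma im_pairing (g : ℕ → ℕ → ℂ) :
    (pairing m x y g).im =
      ∑ u ∈ range (2 ^ (m + 2)), ∑ v ∈ range (2 ^ (m + 2)),
        cellDisc m x y u v * (g u v).im := by
  simp [pairing_apply, Complex.im_sum]

lemma pairing_sum {ι : Type*} (s : Finset ι) (g : ι → ℕ → ℕ → ℂ) :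
    pairing m x y (fun u v => ∑ i ∈ s, g i u v) = ∑ i ∈ s, pairing m x y (g i) := by
  rw [← map_sum]
  congr 1
  ext u v
  simp [Finset.sum_apply]

lemma pairing_add (f g : ℕ → ℕ → ℂ) :
    pairing m x y (fun u v => f u v + g u v) = pairing m x y f + pairing m x y g :=
  map_add _ f g

lemma pairing_const_mul (c : ℂ) (g : ℕ → ℕ → ℂ) :
    pairing m x y (fun u v => c * g u v) = c * pairing m x y g :=
  map_smul _ c g

def scaleTerm (γ : ℝ) (j u v : ℕ) : ℂ :=
  Complex.I * ((γ * scaleFun m x y j u v : ℝ) : ℂ)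

def riesz (γ : ℝ) (u v : ℕ) : ℂ := ∏ j ∈ range (m + 2), (1 + scaleTerm m x y γ j u v)

lemma norm_riesz_le (γ : ℝ) (u v : ℕ) :
    ‖riesz m x y γ u v‖ ≤ Real.exp (γ ^ 2 * (m + 2) / 2) := by
  refine (norm_prod_one_add_I_mul_le _ _).trans_eq ?_
  simp [mul_pow, ← sq_abs (scaleFun m x y _ u v), abs_scaleFun]
  ring

lemma norm_one_add_scaleTerm_le {γ : ℝ} (hγ : 0 ≤ γ) (j u v : ℕ) :
    ‖1 + scaleTerm m x y γ j u v‖ ≤ 1 + γ :=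
  (norm_add_le _ _).trans (by simp [scaleTerm, abs_scaleFun, abs_of_nonneg hγ])

lemma le_im_pairing_scaleTerm {γ : ℝ} (hγ : 0 ≤ γ) {j : ℕ} (hj : j ≤ m + 1) :
    γ / 64 ≤ (pairing m x y (scaleTerm m x y γ j)).im := by
  have hz : scaleTerm m x y γ j = fun u v => (Complex.I * γ) * (scaleFun m x y j u v : ℂ) := by
    ext u v; simp only [scaleTerm, Complex.ofReal_mul]; ring
  have hIγ : (Complex.I * γ).re = 0 ∧ (Complex.I * γ).im = γ := by simp
  rw [hz, pairing_const_mul, Complex.mul_im, hIγ.1, hIγ.2, zero_mul, zero_add]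
  nlinarith [one_div_sixtyFour_le_re_pairing_scaleFun m x y hj]

/-- On the dyadic rectangles of the scales `a < b` the product `f_b f_a` is the product Haar
function times a factor constant on the rectangles, and so are the intermediate factors. -/
lemma norm_pairing_cross_le {γ : ℝ} (hγ : 0 ≤ γ) {a b : ℕ} (hab : a < b)
    (hb : b ≤ m + 1) :
    ‖pairing m x y (fun u v => scaleTerm m x y γ b u v * scaleTerm m x y γ a u v *
        ∏ j ∈ Ioo a b, (1 + scaleTerm m x y γ j u v))‖ ≤
      5 * γ ^ 2 / 64 * ((1 + γ) / 2) ^ (b - a - 1) := by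
  set H : ℕ → ℕ → ℂ := fun u v => -(γ ^ 2 : ℂ) *
    ((scaleSign m x y b u v * rad b v : ℝ) : ℂ) *
    ((scaleSign m x y a u v * rad (m + 1 - a) u : ℝ) : ℂ) *
    ∏ j ∈ Ioo a b, (1 + scaleTerm m x y γ j u v)
  have hfun : (fun u v => scaleTerm m x y γ b u v * scaleTerm m x y γ a u v *
      ∏ j ∈ Ioo a b, (1 + scaleTerm m x y γ j u v)) =
        fun u v => H u v * rad (m + 1 - b) u * rad a v := by
    ext u v
    simp only [H]
    generalize ∏ j ∈ Ioo a b, (1 + scaleTerm m x y γ j u v) = P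
    simp only [scaleTerm, scaleFun]
    push_cast
    linear_combination (γ : ℂ) ^ 2 * scaleSign m x y b u v * rad (m + 1 - b) u * rad b v *
      scaleSign m x y a u v * rad (m + 1 - a) u * rad a v * P * Complex.I_sq
  have hH : BlockConst (m + 1 - b + 1) (a + 1) H := by
    refine ((BlockConst.mul ?_ ?_).mul ?_).mul ?_
    · exact fun _ _ _ _ _ _ => rfl
    · exact ((blockConst_scaleSign m x y (by omega) (by omega)).mul
        (blockConst_rad_right (by omega))).comp _
    · exact ((blockConst_scaleSign m x y (by omega) (by omega)).mul
        (blockConst_rad_left (by omega))).comp _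
    · refine BlockConst.prod _ fun j hj => ?_
      rw [mem_Ioo] at hj
      exact (blockConst_scaleFun m x y (A := m + 1 - b + 1) (B := a + 1) (j := j) (by omega)
        (by omega)).comp fun f => 1 + Complex.I * ((γ * f : ℝ) : ℂ)
  have hHnorm : ∀ u v, ‖H u v‖ ≤ γ ^ 2 * (1 + γ) ^ (b - a - 1) := fun u v => by
    simp only [H, norm_mul, norm_neg, Complex.norm_real, Real.norm_eq_abs, abs_signOf, abs_rad,
      scaleSign, mul_one, norm_pow, abs_of_nonneg hγ, norm_prod]
    gcongr
    calc _ ≤ ∏ _j ∈ Ioo a b, (1 + γ) :=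
          prod_le_prod (fun _ _ => norm_nonneg _) fun j _ =>
            norm_one_add_scaleTerm_le m x y hγ j u v
      _ = (1 + γ) ^ (b - a - 1) := by rw [prod_const, Nat.card_Ioo]
  rw [hfun]
  refine (norm_pairing_mul_rad_mul_rad_le m x y (by omega) (by omega) hH hHnorm).trans_eq ?_
  have h2 : (2 : ℝ) ^ (m + 6) = 64 * (2 ^ (m + 1 - b + a) * 2 ^ (b - a - 1)) := by
    rw [← pow_add, show m + 6 = 6 + (m + 1 - b + a + (b - a - 1)) by omega, pow_add]
    norm_num
  rw [h2, div_pow]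
  field_simp

lemma norm_sum_pairing_cross_le {γ : ℝ} (hγ0 : 0 ≤ γ) (hγ1 : γ < 1) :
    ‖∑ b ∈ range (m + 2), ∑ a ∈ range b, pairing m x y (fun u v =>
        scaleTerm m x y γ b u v * scaleTerm m x y γ a u v *
          ∏ j ∈ Ioo a b, (1 + scaleTerm m x y γ j u v))‖ ≤
      5 * γ ^ 2 * (m + 2) / (32 * (1 - γ)) := by
  calc _ ≤ ∑ b ∈ range (m + 2), ∑ a ∈ range b,
        5 * γ ^ 2 / 64 * ((1 + γ) / 2) ^ (b - a - 1) :=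
        (norm_sum_le _ _).trans (sum_le_sum fun b hb => (norm_sum_le _ _).trans
          (sum_le_sum fun a ha => norm_pairing_cross_le m x y hγ0 (mem_range.1 ha)
            (by rw [mem_range] at hb; omega)))
    _ ≤ 5 * γ ^ 2 / 64 * ((m + 2 : ℕ) / (1 - (1 + γ) / 2)) := by
        simp only [← mul_sum]
        gcongr
        exact sum_range_sum_range_pow_le (by linarith) (by linarith) _
    _ = 5 * γ ^ 2 * (m + 2) / (32 * (1 - γ)) := by
        have : 1 - γ ≠ 0 := by linarith
        rw [show (1 : ℝ) - (1 + γ) / 2 = (1 - γ) / 2 by ring]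
        push_cast
        field_simp
        ring

lemma im_pairing_riesz_ge {γ : ℝ} (hγ0 : 0 ≤ γ) (hγ1 : γ < 1) :
    γ * (m + 2) / 64 - 5 * γ ^ 2 * (m + 2) / (32 * (1 - γ)) ≤
      (pairing m x y (riesz m x y γ)).im := by
  have hexp : riesz m x y γ = fun u v => 1 + ∑ b ∈ range (m + 2), scaleTerm m x y γ b u v +
      ∑ b ∈ range (m + 2), ∑ a ∈ range b,
        scaleTerm m x y γ b u v * scaleTerm m x y γ a u v *
          ∏ j ∈ Ioo a b, (1 + scaleTerm m x y γ j u v) := by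
    ext u v
    exact prod_range_one_add_eq _ _
  rw [hexp, pairing_add, pairing_add, pairing_sum, pairing_sum]
  simp_rw [pairing_sum]
  rw [Complex.add_im, Complex.add_im, Complex.im_sum]
  have hconst : (pairing m x y fun _ _ => 1).im = 0 := by simp [im_pairing]
  have hlinear :
      γ * (m + 2) / 64 ≤ ∑ b ∈ range (m + 2), (pairing m x y (scaleTerm m x y γ b)).im :=
    calc γ * (m + 2) / 64 = ∑ _b ∈ range (m + 2), γ / 64 := by simp; ring
      _ ≤ _ := sum_le_sum fun b hb =>
          le_im_pairing_scaleTerm m x y hγ0 (by rw [mem_range] at hb; omega)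
  linarith [(abs_le.1 ((Complex.abs_im_le_norm _).trans
    (norm_sum_pairing_cross_le m x y hγ0 hγ1))).1]

def halaszTest (u v : ℕ) : ℝ := (riesz m x y (1 / √(m + 2)) u v).im

lemma abs_halaszTest_le (u v : ℕ) : |halaszTest m x y u v| ≤ 2 := by
  refine (Complex.abs_im_le_norm _).trans ((norm_riesz_le _ _ _ _ _ _).trans ?_)
  rw [one_div_sqrt_sq_mul (by positivity)]
  calc Real.exp (1 / 2) ≤ Real.exp (Real.log 2) :=
        Real.exp_le_exp.2 (by linarith [Real.log_two_gt_d9])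
    _ = 2 := Real.exp_log two_pos

lemma le_sum_cellDisc_mul_halaszTest (hm : 2 ≤ m) :
    √(m + 2) / 64 - 5 / 16 ≤ ∑ u ∈ range (2 ^ (m + 2)), ∑ v ∈ range (2 ^ (m + 2)),
      cellDisc m x y u v * halaszTest m x y u v := by
  have hsqrt : 2 ≤ √((m : ℝ) + 2) :=
    Real.le_sqrt_of_sq_le (by norm_num; exact_mod_cast (by omega : 4 ≤ m + 2))
  have hγ : 1 / √((m : ℝ) + 2) ≤ 1 / 2 := one_div_le_one_div_of_le (by norm_num) hsqrt
  have h1 : 1 / √((m : ℝ) + 2) * (m + 2) = √(m + 2) := by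
    rw [one_div_mul_eq_div, Real.div_sqrt]
  have h2 : 5 * (1 / √((m : ℝ) + 2)) ^ 2 * (m + 2) / (32 * (1 - 1 / √((m : ℝ) + 2))) ≤
      5 / 16 := by
    rw [mul_assoc, one_div_sqrt_sq_mul (by positivity),
      div_le_div_iff₀ (by linarith) (by norm_num)]
    linarith
  have h := im_pairing_riesz_ge m x y (γ := 1 / √(m + 2)) (by positivity) (by linarith)
  rw [im_pairing, h1] at h
  exact (by linarith : _ ≤ _).trans h

end Riesz

section TimeBlocks

variable (m : ℕ) (x : ℕ → ℝ)

def timePt (k : ℕ) : ℝ := (k + 1) / 2 ^ m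

lemma cellRight_timePt (k : ℕ) {n s : ℕ} (hs : s < 4) :
    cellRight (2 ^ (m + 2)) (timePt m k) (n * 4 + s) =
      if k < n then (1 : ℝ) / (2 ^ (m + 2) : ℕ) else 0 := by
  have hK : ((2 ^ (m + 2) : ℕ) : ℝ) = 2 ^ m * 4 := by push_cast; ring
  have hs' : (s : ℝ) + 1 ≤ 4 := by exact_mod_cast hs
  split_ifs with hk
  · refine cellRight_of_le ?_
    have : (k : ℝ) + 1 ≤ n := by exact_mod_cast hk
    rw [timePt, hK, div_le_div_iff₀ (by positivity) (by positivity)]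
    push_cast
    nlinarith [(by positivity : (0 : ℝ) ≤ 2 ^ m), (by positivity : (0 : ℝ) ≤ s)]
  · refine cellRight_of_ge ?_
    have : (n : ℝ) ≤ k := by exact_mod_cast not_lt.1 hk
    rw [timePt, hK, div_le_div_iff₀ (by positivity) (by positivity)]
    push_cast
    nlinarith [(by positivity : (0 : ℝ) ≤ 2 ^ m)]

lemma mul_cellDisc_timePt (u : ℕ) {n s : ℕ} (hn : n ≤ 2 ^ m) (hs : s < 4) :
    (2 ^ (m + 2) : ℕ) * cellDisc m x (timePt m) u (n * 4 + s) =
      ∑ k ∈ range n, cellRight (2 ^ (m + 2)) (x k) u -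
        (n + (2 * s + 1) / 8) * cellMoment (2 ^ (m + 2)) u := by
  have hK : ((2 ^ (m + 2) : ℕ) : ℝ) = 2 ^ m * 4 := by push_cast; ring
  have hfilter : ({k ∈ range (2 ^ m) | k < n} : Finset ℕ) = range n := by
    ext k; simp only [mem_filter, mem_range]; omega
  simp only [cellDisc, cellRight_timePt m _ hs, mul_ite, mul_zero]
  rw [← sum_filter, hfilter, ← sum_mul, cellMoment, cellMoment]
  generalize ∑ k ∈ range n, cellRight (2 ^ (m + 2)) (x k) u = S
  rw [hK]
  field_simp
  push_cast
  ring

def blockSum (G : ℕ → ℕ → ℝ) (n : ℕ) : ℝ :=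
  ∑ u ∈ range (2 ^ (m + 2)), ∑ s ∈ range 4,
    cellDisc m x (timePt m) u (n * 4 + s) * G u (n * 4 + s)

lemma sum_blockSum (G : ℕ → ℕ → ℝ) :
    ∑ n ∈ range (2 ^ m), blockSum m x G n =
      ∑ u ∈ range (2 ^ (m + 2)), ∑ v ∈ range (2 ^ (m + 2)),
        cellDisc m x (timePt m) u v * G u v := by
  refine sum_comm.trans (sum_congr rfl fun u _ => ?_)
  rw [show 2 ^ (m + 2) = 2 ^ m * 4 by ring, sum_range_mul]

lemma exists_le_mul_blockSum (G : ℕ → ℕ → ℝ) : ∃ n < 2 ^ m,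
    ∑ u ∈ range (2 ^ (m + 2)), ∑ v ∈ range (2 ^ (m + 2)),
      cellDisc m x (timePt m) u v * G u v ≤ 2 ^ m * blockSum m x G n := by
  obtain ⟨n, hn, h⟩ := exists_le_of_sum_le (s := range (2 ^ m))
    (nonempty_range_iff.2 (by positivity))
    (f := fun _ => (∑ n ∈ range (2 ^ m), blockSum m x G n) / 2 ^ m) (g := blockSum m x G) (by
      rw [sum_const, card_range, nsmul_eq_mul, Nat.cast_pow, Nat.cast_two,
        mul_div_cancel₀ _ (by positivity)])
  refine ⟨n, mem_range.1 hn, ?_⟩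
  rwa [← sum_blockSum, ← div_le_iff₀' (by positivity)]

lemma mul_blockSum_le {G : ℕ → ℕ → ℝ} (hG : ∀ u v, |G u v| ≤ 2) {n : ℕ}
    (hn : n ≤ 2 ^ m) :
    (2 ^ (m + 2) : ℕ) * blockSum m x G n ≤
      ∑ u ∈ range (2 ^ (m + 2)), (∑ s ∈ range 4, G u (n * 4 + s)) *
        (∑ k ∈ range n, cellRight (2 ^ (m + 2)) (x k) u -
          n * cellMoment (2 ^ (m + 2)) u) + 2 := by
  set w := cellMoment (2 ^ (m + 2))
  have hterm : ∀ u, (2 ^ (m + 2) : ℕ) * ∑ s ∈ range 4,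
      cellDisc m x (timePt m) u (n * 4 + s) * G u (n * 4 + s) =
        (∑ s ∈ range 4, G u (n * 4 + s)) *
          (∑ k ∈ range n, cellRight (2 ^ (m + 2)) (x k) u - n * w u) -
        w u * ∑ s ∈ range 4, (2 * s + 1) / 8 * G u (n * 4 + s) := fun u => by
    rw [mul_sum, sum_mul, mul_sum, ← sum_sub_distrib]
    refine sum_congr rfl fun s hs => ?_
    rw [← mul_assoc, mul_cellDisc_timePt m x u hn (mem_range.1 hs)]
    ring
  have herr : ∀ u, -(w u * ∑ s ∈ range 4, (2 * s + 1) / 8 * G u (n * 4 + s)) ≤ 4 * w u := by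
    intro u
    have hw : 0 ≤ w u := by simp only [w, cellMoment]; positivity
    have hE : |∑ s ∈ range 4, (2 * (s : ℝ) + 1) / 8 * G u (n * 4 + s)| ≤ 4 := by
      simp only [sum_range_succ, sum_range_zero]
      have := fun s => abs_le.1 (hG u (n * 4 + s))
      have h0 := this 0; have h1 := this 1; have h2 := this 2; have h3 := this 3
      norm_num at h0 h1 h2 h3 ⊢
      rw [abs_le]; constructor <;> linarith
    nlinarith [abs_le.1 hE]
  rw [blockSum, mul_sum]
  calc _ = ∑ u ∈ range (2 ^ (m + 2)), ((∑ s ∈ range 4, G u (n * 4 + s)) *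
        (∑ k ∈ range n, cellRight (2 ^ (m + 2)) (x k) u - n * w u) -
          w u * ∑ s ∈ range 4, (2 * s + 1) / 8 * G u (n * 4 + s)) :=
        sum_congr rfl fun u _ => hterm u
    _ ≤ ∑ u ∈ range (2 ^ (m + 2)), ((∑ s ∈ range 4, G u (n * 4 + s)) *
        (∑ k ∈ range n, cellRight (2 ^ (m + 2)) (x k) u - n * w u) + 4 * w u) :=
        sum_le_sum fun u _ => by linarith [herr u]
    _ = _ := by
        rw [sum_add_distrib, ← mul_sum, sum_cellMoment (by positivity)]
        norm_num

lemma mul_blockSum_le_energy {G : ℕ → ℕ → ℝ} (hG : ∀ u v, |G u v| ≤ 2) {n : ℕ}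
    (hn : n ≤ 2 ^ m) :
    2 ^ m * blockSum m x G n ≤ 2 * energy (fun i : Fin n => x i) + 5 / 2 := by
  have hblock := mul_blockSum_le m x hG hn
  have henergy := sum_mul_discrepancy_le_energy (K := 2 ^ (m + 2)) (by positivity) x n (C := 8)
    (g := fun u => ∑ s ∈ range 4, G u (n * 4 + s)) fun u => by
      refine (abs_sum_le_sum_abs _ _).trans ?_
      calc _ ≤ ∑ _s ∈ range 4, (2 : ℝ) := sum_le_sum fun s _ => hG _ _
        _ = ((8 : ℝ≥0) : ℝ) := by norm_num
  rw [show ((2 ^ (m + 2) : ℕ) : ℝ) = 4 * 2 ^ m by push_cast; ring] at hblock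
  push_cast at henergy
  linarith

theorem exists_energy_ge {m : ℕ} (hm : 2 ≤ m) (x : ℕ → ℝ) :
    ∃ n < 2 ^ m, √(m + 2) / 128 - 2 ≤ energy (fun i : Fin n => x i) := by
  obtain ⟨n, hn, hle⟩ := exists_le_mul_blockSum m x (halaszTest m x (timePt m))
  refine ⟨n, hn, ?_⟩
  have hpair := le_sum_cellDisc_mul_halaszTest m x (timePt m) hm
  have hstrip := mul_blockSum_le_energy m x (abs_halaszTest_le m x (timePt m)) hn.le
  linarith

end TimeBlocks

end

end Halasz

/-- there is a constant `c > 0` such that for every infinite sequence in `[0,1]`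
there are infinitely many `n` with `E(x_1,…,x_n) ≥ c √(log n)`. -/
theorem stmt_2 : ∃ c : ℝ, 0 < c ∧
    ∀ x : ℕ → ℝ, (∀ k, x k ∈ Set.Icc (0 : ℝ) 1) →
      ∀ N : ℕ, ∃ n : ℕ, N ≤ n ∧
        energy (fun i : Fin n => x i) ≥ c * Real.sqrt (Real.log n) := by
  refine ⟨1 / 256, by norm_num, fun x hx N => ?_⟩
  obtain ⟨m, hm⟩ : ∃ m : ℕ, m = (512 * (N + 2)) ^ 2 := ⟨_, rfl⟩
  obtain ⟨n, hnm, hE⟩ :=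
    Halasz.exists_energy_ge (m := m) (by rw [hm]; nlinarith [Nat.zero_le N]) x
  have hsqrt : 512 * ((N : ℝ) + 2) ≤ √(m + 2) :=
    Real.le_sqrt_of_sq_le (by rw [hm]; push_cast; linarith)
  have hn : (N : ℝ) + 1 ≤ n := by
    linarith [Halasz.energy_le_card (fun i : Fin n => x i) fun i => hx i]
  have hlog : Real.log n ≤ m + 2 := by
    calc Real.log n ≤ Real.log (2 ^ m) :=
          Real.log_le_log (by linarith) (by exact_mod_cast hnm.le)
      _ = m * Real.log 2 := Real.log_pow _ _
      _ ≤ m + 2 := by nlinarith [Real.log_two_lt_d9, (Nat.cast_nonneg m : (0 : ℝ) ≤ m)]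
  refine ⟨n, Nat.cast_le.1 (by linarith : (N : ℝ) ≤ n), ?_⟩
  calc 1 / 256 * √(Real.log n) ≤ 1 / 256 * √(m + 2) := by gcongr
    _ ≤ √(m + 2) / 128 - 2 := by linarith
    _ ≤ _ := hE
end

section
/- There exist n ∈ ℕ and points 0 ≤ x_1 ≤ … ≤ x_n ≤ 1 such that E(x_1, …, x_n) ≥ n/100 and, for every x ∈ [0,1], E(x_1, …, x_n, x) ≥ E(x_1, …, x_n) + 1/10. -/
lemma energy_le_sum_perm {N : ℕ} (x : Fin N → ℝ) (π : Equiv.Perm (Fin N)) :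
    energy x ≤ ∑ i : Fin N, |x (π i) - (((i : ℕ) : ℝ) + 1) / (N : ℝ)| :=
  Finset.inf'_le _ (Finset.mem_univ π)

lemma sum_sub_sum_le_energy {N : ℕ} (x : Fin N → ℝ) {f : ℝ → ℝ} (hf : LipschitzWith 1 f) :
    ∑ i, f (x i) - ∑ i : Fin N, f ((((i : ℕ) : ℝ) + 1) / N) ≤ energy x := by
  refine Finset.le_inf' _ _ fun π _ => ?_
  rw [← Equiv.sum_comp π (fun i => f (x i)), ← Finset.sum_sub_distrib]
  refine Finset.sum_le_sum fun i _ => ?_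
  have h := hf.dist_le_mul (x (π i)) ((i + 1) / N)
  rw [NNReal.coe_one, one_mul, Real.dist_eq, Real.dist_eq] at h
  exact (le_abs_self _).trans h

lemma lipschitzWith_one_abs_sub_add (c w : ℝ) : LipschitzWith 1 fun s : ℝ => |s - c| + w := by
  simpa [Real.dist_eq] using (LipschitzWith.dist_left c).add (LipschitzWith.const w)

noncomputable def sawtooth (s : ℝ) : ℝ :=
  min |s| (min (|s - 3/10| + 1/5) (min (|s - 1/2| + 1/5) (min (|s - 7/10| + 1/5) (|s - 9/10| + 1/5))))

lemma lipschitzWith_sawtooth : LipschitzWith 1 sawtooth := by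
  have h := fun c => lipschitzWith_one_abs_sub_add c (1/5)
  unfold sawtooth
  simpa only [max_self, sub_zero, add_zero] using (lipschitzWith_one_abs_sub_add 0 0).min
    ((h (3/10)).min ((h (1/2)).min ((h (7/10)).min (h (9/10)))))

lemma sawtooth_le {y : ℝ} (hy : y ∈ Set.Icc (0 : ℝ) 1) : sawtooth y ≤ 3/10 := by
  obtain ⟨h0, h1⟩ := hy
  simp only [sawtooth, min_le_iff, ← le_sub_iff_add_le, abs_le]
  grind

noncomputable def fourPoints : Fin 4 → ℝ := ![3/10, 1/2, 7/10, 9/10]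

lemma energy_fourPoints_le : energy fourPoints ≤ 1/5 := by
  refine (energy_le_sum_perm _ 1).trans ?_
  norm_num [fourPoints, Fin.sum_univ_succ, abs_of_nonneg, abs_of_nonpos]

lemma le_energy_fourPoints : 1/10 ≤ energy fourPoints := by
  have h := sum_sub_sum_le_energy fourPoints (lipschitzWith_neg_iff.2 LipschitzWith.id)
  norm_num [fourPoints, Fin.sum_univ_succ] at h ⊢
  exact h

lemma le_energy_snoc_fourPoints {y : ℝ} (hy : y ∈ Set.Icc (0 : ℝ) 1) :
    3/10 ≤ energy (Fin.snoc fourPoints y : Fin 5 → ℝ) := by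
  have h := sum_sub_sum_le_energy (Fin.snoc fourPoints y : Fin 5 → ℝ)
    (lipschitzWith_neg_iff.2 lipschitzWith_sawtooth)
  have hvals : sawtooth (3/10) = 1/5 ∧ sawtooth (1/2) = 1/5 ∧ sawtooth (7/10) = 1/5 ∧
      sawtooth (9/10) = 1/5 ∧ sawtooth (1/5) = 1/5 ∧ sawtooth (2/5) = 3/10 ∧
      sawtooth (3/5) = 3/10 ∧ sawtooth (4/5) = 3/10 ∧ sawtooth 1 = 3/10 := by
    norm_num [sawtooth, abs_of_nonneg, abs_of_nonpos]
  norm_num [fourPoints, Fin.sum_univ_succ, hvals] at h ⊢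
  linarith [sawtooth_le hy]

/-- there exist `n` and sorted points `0 ≤ x_1 ≤ … ≤ x_n ≤ 1` with
`E(x_1,…,x_n) ≥ n/100` and `E(x_1,…,x_n,x) ≥ E(x_1,…,x_n) + 1/10` for every `x ∈ [0,1]`. -/
theorem stmt_3 : ∃ (n : ℕ) (x : Fin n → ℝ), Monotone x ∧
    (∀ i, x i ∈ Set.Icc (0 : ℝ) 1) ∧
    energy x ≥ (n : ℝ) / 100 ∧
    ∀ y ∈ Set.Icc (0 : ℝ) 1, energy (Fin.snoc x y) ≥ energy x + 1 / 10 := by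
  refine ⟨4, fourPoints, ?_, ?_, ?_, fun y hy => ?_⟩
  · rw [Fin.monotone_iff_le_succ]
    norm_num [Fin.forall_fin_succ, fourPoints]
  · norm_num [Fin.forall_fin_succ, fourPoints]
  · linarith [le_energy_fourPoints]
  · linarith [le_energy_snoc_fourPoints hy, energy_fourPoints_le]
end

section
/- Let n ≥ 1 and 0 ≤ x_1 ≤ x_2 ≤ … ≤ x_n ≤ 1. Then ∑_{i=1}^{n} ∫_{(i−1)/n}^{i/n} |x_i − y| dy = ∫_0^1 | (#{1 ≤ i ≤ n : x_i ≤ x})/n − x | dx. (The left-hand side is the Wasserstein-1 distance between the empirical measure (1/n)∑ δ_{x_i} and Lebesgue measure on [0,1]; the right-hand side is the L¹ star-discrepancy.) -/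
/-!
Put `x₀ = 0`, `xₙ₊₁ = 1` (points indexed from 1). On `[x_k, x_{k+1})` the counting function equals
`k / n`, so the right-hand side is `∑_{k=0}^{n} ∫_{x_k}^{x_{k+1}} |k/n - t| dt`, while the left-hand
side is `∑_{k=0}^{n-1} ∫_{k/n}^{(k+1)/n} |x_{k+1} - y| dy`. With the odd antiderivative
`Φ(u) = u|u|/2` of `|u|`, both become sums of differences of `Φ(x_j - k/n)`, and a summation by
parts, using `Φ(-u) = -Φ(u)` and `Φ(x₀ - 0) = Φ(xₙ₊₁ - n/n) = 0`, identifies them.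
-/

open Finset MeasureTheory

noncomputable def halfSignedSq (u : ℝ) : ℝ := u * |u| / 2

lemma halfSignedSq_neg (u : ℝ) : halfSignedSq (-u) = -halfSignedSq u := by
  simp only [halfSignedSq, abs_neg]; ring

lemma hasDerivAt_halfSignedSq (u : ℝ) : HasDerivAt halfSignedSq |u| u := by
  refine hasDerivAt_of_hasDerivAt_of_ne' (x := 0) (fun v hv => ?_)
    (by unfold halfSignedSq; fun_prop) continuous_abs.continuousAt u
  exact ((hasDerivAt_id' v).mul (hasDerivAt_abs hv)).div_const 2 |>.congr_deriv <| by
    rw [one_mul, self_mul_sign]; ring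

lemma integral_abs_sub_left (a b c : ℝ) :
    ∫ y in a..b, |c - y| = halfSignedSq (b - c) - halfSignedSq (a - c) := by
  simp_rw [abs_sub_comm c, intervalIntegral.integral_comp_sub_right (fun y => |y|)]
  exact intervalIntegral.integral_eq_sub_of_hasDerivAt (fun u _ => hasDerivAt_halfSignedSq u)
    (continuous_abs.intervalIntegrable _ _)

/-- Summation by parts: it exchanges the roles of the breakpoints `z` and the levels `a`. -/
lemma sum_range_sub_eq_of_odd {φ : ℝ → ℝ} (hφ : ∀ u, φ (-u) = -φ u) (a z : ℕ → ℝ)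
    (n : ℕ) :
    ∑ k ∈ range (n + 1), (φ (z (k + 1) - a k) - φ (z k - a k)) =
      ∑ k ∈ range n, (φ (a (k + 1) - z (k + 1)) - φ (a k - z (k + 1))) +
        φ (z (n + 1) - a n) - φ (z 0 - a 0) := by
  induction n with
  | zero => simp
  | succ n ih =>
    rw [sum_range_succ, ih, sum_range_succ, ← neg_sub (z _), ← neg_sub (z _) (a n), hφ, hφ]
    ring

noncomputable def withEndpoints {n : ℕ} (x : Fin n → ℝ) : ℕ → ℝ
  | 0 => 0
  | k + 1 => if h : k < n then x ⟨k, h⟩ else 1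

lemma withEndpoints_succ {n : ℕ} (x : Fin n → ℝ) (i : Fin n) :
    withEndpoints x (i + 1) = x i := by
  simp [withEndpoints]

lemma monotone_withEndpoints {n : ℕ} {x : Fin n → ℝ} (hmono : Monotone x)
    (hx : ∀ i, x i ∈ Set.Icc (0 : ℝ) 1) : Monotone (withEndpoints x) := by
  refine monotone_nat_of_le_succ fun k => ?_
  rcases k with _ | k
  · simp only [withEndpoints]; split_ifs <;> simp [(hx _).1]
  · simp only [withEndpoints]
    split_ifs with h1 h2 h2
    · exact hmono (Fin.mk_le_mk.mpr k.le_succ)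
    · exact (hx _).2
    · omega
    · rfl

lemma card_filter_le_eq_of_mem_Ico {n : ℕ} {x : Fin n → ℝ} (hz : Monotone (withEndpoints x)) {k : ℕ}
    (hk : k ≤ n) {t : ℝ} (ht : t ∈ Set.Ico (withEndpoints x k) (withEndpoints x (k + 1))) :
    #{i | x i ≤ t} = k := by
  have : ({i | x i ≤ t} : Finset (Fin n)) = ({i | (i : ℕ) < k} : Finset (Fin n)) := by
    refine filter_congr fun i _ => ?_
    rw [← withEndpoints_succ x i]
    constructor
    · intro hi
      by_contra! hki
      exact (hz (Nat.succ_le_succ hki)).not_gt (hi.trans_lt ht.2)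
    · intro hik
      exact (hz hik).trans ht.1
  rw [this, Fin.card_filter_val_lt, min_eq_right hk]

lemma monotone_card_filter_le {ι : Type*} [Fintype ι] (x : ι → ℝ) :
    Monotone fun t => (#{i | x i ≤ t} : ℝ) :=
  fun _ _ hst => Nat.mono_cast <| card_le_card <| monotone_filter_right _ fun _ _ hi => hi.trans hst

lemma intervalIntegrable_discrepancy {ι : Type*} [Fintype ι] (x : ι → ℝ) (n : ℕ) (a b : ℝ) :
    IntervalIntegrable (fun t => |(#{i | x i ≤ t} : ℝ) / n - t|) volume a b :=
  ((monotone_card_filter_le x).div_const (Nat.cast_nonneg n) |>.intervalIntegrable.sub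
    (continuous_id.intervalIntegrable a b)).abs

lemma integral_discrepancy_withEndpoints {n : ℕ} {x : Fin n → ℝ}
    (hz : Monotone (withEndpoints x)) {k : ℕ} (hk : k ≤ n) :
    ∫ t in withEndpoints x k..withEndpoints x (k + 1), |(#{i | x i ≤ t} : ℝ) / n - t| =
      halfSignedSq (withEndpoints x (k + 1) - k / n) -
        halfSignedSq (withEndpoints x k - k / n) := by
  rw [← integral_abs_sub_left, intervalIntegral.integral_of_le (hz k.le_succ),
    intervalIntegral.integral_of_le (hz k.le_succ), integral_Ioc_eq_integral_Ioo,
    integral_Ioc_eq_integral_Ioo]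
  refine setIntegral_congr_fun measurableSet_Ioo fun t ht => ?_
  rw [card_filter_le_eq_of_mem_Ico hz hk (Set.Ioo_subset_Ico_self ht)]

/-- for sorted points `0 ≤ x_1 ≤ … ≤ x_n ≤ 1`,
`∑_{i=1}^n ∫_{(i−1)/n}^{i/n} |x_i − y| dy = ∫_0^1 |#{i : x_i ≤ t}/n − t| dt`. -/
theorem stmt_4 (n : ℕ) (hn : 1 ≤ n) (x : Fin n → ℝ) (hmono : Monotone x)
    (hx : ∀ i, x i ∈ Set.Icc (0 : ℝ) 1) :
    ∑ i : Fin n, (∫ y in (((i : ℕ) : ℝ) / n)..((((i : ℕ) : ℝ) + 1) / n), |x i - y|) =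
      ∫ t in (0 : ℝ)..1,
        |((Finset.univ.filter fun i : Fin n => x i ≤ t).card : ℝ) / n - t| := by
  have hz := monotone_withEndpoints hmono hx
  have hz0 : withEndpoints x 0 = 0 := rfl
  have hzn : withEndpoints x (n + 1) = 1 := by simp [withEndpoints]
  have hn0 : (n : ℝ) ≠ 0 := Nat.cast_ne_zero.mpr (Nat.one_le_iff_ne_zero.mp hn)
  rw [← hz0, ← hzn, ← intervalIntegral.sum_integral_adjacent_intervals fun k _ =>
      intervalIntegrable_discrepancy x n _ _,
    sum_congr rfl fun k hk =>
      integral_discrepancy_withEndpoints hz (Nat.lt_succ_iff.mp (mem_range.mp hk)),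
    sum_range_sub_eq_of_odd halfSignedSq_neg, hz0, hzn, div_self hn0, Nat.cast_zero, zero_div,
    sub_self, sub_self, add_sub_cancel_right]
  simp_rw [← withEndpoints_succ x, integral_abs_sub_left]
  push_cast
  exact Fin.sum_univ_eq_sum_range (fun i => halfSignedSq ((i + 1) / n - withEndpoints x (i + 1)) -
    halfSignedSq (i / n - withEndpoints x (i + 1))) n
end

section
/- Let n ≥ 1 and 0 ≤ x_1 ≤ x_2 ≤ … ≤ x_n ≤ 1, and let E = ∑_{i=1}^{n} |x_i − i/n|. Then | ∫_0^1 | #{1 ≤ i ≤ n : x_i ≤ x} − n·x | dx − E | ≤ 1; that is, n times the L¹ star-discrepancy of the point set differs from the energy E by at most 1. -/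
/-!
Write `c i = (i + 1) / n` for the evenly spaced configuration. For monotone families the sets
`{i | x i ≤ t}` and `{i | c i ≤ t}` are initial segments, hence nested, so
`|#{x ≤ t} - #{c ≤ t}| = ∑ i, |1[x i ≤ t] - 1[c i ≤ t]|`; integrating over `[0, 1]` turns each
summand into `|x i - c i|`, so the energy is the `L¹` distance between the two counting functions.
As `#{c ≤ t} = ⌊n t⌋` stays within `1` of `n t`, the triangle inequality gives the bound.
-/

open scoped Classical

open Finset MeasureTheory

lemma monotone_ite_le {α : Type*} [Preorder α] (a : α) :
    Monotone fun t : α => (if a ≤ t then 1 else 0 : ℝ) := fun s r hsr => by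
  by_cases hs : a ≤ s
  · simp [hs, hs.trans hsr]
  · simp only [hs, if_false]; split_ifs <;> norm_num

lemma intervalIntegral_ite_le {a u v : ℝ} (ha : a ∈ Set.Icc u v) :
    ∫ t in u..v, (if a ≤ t then 1 else 0 : ℝ) = v - a := by
  rw [← intervalIntegral.integral_add_adjacent_intervals (b := a)
    (monotone_ite_le a).intervalIntegrable (monotone_ite_le a).intervalIntegrable,
    intervalIntegral.integral_congr_Ioo_of_le ha.1 (g := 0),
    intervalIntegral.integral_congr_Ioo_of_le ha.2 (g := 1)]
  · simp
  · exact fun t ht => if_pos ht.1.le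
  · exact fun t ht => if_neg (not_le.2 ht.2)

lemma intervalIntegral_abs_ite_le_sub_ite_le {a b u v : ℝ} (ha : a ∈ Set.Icc u v)
    (hb : b ∈ Set.Icc u v) :
    ∫ t in u..v, |(if a ≤ t then 1 else 0 : ℝ) - if b ≤ t then 1 else 0| = |a - b| := by
  have hstep : ∀ t : ℝ, |(if a ≤ t then 1 else 0 : ℝ) - if b ≤ t then 1 else 0| =
      (if min a b ≤ t then 1 else 0) - if max a b ≤ t then 1 else 0 := fun t => by
    rcases le_total a b with h | h <;> simp only [min_eq_left, min_eq_right, max_eq_left,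
      max_eq_right, h] <;> split_ifs <;> norm_num <;> linarith
  simp_rw [hstep]
  rw [intervalIntegral.integral_sub (monotone_ite_le _).intervalIntegrable
    (monotone_ite_le _).intervalIntegrable,
    intervalIntegral_ite_le ⟨le_min ha.1 hb.1, min_le_of_left_le ha.2⟩,
    intervalIntegral_ite_le ⟨le_max_of_le_left ha.1, max_le ha.2 hb.2⟩,
    sub_sub_sub_cancel_left, max_sub_min_eq_abs']

section Counting

variable {ι α : Type*} [Fintype ι] [LinearOrder α]

lemma monotone_natCast_card_filter_le (x : ι → α) :
    Monotone fun t => (#{i | x i ≤ t} : ℝ) := fun _ _ hst =>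
  Nat.cast_le.2 <| card_le_card <| monotone_filter_right _ fun _ _ hi => hi.trans hst

lemma Monotone.abs_natCast_card_filter_le_sub [LinearOrder ι] {x c : ι → α} (hx : Monotone x)
    (hc : Monotone c) (t : α) :
    |(#{i | x i ≤ t} : ℝ) - #{i | c i ≤ t}| =
      ∑ i, |(if x i ≤ t then 1 else 0 : ℝ) - if c i ≤ t then 1 else 0| := by
  wlog hxc : x ⁻¹' Set.Iic t ⊆ c ⁻¹' Set.Iic t generalizing x c
  · have hcx := ((isLowerSet_Iic t).preimage hx).total ((isLowerSet_Iic t).preimage hc)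
    simpa only [abs_sub_comm] using this hc hx (hcx.resolve_left hxc)
  have hle : ∀ i, (if x i ≤ t then 1 else 0 : ℝ) - (if c i ≤ t then 1 else 0) ≤ 0 := fun i => by
    by_cases hxi : x i ≤ t
    · simp [hxi, show c i ≤ t from hxc hxi]
    · simp only [hxi, if_false]; split_ifs <;> norm_num
  rw [natCast_card_filter, natCast_card_filter, ← sum_sub_distrib,
    abs_of_nonpos (sum_nonpos fun i _ => hle i), ← sum_neg_distrib]
  exact sum_congr rfl fun i _ => (abs_of_nonpos (hle i)).symm

lemma sum_abs_sub_eq_intervalIntegral_abs_card_filter_le_sub [LinearOrder ι] {x c : ι → ℝ}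
    (hx : Monotone x) (hc : Monotone c) {u v : ℝ} (hxI : ∀ i, x i ∈ Set.Icc u v)
    (hcI : ∀ i, c i ∈ Set.Icc u v) :
    ∑ i, |x i - c i| = ∫ t in u..v, |(#{i | x i ≤ t} : ℝ) - #{i | c i ≤ t}| := by
  simp_rw [hx.abs_natCast_card_filter_le_sub hc]
  rw [intervalIntegral.integral_finsetSum fun i _ =>
    ((monotone_ite_le _).intervalIntegrable.sub (monotone_ite_le _).intervalIntegrable).abs]
  exact sum_congr rfl fun i _ => (intervalIntegral_abs_ite_le_sub_ite_le (hxI i) (hcI i)).symm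

end Counting

lemma card_filter_succ_div_le_eq_floor (n : ℕ) {t : ℝ} (ht : t ∈ Set.Icc (0 : ℝ) 1) :
    #{i : Fin n | (((i : ℕ) : ℝ) + 1) / n ≤ t} = ⌊n * t⌋₊ := by
  rcases n.eq_zero_or_pos with rfl | hn
  · simp
  have hnt : 0 ≤ (n : ℝ) * t := mul_nonneg n.cast_nonneg ht.1
  have hfloor : ⌊n * t⌋₊ ≤ n := Nat.floor_le_of_le (by nlinarith [ht.2])
  calc #{i : Fin n | (((i : ℕ) : ℝ) + 1) / n ≤ t} = #{i : Fin n | (i : ℕ) < ⌊n * t⌋₊} := by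
        congr 1; ext i
        rw [mem_filter, mem_filter, div_le_iff₀ (by positivity), mul_comm, Nat.lt_iff_add_one_le,
          Nat.le_floor_iff hnt]
        push_cast; rfl
    _ = ⌊n * t⌋₊ := by rw [Fin.card_filter_val_lt, min_eq_right hfloor]

lemma abs_card_filter_succ_div_le_sub_le_one (n : ℕ) {t : ℝ} (ht : t ∈ Set.Icc (0 : ℝ) 1) :
    |(#{i : Fin n | (((i : ℕ) : ℝ) + 1) / n ≤ t} : ℝ) - n * t| ≤ 1 := by
  have hnt : 0 ≤ (n : ℝ) * t := mul_nonneg n.cast_nonneg ht.1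
  rw [card_filter_succ_div_le_eq_floor n ht, abs_sub_comm, abs_le]
  constructor <;> linarith [Nat.floor_le hnt, Nat.lt_floor_add_one ((n : ℝ) * t)]

theorem stmt_5_general (n : ℕ) (x : Fin n → ℝ) (hmono : Monotone x)
    (hx : ∀ i, x i ∈ Set.Icc (0 : ℝ) 1) :
    |(∫ t in (0 : ℝ)..1,
        |((Finset.univ.filter fun i : Fin n => x i ≤ t).card : ℝ) - (n : ℝ) * t|) -
      (∑ i : Fin n, |x i - (((i : ℕ) : ℝ) + 1) / (n : ℝ)|)| ≤ 1 := by
  set c : Fin n → ℝ := fun i => (((i : ℕ) : ℝ) + 1) / n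
  have hc : Monotone c := fun i j hij => by simp only [c]; gcongr; exact_mod_cast hij
  have hcI : ∀ i, c i ∈ Set.Icc (0 : ℝ) 1 := fun i => ⟨by positivity, div_le_one_of_le₀
    (by exact_mod_cast i.isLt) n.cast_nonneg⟩
  have hF := monotone_natCast_card_filter_le x
  rw [sum_abs_sub_eq_intervalIntegral_abs_card_filter_le_sub hmono hc hx hcI,
    ← intervalIntegral.integral_sub
      (hF.intervalIntegrable.sub ((continuous_const_mul (n : ℝ)).intervalIntegrable 0 1)).abs
      (hF.intervalIntegrable.sub (monotone_natCast_card_filter_le c).intervalIntegrable).abs,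
    ← Real.norm_eq_abs]
  calc _ ≤ 1 * |(1 : ℝ) - 0| := intervalIntegral.norm_integral_le_of_norm_le_const fun t ht => ?_
    _ = 1 := by norm_num
  rw [Set.uIoc_of_le zero_le_one] at ht
  calc _ ≤ |(#{i | c i ≤ t} : ℝ) - n * t| := by
        simpa only [Real.norm_eq_abs, sub_sub_sub_cancel_left] using abs_abs_sub_abs_le_abs_sub
          ((#{i | x i ≤ t} : ℝ) - n * t) (#{i | x i ≤ t} - #{i | c i ≤ t})
    _ ≤ 1 := abs_card_filter_succ_div_le_sub_le_one n (Set.Ioc_subset_Icc_self ht)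

/-- for sorted points `0 ≤ x_1 ≤ … ≤ x_n ≤ 1` with energy
`E = ∑_{i=1}^n |x_i − i/n|`, one has `|∫_0^1 |#{i : x_i ≤ t} − n t| dt − E| ≤ 1`. -/
theorem stmt_5 (n : ℕ) (hn : 1 ≤ n) (x : Fin n → ℝ) (hmono : Monotone x)
    (hx : ∀ i, x i ∈ Set.Icc (0 : ℝ) 1) :
    |(∫ t in (0 : ℝ)..1,
        |((Finset.univ.filter fun i : Fin n => x i ≤ t).card : ℝ) - (n : ℝ) * t|) -
      (∑ i : Fin n, |x i - (((i : ℕ) : ℝ) + 1) / (n : ℝ)|)| ≤ 1 :=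
  stmt_5_general n x hmono hx
end

section
/- Define h(α) = ∫_0^α sign(z − Φ^{-1}(z))·z dz + ∫_α^1 sign(z − Φ^{-1}(z))·(z − 1) dz + |α − Φ(α)| for α ∈ [0,1]. Then h attains its minimum over [0,1], and every point α* at which the minimum is attained satisfies Φ(α*) = α*. -/
/-!
Since `Φ` is strictly increasing on `[0,1]`, `sign (z - Φ⁻¹ z) = sign (Φ z - z)` there, and
splitting the integrals at `α` gives `h α = ∫₀^α sign (Φ z - z) dz + |Φ α - α| + const`.
This is continuous, so it attains its minimum. On an interval where `Φ < id` it equals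
`const - Φ`, and where `Φ > id` it equals `const + Φ`, so `h` strictly decreases, resp.
increases, there. As `Φ 0 = 0` and `Φ 1 = 1`, at a point with `Φ α ≠ α` one can move into such
an interval and lower `h`.
-/

open MeasureTheory Set Filter Topology intervalIntegral
open scoped Interval

lemma Real.measurable_sign : Measurable Real.sign :=
  Measurable.ite measurableSet_Iio measurable_const
    (Measurable.ite measurableSet_Ioi measurable_const measurable_const)

lemma Real.abs_eq_sign_mul_self (r : ℝ) : |r| = Real.sign r * r := by
  rcases lt_trichotomy r 0 with hr | rfl | hr
  · rw [abs_of_neg hr, Real.sign_of_neg hr, neg_one_mul]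
  · simp
  · rw [abs_of_pos hr, Real.sign_of_pos hr, one_mul]

lemma StrictMonoOn.sign_sub {f : ℝ → ℝ} {s : Set ℝ} (hf : StrictMonoOn f s) {x y : ℝ}
    (hx : x ∈ s) (hy : y ∈ s) : Real.sign (f x - f y) = Real.sign (x - y) := by
  rcases lt_trichotomy x y with hxy | rfl | hxy
  · rw [Real.sign_of_neg (sub_neg.2 (hf hx hy hxy)), Real.sign_of_neg (sub_neg.2 hxy)]
  · simp
  · rw [Real.sign_of_pos (sub_pos.2 (hf hy hx hxy)), Real.sign_of_pos (sub_pos.2 hxy)]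

lemma ContinuousOn.intervalIntegrable_sign_comp {g : ℝ → ℝ} {a b : ℝ}
    (hg : ContinuousOn g [[a, b]]) : IntervalIntegrable (fun z => Real.sign (g z)) volume a b := by
  refine (intervalIntegrable_const (c := (1 : ℝ))).mono_fun' ?_ (Eventually.of_forall fun z => ?_)
  · exact (Real.measurable_sign.comp_aemeasurable
      ((hg.mono uIoc_subset_uIcc).aemeasurable measurableSet_uIoc)).aestronglyMeasurable
  · rcases Real.sign_apply_eq (g z) with h | h | h <;> simp [h]

lemma strictMonoOn_integral_of_pos {φ : ℝ → ℝ} {a b : ℝ} (hφ : ContinuousOn φ (Icc a b))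
    (hpos : ∀ t ∈ Icc a b, 0 < φ t) : StrictMonoOn (fun x => ∫ t in a..x, φ t) (Icc a b) := by
  intro x hx y hy hxy
  have hφi : ∀ {u v}, u ∈ Icc a b → v ∈ Icc a b → IntervalIntegrable φ volume u v :=
    fun hu hv => (hφ.mono (uIcc_subset_Icc hu hv)).intervalIntegrable
  have ha : a ∈ Icc a b := left_mem_Icc.2 (hx.1.trans hx.2)
  rw [← sub_pos, integral_interval_sub_left (hφi ha hy) (hφi ha hx)]
  exact intervalIntegral_pos_of_pos_on (hφi hx hy)
    (fun t ht => hpos t ⟨hx.1.trans ht.1.le, ht.2.le.trans hy.2⟩) hxy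

lemma integral_mul_self_add_integral_mul_sub_one {s : ℝ → ℝ} {a b x : ℝ}
    (hax : IntervalIntegrable s volume a x) (hxb : IntervalIntegrable s volume x b) :
    (∫ z in a..x, s z * z) + ∫ z in x..b, s z * (z - 1) =
      (∫ z in a..x, s z) + ∫ z in a..b, s z * (z - 1) := by
  have hw : ∀ {u v : ℝ}, IntervalIntegrable s volume u v →
      IntervalIntegrable (fun z => s z * (z - 1)) volume u v :=
    fun h => h.mul_continuousOn (by fun_prop)
  rw [← integral_add_adjacent_intervals (hw hax) (hw hxb), ← add_assoc,
    ← integral_add hax (hw hax)]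
  congr 1
  exact integral_congr fun z _ => by ring

lemma integral_sign_add_abs_sub_abs {g : ℝ → ℝ} {x y ε : ℝ}
    (hε : ∀ z ∈ [[x, y]], Real.sign (g z) = ε) :
    (∫ z in x..y, Real.sign (g z)) + |g y| - |g x| = ε * (y + g y - (x + g x)) := by
  rw [integral_congr hε, intervalIntegral.integral_const, smul_eq_mul,
    Real.abs_eq_sign_mul_self (g y), Real.abs_eq_sign_mul_self (g x), hε y right_mem_uIcc,
    hε x left_mem_uIcc]
  ring

section Order

variable {α : Type*} [TopologicalSpace α] [LinearOrder α] [OrderTopology α] [DenselyOrdered α]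
  {s t : Set α} {a b : α}

lemma exists_Icc_subset_of_mem_nhdsWithin_of_Icc_subset_right [NoMaxOrder α]
    (hs : s ∈ 𝓝[t] a) (hab : a < b) (ht : Icc a b ⊆ t) : ∃ c ∈ Ioc a b, Icc a c ⊆ s := by
  have hGE : s ∩ Icc a b ∈ 𝓝[≥] a :=
    inter_mem (nhdsWithin_le_of_mem (mem_of_superset (Icc_mem_nhdsGE hab) ht) hs)
      (Icc_mem_nhdsGE hab)
  obtain ⟨c, hac, hc⟩ := mem_nhdsGE_iff_exists_Icc_subset.1 hGE
  exact ⟨c, ⟨hac, (hc (right_mem_Icc.2 hac.le)).2.2⟩, fun z hz => (hc hz).1⟩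

lemma exists_Icc_subset_of_mem_nhdsWithin_of_Icc_subset_left [NoMinOrder α]
    (hs : s ∈ 𝓝[t] b) (hab : a < b) (ht : Icc a b ⊆ t) : ∃ c ∈ Ico a b, Icc c b ⊆ s := by
  have hLE : s ∩ Icc a b ∈ 𝓝[≤] b :=
    inter_mem (nhdsWithin_le_of_mem (mem_of_superset (Icc_mem_nhdsLE hab) ht) hs)
      (Icc_mem_nhdsLE hab)
  obtain ⟨c, hcb, hc⟩ := mem_nhdsLE_iff_exists_Icc_subset.1 hLE
  exact ⟨c, ⟨(hc (left_mem_Icc.2 hcb.le)).2.1, hcb⟩, fun z hz => (hc hz).1⟩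

end Order

lemma eq_zero_of_isMinOn {g h : ℝ → ℝ} {a b x : ℝ} (hg : ContinuousOn g (Icc a b))
    (ha : g a ≤ 0) (hb : 0 ≤ g b)
    (hdec : ∀ u v, a ≤ u → u < v → v ≤ b → (∀ z ∈ Icc u v, g z < 0) → h v < h u)
    (hinc : ∀ u v, a ≤ u → u < v → v ≤ b → (∀ z ∈ Icc u v, 0 < g z) → h u < h v)
    (hx : x ∈ Icc a b) (hmin : IsMinOn h (Icc a b) x) : g x = 0 := by
  rcases lt_trichotomy (g x) 0 with hneg | hzero | hpos
  · have hxb : x < b := hx.2.lt_of_ne (by rintro rfl; linarith)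
    obtain ⟨v, hv, hsub⟩ := exists_Icc_subset_of_mem_nhdsWithin_of_Icc_subset_right
      ((hg x hx).eventually_lt_const hneg) hxb (Icc_subset_Icc_left hx.1)
    exact ((hdec x v hx.1 hv.1 hv.2 hsub).not_ge (hmin ⟨hx.1.trans hv.1.le, hv.2⟩)).elim
  · exact hzero
  · have hax : a < x := hx.1.lt_of_ne (by rintro rfl; linarith)
    obtain ⟨u, hu, hsub⟩ := exists_Icc_subset_of_mem_nhdsWithin_of_Icc_subset_left
      ((hg x hx).eventually_const_lt hpos) hax (Icc_subset_Icc_right hx.2)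
    exact ((hinc u x hu.1 hu.2 hx.2 hsub).not_ge (hmin ⟨hu.1, hu.2.le.trans hx.2⟩)).elim

section IntegralSignAddAbs

variable {g h : ℝ → ℝ} {a b K : ℝ}

lemma continuousOn_of_eq_integral_sign_add_abs (hg : ContinuousOn g (Icc a b))
    (hh : ∀ x ∈ Icc a b, h x = (∫ z in a..x, Real.sign (g z)) + |g x| + K) :
    ContinuousOn h (Icc a b) := by
  rcases le_or_gt a b with hab | hba
  · have hI : uIcc a b = Icc a b := uIcc_of_le hab
    refine (((hI ▸ continuousOn_primitive_interval' (hI ▸ hg).intervalIntegrable_sign_comp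
      left_mem_uIcc).add (continuous_abs.comp_continuousOn hg)).add continuousOn_const).congr hh
  · simp [Icc_eq_empty_of_lt hba]

lemma sub_eq_of_eq_integral_sign_add_abs (hg : ContinuousOn g (Icc a b))
    (hh : ∀ x ∈ Icc a b, h x = (∫ z in a..x, Real.sign (g z)) + |g x| + K)
    {x y ε : ℝ} (hx : x ∈ Icc a b) (hy : y ∈ Icc a b)
    (hε : ∀ z ∈ [[x, y]], Real.sign (g z) = ε) : h y - h x = ε * (y + g y - (x + g x)) := by
  have ha : a ∈ Icc a b := left_mem_Icc.2 (hx.1.trans hx.2)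
  have hσ : ∀ {u v}, u ∈ Icc a b → v ∈ Icc a b →
      IntervalIntegrable (fun z => Real.sign (g z)) volume u v :=
    fun hu hv => (hg.mono (uIcc_subset_Icc hu hv)).intervalIntegrable_sign_comp
  rw [hh x hx, hh y hy]
  linear_combination integral_interval_sub_left (hσ ha hy) (hσ ha hx) +
    integral_sign_add_abs_sub_abs hε

lemma eq_zero_of_isMinOn_of_eq_integral_sign_add_abs (hg : ContinuousOn g (Icc a b))
    (hh : ∀ x ∈ Icc a b, h x = (∫ z in a..x, Real.sign (g z)) + |g x| + K)
    (ha : g a ≤ 0) (hb : 0 ≤ g b) (hmono : StrictMonoOn (fun x => x + g x) (Icc a b))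
    {x : ℝ} (hx : x ∈ Icc a b) (hmin : IsMinOn h (Icc a b) x) : g x = 0 := by
  have hstep : ∀ u v ε, a ≤ u → u < v → v ≤ b → (∀ z ∈ Icc u v, Real.sign (g z) = ε) →
      h v - h u = ε * (v + g v - (u + g u)) ∧ u + g u < v + g v := by
    intro u v ε hu huv hv hε
    have hu' : u ∈ Icc a b := ⟨hu, huv.le.trans hv⟩
    have hv' : v ∈ Icc a b := ⟨hu.trans huv.le, hv⟩
    exact ⟨sub_eq_of_eq_integral_sign_add_abs hg hh hu' hv' (uIcc_of_le huv.le ▸ hε),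
      hmono hu' hv' huv⟩
  refine eq_zero_of_isMinOn hg ha hb (fun u v hu huv hv hneg => ?_)
    (fun u v hu huv hv hpos => ?_) hx hmin
  · obtain ⟨heq, hlt⟩ := hstep u v (-1) hu huv hv fun z hz => Real.sign_of_neg (hneg z hz)
    linarith
  · obtain ⟨heq, hlt⟩ := hstep u v 1 hu huv hv fun z hz => Real.sign_of_pos (hpos z hz)
    linarith

end IntegralSignAddAbs

lemma eq_integral_sign_sub_add_abs {Φ Ψ h : ℝ → ℝ} (hΦc : ContinuousOn Φ (Icc 0 1))
    (hΦm : StrictMonoOn Φ (Icc 0 1))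
    (hΨ : ∀ y ∈ Icc (0 : ℝ) 1, Ψ y ∈ Icc (0 : ℝ) 1 ∧ Φ (Ψ y) = y)
    (hh : ∀ α, h α = (∫ z in (0 : ℝ)..α, Real.sign (z - Ψ z) * z) +
      (∫ z in α..(1 : ℝ), Real.sign (z - Ψ z) * (z - 1)) + |α - Φ α|) (x : ℝ) (hx : x ∈ Icc 0 1) :
    h x = (∫ z in 0..x, Real.sign (Φ z - z)) + |Φ x - x| +
      ∫ z in 0..1, Real.sign (Φ z - z) * (z - 1) := by
  have h0 : (0 : ℝ) ∈ Icc 0 1 := left_mem_Icc.2 zero_le_one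
  have h1 : (1 : ℝ) ∈ Icc 0 1 := right_mem_Icc.2 zero_le_one
  have hsign : ∀ z ∈ Icc (0 : ℝ) 1, Real.sign (z - Ψ z) = Real.sign (Φ z - z) := fun z hz => by
    rw [← hΦm.sign_sub hz (hΨ z hz).1, (hΨ z hz).2]
  have hσ : ∀ {u v}, u ∈ Icc (0 : ℝ) 1 → v ∈ Icc (0 : ℝ) 1 →
      IntervalIntegrable (fun z => Real.sign (Φ z - z)) volume u v := fun hu hv =>
    ((hΦc.sub continuousOn_id).mono (uIcc_subset_Icc hu hv)).intervalIntegrable_sign_comp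
  have e₁ : ∫ z in 0..x, Real.sign (z - Ψ z) * z = ∫ z in 0..x, Real.sign (Φ z - z) * z :=
    integral_congr fun z hz => by simp only [hsign z (uIcc_subset_Icc h0 hx hz)]
  have e₂ : ∫ z in x..1, Real.sign (z - Ψ z) * (z - 1) =
      ∫ z in x..1, Real.sign (Φ z - z) * (z - 1) :=
    integral_congr fun z hz => by simp only [hsign z (uIcc_subset_Icc hx h1 hz)]
  rw [hh x, e₁, e₂, integral_mul_self_add_integral_mul_sub_one (hσ h0 hx) (hσ hx h1),
    abs_sub_comm]
  ring

theorem stmt_6_general (φ Φ Ψ : ℝ → ℝ) (c C : ℝ) (hc : 0 < c)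
    (hφcont : ContinuousOn φ (Set.Icc 0 1))
    (hφ : ∀ t ∈ Set.Icc (0 : ℝ) 1, c ≤ φ t ∧ φ t ≤ C)
    (hint : (∫ t in (0 : ℝ)..1, φ t) = 1)
    (hΦ : ∀ x ∈ Set.Icc (0 : ℝ) 1, Φ x = ∫ t in (0 : ℝ)..x, φ t)
    (hΨ : ∀ y ∈ Set.Icc (0 : ℝ) 1, Ψ y ∈ Set.Icc (0 : ℝ) 1 ∧ Φ (Ψ y) = y)
    (h : ℝ → ℝ)
    (hh : ∀ α, h α = (∫ z in (0 : ℝ)..α, Real.sign (z - Ψ z) * z) +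
      (∫ z in α..(1 : ℝ), Real.sign (z - Ψ z) * (z - 1)) + |α - Φ α|) :
    (∃ α ∈ Set.Icc (0 : ℝ) 1, ∀ β ∈ Set.Icc (0 : ℝ) 1, h α ≤ h β) ∧
    ∀ α ∈ Set.Icc (0 : ℝ) 1, (∀ β ∈ Set.Icc (0 : ℝ) 1, h α ≤ h β) → Φ α = α := by
  have hΦcont : ContinuousOn Φ (Icc 0 1) :=
    (uIcc_of_le (zero_le_one (α := ℝ)) ▸ continuousOn_primitive_interval'
      (hφcont.intervalIntegrable_of_Icc zero_le_one) left_mem_uIcc).congr hΦ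
  have hΦmono : StrictMonoOn Φ (Icc 0 1) :=
    (strictMonoOn_integral_of_pos hφcont fun t ht => hc.trans_le (hφ t ht).1).congr
      fun x hx => (hΦ x hx).symm
  have hrepr := eq_integral_sign_sub_add_abs hΦcont hΦmono hΨ hh
  have hgcont : ContinuousOn (fun z => Φ z - z) (Icc 0 1) := hΦcont.sub continuousOn_id
  refine ⟨?_, fun x hx hmin => sub_eq_zero.1 <| eq_zero_of_isMinOn_of_eq_integral_sign_add_abs
    hgcont hrepr ?_ ?_ ?_ hx fun β hβ => hmin β hβ⟩
  · obtain ⟨x, hx, hmin⟩ := isCompact_Icc.exists_isMinOn (nonempty_Icc.2 zero_le_one)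
      (continuousOn_of_eq_integral_sign_add_abs hgcont hrepr)
    exact ⟨x, hx, fun β hβ => hmin hβ⟩
  · simp [hΦ 0 (left_mem_Icc.2 zero_le_one)]
  · simp [hΦ 1 (right_mem_Icc.2 zero_le_one), hint]
  · exact hΦmono.congr fun x _ => by ring

/-- with `h(α) = ∫_0^α sign(z − Φ⁻¹(z)) z dz + ∫_α^1 sign(z − Φ⁻¹(z)) (z−1) dz
+ |α − Φ(α)|`, the function `h` attains its minimum on `[0,1]` and every minimizer is a
fixed point of `Φ`. Here `φ` is a continuous density on `[0,1]` bounded between `c > 0`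
and `C`, `Φ` its CDF and `Ψ = Φ⁻¹` its inverse on `[0,1]`. -/
theorem stmt_6 (φ Φ Ψ : ℝ → ℝ) (c C : ℝ) (hc : 0 < c)
    (hφcont : ContinuousOn φ (Set.Icc 0 1))
    (hφ : ∀ t ∈ Set.Icc (0 : ℝ) 1, c ≤ φ t ∧ φ t ≤ C)
    (hint : (∫ t in (0 : ℝ)..1, φ t) = 1)
    (hΦ : ∀ x ∈ Set.Icc (0 : ℝ) 1, Φ x = ∫ t in (0 : ℝ)..x, φ t)
    (hΨ : ∀ y ∈ Set.Icc (0 : ℝ) 1, Ψ y ∈ Set.Icc (0 : ℝ) 1 ∧ Φ (Ψ y) = y)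
    (hΨ' : ∀ x ∈ Set.Icc (0 : ℝ) 1, Ψ (Φ x) = x)
    (hfin : {x ∈ Set.Icc (0 : ℝ) 1 | Φ x = x}.Finite)
    (h : ℝ → ℝ)
    (hh : ∀ α, h α = (∫ z in (0 : ℝ)..α, Real.sign (z - Ψ z) * z) +
      (∫ z in α..(1 : ℝ), Real.sign (z - Ψ z) * (z - 1)) + |α - Φ α|) :
    (∃ α ∈ Set.Icc (0 : ℝ) 1, ∀ β ∈ Set.Icc (0 : ℝ) 1, h α ≤ h β) ∧
    ∀ α ∈ Set.Icc (0 : ℝ) 1, (∀ β ∈ Set.Icc (0 : ℝ) 1, h α ≤ h β) → Φ α = α :=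
  stmt_6_general φ Φ Ψ c C hc hφcont hφ hint hΦ hΨ h hh
end

section
/- Let g : [0,1] → ℝ be continuous and not identically zero. Then max over 0 ≤ z ≤ 1 of [ ∫_0^z g(x)·x dx + ∫_z^1 g(x)·(x − 1) dx ] ≥ (1/16) · (∫_0^1 g(x)² dx)^{-1} · ( max over 0 ≤ x ≤ 1 of | ∫_0^x g(y) dy | )³. -/
/-!
Write `G z = ∫_0^z g` and `E = ∫_0^1 g²`. Integrating by parts, the bracket on the left equals
`G z - ∫_0^1 G`, so at a maximum point `z` of `G` it is `∫_0^1 (G z - G x) dx`, the integral of a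
nonnegative function. By Cauchy–Schwarz `(G b - G a)² ≤ |b - a| E`, so `G` oscillates by at most
`M / 2` on intervals of length `δ = M² / (4E)`, where `M = max |G|`. Since `G 0 = 0`, the integrand
is at least `M` at `0` or at a point where `|G| = M`, hence at least `M / 2` on an interval of
length `δ`, and the integral is at least `δ M / 2 = M³ / (8E)`.
-/

open Set MeasureTheory intervalIntegral

theorem sq_intervalIntegral_le_mul_integral_sq {g : ℝ → ℝ} {a b : ℝ} (hab : a ≤ b)
    (hg : IntervalIntegrable g volume a b)
    (hg2 : IntervalIntegrable (fun x => g x ^ 2) volume a b) :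
    (∫ x in a..b, g x) ^ 2 ≤ (b - a) * ∫ x in a..b, g x ^ 2 := by
  rcases hab.eq_or_lt with rfl | hlt
  · simp
  set I := ∫ x in a..b, g x
  have hexpand : ∫ x in a..b, ((b - a) * g x - I) ^ 2
      = (b - a) ^ 2 * (∫ x in a..b, g x ^ 2) - (b - a) * I ^ 2 := by
    have hpoly : EqOn (fun x => ((b - a) * g x - I) ^ 2)
        (fun x => (b - a) ^ 2 * g x ^ 2 - (2 * (b - a) * I) * g x + I ^ 2) (uIcc a b) :=
      fun x _ => by ring
    rw [integral_congr hpoly,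
      integral_add ((hg2.const_mul _).sub (hg.const_mul _)) intervalIntegrable_const,
      integral_sub (hg2.const_mul _) (hg.const_mul _), intervalIntegral.integral_const_mul, intervalIntegral.integral_const_mul,
      intervalIntegral.integral_const, smul_eq_mul]
    ring
  have hnonneg : 0 ≤ ∫ x in a..b, ((b - a) * g x - I) ^ 2 :=
    integral_nonneg hab (fun x _ => sq_nonneg _)
  rw [hexpand] at hnonneg
  exact le_of_mul_le_mul_left (by nlinarith) (sub_pos.mpr hlt)

theorem sq_primitive_sub_le {g : ℝ → ℝ} {s t a b : ℝ}
    (hg : ContinuousOn g (Icc s t)) (hsa : s ≤ a) (hab : a ≤ b) (hbt : b ≤ t) :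
    ((∫ x in s..b, g x) - ∫ x in s..a, g x) ^ 2 ≤ (b - a) * ∫ x in s..t, g x ^ 2 := by
  have hsub : ∀ {u v}, u ∈ Icc s t → v ∈ Icc s t → uIcc u v ⊆ Icc s t := uIcc_subset_Icc
  have hs : s ∈ Icc s t := left_mem_Icc.2 (hsa.trans (hab.trans hbt))
  have ha : a ∈ Icc s t := ⟨hsa, hab.trans hbt⟩
  have hb : b ∈ Icc s t := ⟨hsa.trans hab, hbt⟩
  rw [integral_interval_sub_left ((hg.mono (hsub hs hb)).intervalIntegrable)
    ((hg.mono (hsub hs ha)).intervalIntegrable)]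
  calc (∫ x in a..b, g x) ^ 2 ≤ (b - a) * ∫ x in a..b, g x ^ 2 :=
        sq_intervalIntegral_le_mul_integral_sq hab ((hg.mono (hsub ha hb)).intervalIntegrable)
          (((hg.pow 2).mono (hsub ha hb)).intervalIntegrable)
    _ ≤ (b - a) * ∫ x in s..t, g x ^ 2 :=
        mul_le_mul_of_nonneg_left (integral_mono_interval hsa hab hbt
            (Filter.Eventually.of_forall fun x => sq_nonneg _)
            ((hg.pow 2).intervalIntegrable_of_Icc hs.2))
          (sub_nonneg.2 hab)

theorem mul_le_intervalIntegral_of_le_near {h : ℝ → ℝ} {s t c δ m : ℝ}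
    (hh : IntervalIntegrable h volume s t) (hnonneg : ∀ x ∈ Icc s t, 0 ≤ h x)
    (hc : c ∈ Icc s t) (hδ : 0 ≤ δ) (hδst : 2 * δ ≤ t - s)
    (hm : ∀ x ∈ Icc s t, |x - c| ≤ δ → m ≤ h x) :
    δ * m ≤ ∫ x in s..t, h x := by
  obtain ⟨a, hsa, hat, hnear⟩ :
      ∃ a, s ≤ a ∧ a + δ ≤ t ∧ ∀ x ∈ Icc a (a + δ), |x - c| ≤ δ := by
    rcases le_or_gt (c + δ) t with hct | hct
    · exact ⟨c, hc.1, hct, fun x hx => abs_le.2 ⟨by linarith [hx.1], by linarith [hx.2]⟩⟩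
    · exact ⟨c - δ, by linarith, by linarith [hc.2],
        fun x hx => abs_le.2 ⟨by linarith [hx.1], by linarith [hx.2]⟩⟩
  have hsub : Icc a (a + δ) ⊆ Icc s t := Icc_subset_Icc hsa hat
  calc δ * m = ∫ _ in a..a + δ, m := by simp
    _ ≤ ∫ x in a..a + δ, h x :=
        integral_mono_on (by linarith) intervalIntegrable_const
          (hh.mono_set (by rwa [uIcc_of_le (by linarith), uIcc_of_le (by linarith)]))
          fun x hx => hm x (hsub hx) (hnear x hx)
    _ ≤ ∫ x in s..t, h x :=
        integral_mono_interval hsa (by linarith) hat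
          (ae_restrict_of_forall_mem measurableSet_Ioc
            fun x hx => hnonneg x (Ioc_subset_Icc_self hx)) hh

/-- Cauchy's formula for repeated integration, in the case of two integrations. -/
theorem integral_primitive_eq_integral_sub_mul {g : ℝ → ℝ} {a b : ℝ} (hab : a ≤ b)
    (hg : ContinuousOn g (Icc a b)) :
    ∫ x in a..b, ∫ y in a..x, g y = ∫ x in a..b, (b - x) * g x := by
  have hgI : IntegrableOn g (uIcc a b) := by
    rw [uIcc_of_le hab]
    exact hg.integrableOn_Icc
  have hderiv : ∀ x ∈ Ioo (min a b) (max a b),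
      HasDerivAt (fun u => ∫ y in a..u, g y) (g x) x := by
    rw [min_eq_left hab, max_eq_right hab]
    intro x hx
    exact integral_hasDerivAt_right (hgI.intervalIntegrable.mono_set
        (uIcc_subset_uIcc_left (by rw [uIcc_of_le hab]; exact Ioo_subset_Icc_self hx)))
      ((hg.mono Ioo_subset_Icc_self).stronglyMeasurableAtFilter isOpen_Ioo x hx)
      (hg.continuousAt (Icc_mem_nhds hx.1 hx.2))
  rw [integral_mul_deriv_eq_deriv_mul_of_hasDerivAt (u := fun x => b - x)
    (continuous_const.sub continuous_id).continuousOn (continuousOn_primitive_interval hgI)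
    (fun x _ => (hasDerivAt_id x).const_sub b) hderiv intervalIntegrable_const
    hgI.intervalIntegrable]
  simp

theorem integral_mul_add_integral_mul_sub_one_eq {g : ℝ → ℝ} (hg : ContinuousOn g (Icc 0 1))
    {z : ℝ} (hz : z ∈ Icc (0 : ℝ) 1) :
    (∫ x in (0 : ℝ)..z, g x * x) + ∫ x in z..(1 : ℝ), g x * (x - 1)
      = (∫ y in (0 : ℝ)..z, g y) - ∫ x in (0 : ℝ)..1, ∫ y in (0 : ℝ)..x, g y := by
  have hint : ∀ {f : ℝ → ℝ}, ContinuousOn f (Icc 0 1) → ∀ {u v : ℝ}, u ∈ Icc (0 : ℝ) 1 →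
      v ∈ Icc (0 : ℝ) 1 → IntervalIntegrable f volume u v :=
    fun hf _ _ hu hv => (hf.mono (uIcc_subset_Icc hu hv)).intervalIntegrable
  have hg' : ContinuousOn (fun x => g x * (x - 1)) (Icc 0 1) :=
    hg.mul (continuous_id.sub continuous_const).continuousOn
  have h0 : (0 : ℝ) ∈ Icc (0 : ℝ) 1 := left_mem_Icc.2 zero_le_one
  have h1 : (1 : ℝ) ∈ Icc (0 : ℝ) 1 := right_mem_Icc.2 zero_le_one
  have hsplit : ∫ x in (0 : ℝ)..z, g x * x
      = (∫ x in (0 : ℝ)..z, g x * (x - 1)) + ∫ x in (0 : ℝ)..z, g x := by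
    rw [← integral_add (hint hg' h0 hz) (hint hg h0 hz)]
    exact integral_congr fun x _ => by ring
  have hadj := integral_add_adjacent_intervals (hint hg' h0 hz) (hint hg' hz h1)
  have hparts : ∫ x in (0 : ℝ)..1, g x * (x - 1) = -∫ x in (0 : ℝ)..1, (1 - x) * g x := by
    rw [← intervalIntegral.integral_neg]
    exact integral_congr fun x _ => by ring
  rw [integral_primitive_eq_integral_sub_mul zero_le_one hg]
  linarith

theorem inv_mul_pow_three_le_integral_sub_of_sq_sub_le {G : ℝ → ℝ} {E z x₀ : ℝ}
    (hGc : ContinuousOn G (Icc 0 1)) (hG0 : G 0 = 0)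
    (hG : ∀ a b, 0 ≤ a → a ≤ b → b ≤ 1 → (G b - G a) ^ 2 ≤ (b - a) * E)
    (hz : IsMaxOn G (Icc 0 1) z) (hx₀ : x₀ ∈ Icc (0 : ℝ) 1) :
    1 / 8 * E⁻¹ * |G x₀| ^ 3 ≤ ∫ x in (0 : ℝ)..1, (G z - G x) := by
  set M := |G x₀| with hMdef
  have hGz : ∀ x ∈ Icc (0 : ℝ) 1, G x ≤ G z := fun x hx => hz hx
  have h0 : (0 : ℝ) ∈ Icc (0 : ℝ) 1 := left_mem_Icc.2 zero_le_one
  have hE : 0 ≤ E := by nlinarith [hG 0 1 le_rfl zero_le_one le_rfl, sq_nonneg (G 1 - G 0)]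
  have hM : 0 ≤ M := abs_nonneg _
  have hME : M ^ 2 ≤ E := by
    have := hG 0 x₀ le_rfl hx₀.1 hx₀.2
    rw [hG0, sub_zero, sub_zero] at this
    rw [sq_abs]
    nlinarith [hx₀.2]
  have hGabs : ∀ a ∈ Icc (0 : ℝ) 1, ∀ b ∈ Icc (0 : ℝ) 1, (G b - G a) ^ 2 ≤ |b - a| * E := by
    intro a ha b hb
    rcases le_total a b with hab | hba
    · simpa [abs_of_nonneg (sub_nonneg.2 hab)] using hG a b ha.1 hab hb.2
    · rw [abs_sub_comm, abs_of_nonneg (sub_nonneg.2 hba), ← neg_sub, neg_sq]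
      exact hG b a hb.1 hba ha.2
  obtain ⟨c, hc, hcM⟩ : ∃ c ∈ Icc (0 : ℝ) 1, M ≤ G z - G c := by
    rcases le_or_gt 0 (G x₀) with hpos | hneg
    · exact ⟨0, h0, by rw [hMdef, hG0, abs_of_nonneg hpos]; linarith [hGz x₀ hx₀]⟩
    · exact ⟨x₀, hx₀, by rw [hMdef, abs_of_neg hneg]; linarith [hGz 0 h0]⟩
  set δ := M ^ 2 / (4 * E)
  have hδ : 0 ≤ δ := by positivity
  have hδE : δ * E ≤ M ^ 2 / 4 := by
    rcases hE.eq_or_lt with hE0 | hEpos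
    · rw [← hE0, mul_zero]
      positivity
    · exact le_of_eq (by simp only [δ]; field_simp)
  have hδ1 : δ ≤ 1 / 4 := div_le_of_le_mul₀ (by positivity) (by norm_num) (by linarith)
  have hnear : ∀ x ∈ Icc (0 : ℝ) 1, |x - c| ≤ δ → M / 2 ≤ G z - G x := by
    intro x hx hxc
    have hsq : (G x - G c) ^ 2 ≤ (M / 2) ^ 2 :=
      calc (G x - G c) ^ 2 ≤ |x - c| * E := hGabs c hc x hx
        _ ≤ δ * E := by gcongr
        _ ≤ (M / 2) ^ 2 := by linarith
    linarith [(abs_le_of_sq_le_sq' hsq (by positivity)).2]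
  calc 1 / 8 * E⁻¹ * M ^ 3 = δ * (M / 2) := by ring
    _ ≤ ∫ x in (0 : ℝ)..1, (G z - G x) :=
        mul_le_intervalIntegral_of_le_near
          ((continuousOn_const.sub hGc).intervalIntegrable_of_Icc zero_le_one)
          (fun x hx => sub_nonneg.2 (hGz x hx)) hc hδ (by linarith) hnear

theorem stmt_8_general (g : ℝ → ℝ) (hg : ContinuousOn g (Set.Icc 0 1)) :
    sSup ((fun z => (∫ x in (0 : ℝ)..z, g x * x) + ∫ x in z..(1 : ℝ), g x * (x - 1)) ''
        Set.Icc (0 : ℝ) 1) ≥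
      1 / 16 * (∫ x in (0 : ℝ)..1, g x ^ 2)⁻¹ *
        (sSup ((fun z => |∫ y in (0 : ℝ)..z, g y|) '' Set.Icc (0 : ℝ) 1)) ^ 3 := by
  set G : ℝ → ℝ := fun z => ∫ y in (0 : ℝ)..z, g y
  have hGc : ContinuousOn G (Icc 0 1) := by
    simpa only [uIcc_of_le zero_le_one] using
      continuousOn_primitive_interval' (hg.intervalIntegrable_of_Icc zero_le_one) left_mem_uIcc
  have hI : (Icc (0 : ℝ) 1).Nonempty := nonempty_Icc.2 zero_le_one
  obtain ⟨z, hz, hzmax⟩ := isCompact_Icc.exists_isMaxOn hI hGc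
  obtain ⟨x₀, hx₀, hM⟩ := isCompact_Icc.exists_sSup_image_eq hI hGc.abs
  rw [image_congr fun z hz => integral_mul_add_integral_mul_sub_one_eq hg hz, hM]
  have hE : 0 ≤ ∫ x in (0 : ℝ)..1, g x ^ 2 := integral_nonneg zero_le_one fun x _ => sq_nonneg _
  calc 1 / 16 * (∫ x in (0 : ℝ)..1, g x ^ 2)⁻¹ * |G x₀| ^ 3
      ≤ 1 / 8 * (∫ x in (0 : ℝ)..1, g x ^ 2)⁻¹ * |G x₀| ^ 3 := by gcongr; norm_num
    _ ≤ ∫ x in (0 : ℝ)..1, (G z - G x) :=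
        inv_mul_pow_three_le_integral_sub_of_sq_sub_le hGc integral_same
          (fun _ _ => sq_primitive_sub_le hg) hzmax hx₀
    _ = G z - ∫ x in (0 : ℝ)..1, G x := by
        rw [integral_sub intervalIntegrable_const (hGc.intervalIntegrable_of_Icc zero_le_one)]
        simp
    _ ≤ _ := le_csSup ((isCompact_Icc.image_of_continuousOn
          (hGc.sub continuousOn_const)).bddAbove) ⟨z, hz, rfl⟩

/-- for continuous `g : [0,1] → ℝ` not identically zero,
`max_{0≤z≤1} [∫_0^z g(x) x dx + ∫_z^1 g(x)(x−1) dx]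
  ≥ (1/16) (∫_0^1 g²)⁻¹ (max_{0≤x≤1} |∫_0^x g|)³`. -/
theorem stmt_8 (g : ℝ → ℝ) (hg : ContinuousOn g (Set.Icc 0 1))
    (hne : ∃ x ∈ Set.Icc (0 : ℝ) 1, g x ≠ 0) :
    sSup ((fun z => (∫ x in (0 : ℝ)..z, g x * x) + ∫ x in z..(1 : ℝ), g x * (x - 1)) ''
        Set.Icc (0 : ℝ) 1) ≥
      1 / 16 * (∫ x in (0 : ℝ)..1, g x ^ 2)⁻¹ *
        (sSup ((fun z => |∫ y in (0 : ℝ)..z, g y|) '' Set.Icc (0 : ℝ) 1)) ^ 3 :=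
  stmt_8_general g hg
end

section
/- With the partition setup below, X ≥ ℓ_k²/4 for every k ∈ {1, …, m}; in particular X > 0, i.e. min_{α ∈ [0,1]} h(α) < 0. -/
/-!
Off the partition points `h' = g`; more precisely `h α = h 0 + ∫₀^α g` on `[0,1]`, so `h` is
continuous and affine with slope `±1` on every piece `[a_{k-1}, a_k]`. Since
`∫₀¹ ∫₀^α g = ∫₀¹ (1 - z) g z dz`, the mean of `h` over `[0,1]` vanishes, so with `S = min h`
we get `X = -S = ∫₀¹ (h - S) ≥ ∫_{piece k} (h - S)`. An affine function of slope `±1` that stays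
above `S` on an interval of length `ℓ` exceeds `S` by at least a right triangle of legs `ℓ`,
so `X ≥ ℓ_k² / 2`.
-/

open Set MeasureTheory

theorem intervalIntegrable_of_piecewise_const {E : Type*} [NormedAddCommGroup E] {g : ℝ → E}
    {a : ℕ → ℝ} {m : ℕ} (ha : ∀ k < m, a k ≤ a (k + 1))
    (hg : ∀ k < m, ∃ c, EqOn g (fun _ ↦ c) (Ioo (a k) (a (k + 1)))) :
    IntervalIntegrable g volume (a 0) (a m) :=
  IntervalIntegrable.trans_iterate fun k hk ↦
    have ⟨_, hc⟩ := hg k hk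
    intervalIntegrable_const.congr_uIoo (uIoo_of_le (ha k hk) ▸ hc.symm)

theorem integral_primitive_eq_integral_sub_mul_s10 {φ : ℝ → ℝ} {a b : ℝ}
    (hφ : IntervalIntegrable φ volume a b) :
    ∫ x in a..b, (∫ t in a..x, φ t) = ∫ x in a..b, (b - x) * φ x := by
  have hF := hφ.absolutelyContinuousOnInterval_intervalIntegral left_mem_uIcc
  have hv : AbsolutelyContinuousOnInterval (fun x : ℝ ↦ x - b) a b :=
    (LipschitzWith.id.sub (LipschitzWith.const b)).lipschitzOnWith.absolutelyContinuousOnInterval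
  have hderiv : ∫ x in a..b, deriv (fun x ↦ ∫ t in a..x, φ t) x * (x - b) =
      ∫ x in a..b, φ x * (x - b) := by
    refine intervalIntegral.integral_congr_ae ?_
    filter_upwards [hφ.ae_hasDerivAt_integral] with x hx hxab
    rw [(hx (uIoc_subset_uIcc hxab) a left_mem_uIcc).deriv]
  have hibp := hF.integral_mul_deriv_eq_deriv_mul hv
  simp only [deriv_sub_const, deriv_id'', mul_one, intervalIntegral.integral_same, sub_self,
    mul_zero, zero_mul, zero_sub, hderiv] at hibp
  rw [hibp, ← intervalIntegral.integral_neg]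
  congr 1 with x
  ring

noncomputable def splitMoment (g : ℝ → ℝ) (α : ℝ) : ℝ :=
  (∫ z in (0 : ℝ)..α, g z * z) + ∫ z in α..(1 : ℝ), g z * (z - 1)

section splitMoment

variable {g : ℝ → ℝ}

theorem splitMoment_eq_add_primitive (hg : IntervalIntegrable g volume 0 1) {α : ℝ}
    (hα : α ∈ Icc (0 : ℝ) 1) :
    splitMoment g α = splitMoment g 0 + ∫ z in 0..α, g z := by
  rw [← uIcc_of_le zero_le_one] at hα
  have hgz : IntervalIntegrable (fun z ↦ g z * z) volume 0 α :=
    (hg.mul_continuousOn continuousOn_id).mono_set (uIcc_subset_uIcc_left hα)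
  have hgz₁ : IntervalIntegrable (fun z ↦ g z * (z - 1)) volume 0 1 :=
    hg.mul_continuousOn (continuousOn_id.sub continuousOn_const)
  have hsplit : ∫ z in 0..α, g z = (∫ z in 0..α, g z * z) - ∫ z in 0..α, g z * (z - 1) := by
    rw [← intervalIntegral.integral_sub hgz (hgz₁.mono_set (uIcc_subset_uIcc_left hα))]
    congr 1 with z
    ring
  rw [splitMoment, splitMoment, intervalIntegral.integral_same, zero_add, hsplit,
    ← intervalIntegral.integral_add_adjacent_intervals
      (hgz₁.mono_set (uIcc_subset_uIcc_left hα)) (hgz₁.mono_set (uIcc_subset_uIcc_right hα))]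
  ring

theorem continuousOn_splitMoment (hg : IntervalIntegrable g volume 0 1) :
    ContinuousOn (splitMoment g) (Icc 0 1) := by
  have hprim := intervalIntegral.continuousOn_primitive_interval' hg left_mem_uIcc
  rw [uIcc_of_le zero_le_one] at hprim
  exact (continuousOn_const.add hprim).congr fun α hα ↦ splitMoment_eq_add_primitive hg hα

theorem integral_splitMoment (hg : IntervalIntegrable g volume 0 1) :
    ∫ α in (0 : ℝ)..1, splitMoment g α = 0 := by
  have hprim : IntervalIntegrable (fun α ↦ ∫ z in (0 : ℝ)..α, g z) volume 0 1 :=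
    (intervalIntegral.continuousOn_primitive_interval' hg left_mem_uIcc).intervalIntegrable
  have hleft : IntervalIntegrable (fun z ↦ g z * (z - 1)) volume 0 1 :=
    hg.mul_continuousOn (continuousOn_id.sub continuousOn_const)
  have hright : IntervalIntegrable (fun z ↦ (1 - z) * g z) volume 0 1 :=
    hg.continuousOn_mul (continuousOn_const.sub continuousOn_id)
  rw [intervalIntegral.integral_congr fun α hα ↦
      splitMoment_eq_add_primitive hg (uIcc_of_le (zero_le_one' ℝ) ▸ hα),
    intervalIntegral.integral_add intervalIntegrable_const hprim,
    integral_primitive_eq_integral_sub_mul_s10 hg,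
    intervalIntegral.integral_const, sub_zero, one_smul, splitMoment,
    intervalIntegral.integral_same, zero_add, ← intervalIntegral.integral_add hleft hright]
  refine (intervalIntegral.integral_congr fun z _ ↦ ?_).trans intervalIntegral.integral_zero
  ring

theorem splitMoment_eq_of_eqOn_Ioo (hg : IntervalIntegrable g volume 0 1) {u v c : ℝ}
    (hu : 0 ≤ u) (hv : v ≤ 1) (hgc : EqOn g (fun _ ↦ c) (Ioo u v)) {x : ℝ} (hx : x ∈ Icc u v) :
    splitMoment g x = splitMoment g u + c * (x - u) := by
  have hx₀ : x ∈ Icc (0 : ℝ) 1 := ⟨hu.trans hx.1, hx.2.trans hv⟩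
  have hu₀ : u ∈ Icc (0 : ℝ) 1 := ⟨hu, hx.1.trans hx₀.2⟩
  have hprim : ∫ z in u..x, g z = c * (x - u) := by
    rw [intervalIntegral.integral_congr_Ioo_of_le hx.1 (hgc.mono (Ioo_subset_Ioo_right hx.2)),
      intervalIntegral.integral_const, smul_eq_mul, mul_comm]
  have hsub : ∀ {y}, y ∈ Icc (0 : ℝ) 1 → IntervalIntegrable g volume 0 y := fun hy ↦
    hg.mono_set (uIcc_subset_uIcc_left (uIcc_of_le (zero_le_one' ℝ) ▸ hy))
  rw [splitMoment_eq_add_primitive hg hx₀, splitMoment_eq_add_primitive hg hu₀, ← hprim,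
    ← intervalIntegral.integral_interval_sub_left (hsub hx₀) (hsub hu₀)]
  ring

theorem sq_div_two_le_integral_sub_of_affine {f : ℝ → ℝ} {u v c S : ℝ} (huv : u ≤ v)
    (hc : |c| = 1) (hf : ∀ x ∈ Icc u v, f x = f u + c * (x - u)) (hSu : S ≤ f u)
    (hSv : S ≤ f v) :
    (v - u) ^ 2 / 2 ≤ ∫ x in u..v, (f x - S) := by
  have hint : ∫ x in u..v, (f x - S) = (v - u) * (f u - S) + c * (v - u) ^ 2 / 2 := by
    rw [intervalIntegral.integral_congr (g := fun x ↦ (f u - S) + c * (x - u)) fun x hx ↦ by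
        simp only [hf x (uIcc_of_le huv ▸ hx)]; ring,
      intervalIntegral.integral_add intervalIntegrable_const
        ((by fun_prop : Continuous fun x : ℝ ↦ c * (x - u)).intervalIntegrable _ _)]
    simp only [intervalIntegrable_const, intervalIntegral.integral_sub,
      intervalIntegral.integral_const, smul_eq_mul, intervalIntegral.integral_const_mul,
      intervalIntegral.intervalIntegrable_id, integral_id]
    ring
  have hfv := hf v (right_mem_Icc.2 huv)
  rw [hint]
  rcases (abs_eq zero_le_one).1 hc with rfl | rfl
  · nlinarith [mul_nonneg (sub_nonneg.2 huv) (sub_nonneg.2 hSu)]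
  · nlinarith [mul_nonneg (sub_nonneg.2 huv) (sub_nonneg.2 hSv)]

theorem sq_div_two_le_neg_sInf_splitMoment (hg : IntervalIntegrable g volume 0 1) {u v c : ℝ}
    (hu : 0 ≤ u) (huv : u ≤ v) (hv : v ≤ 1) (hc : |c| = 1)
    (hgc : EqOn g (fun _ ↦ c) (Ioo u v)) :
    (v - u) ^ 2 / 2 ≤ -sInf (splitMoment g '' Icc 0 1) := by
  set S := sInf (splitMoment g '' Icc 0 1)
  have hcont := continuousOn_splitMoment hg
  have hS : ∀ x ∈ Icc (0 : ℝ) 1, S ≤ splitMoment g x := fun x hx ↦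
    csInf_le (isCompact_Icc.image_of_continuousOn hcont).bddBelow (mem_image_of_mem _ hx)
  have hint : IntervalIntegrable (splitMoment g) volume 0 1 :=
    hcont.intervalIntegrable_of_Icc zero_le_one
  calc (v - u) ^ 2 / 2 ≤ ∫ x in u..v, (splitMoment g x - S) :=
        sq_div_two_le_integral_sub_of_affine huv hc
          (fun x hx ↦ splitMoment_eq_of_eqOn_Ioo hg hu hv hgc hx)
          (hS u ⟨hu, huv.trans hv⟩) (hS v ⟨hu.trans huv, hv⟩)
    _ ≤ ∫ x in (0 : ℝ)..1, (splitMoment g x - S) :=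
        intervalIntegral.integral_mono_interval hu huv hv
          ((ae_restrict_mem measurableSet_Ioc).mono fun x hx ↦
            sub_nonneg.2 (hS x (Ioc_subset_Icc_self hx)))
          (hint.sub intervalIntegrable_const)
    _ = -S := by
        rw [intervalIntegral.integral_sub hint intervalIntegrable_const, integral_splitMoment hg]
        simp

end splitMoment

/-- with `0 = a_0 < a_1 < … < a_m = 1`, `g : [0,1] → {−1,+1}` constant on each
open interval `(a_{k−1}, a_k)` of length `ℓ_k`, `h(α) = ∫_0^α g(z) z dz + ∫_α^1 g(z)(z−1) dz`
and `X = −min_{[0,1]} h`, one has `X ≥ ℓ_k²/4` for every `k`; in particular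
`min_{[0,1]} h < 0`. -/
theorem stmt_10 (m : ℕ) (hm : 1 ≤ m) (a : ℕ → ℝ)
    (ha0 : a 0 = 0) (ham : a m = 1) (hmono : ∀ k < m, a k < a (k + 1))
    (g : ℝ → ℝ) (hg : ∀ z ∈ Set.Icc (0 : ℝ) 1, g z = 1 ∨ g z = -1)
    (hconst : ∀ k < m, ∀ z ∈ Set.Ioo (a k) (a (k + 1)),
      ∀ w ∈ Set.Ioo (a k) (a (k + 1)), g z = g w)
    (h : ℝ → ℝ)
    (hh : ∀ α, h α = (∫ z in (0 : ℝ)..α, g z * z) + ∫ z in α..(1 : ℝ), g z * (z - 1))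
    (X : ℝ) (hX : X = -sInf (h '' Set.Icc (0 : ℝ) 1)) :
    (∀ k < m, (a (k + 1) - a k) ^ 2 / 4 ≤ X) ∧ sInf (h '' Set.Icc (0 : ℝ) 1) < 0 := by
  obtain rfl : h = splitMoment g := funext hh
  have ha : MonotoneOn a (Iic m) :=
    (strictMonoOn_Iic_of_lt_succ fun k hk ↦ by simpa using hmono k hk).monotoneOn
  have hbounds : ∀ k < m, 0 ≤ a k ∧ a (k + 1) ≤ 1 := fun k hk ↦
    ⟨ha0 ▸ ha (Nat.zero_le m) hk.le (Nat.zero_le k), ham ▸ ha hk (le_refl m) hk⟩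
  have hstep : ∀ k < m, ∃ c, |c| = 1 ∧ EqOn g (fun _ ↦ c) (Ioo (a k) (a (k + 1))) := by
    intro k hk
    have hmid : (a k + a (k + 1)) / 2 ∈ Ioo (a k) (a (k + 1)) :=
      ⟨left_lt_add_div_two.2 (hmono k hk), add_div_two_lt_right.2 (hmono k hk)⟩
    refine ⟨_, (abs_eq zero_le_one).2 (hg _ ?_), fun w hw ↦ hconst k hk w hw _ hmid⟩
    exact ⟨(hbounds k hk).1.trans hmid.1.le, hmid.2.le.trans (hbounds k hk).2⟩
  have hgi : IntervalIntegrable g volume 0 1 := ha0 ▸ ham ▸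
    intervalIntegrable_of_piecewise_const (fun k hk ↦ (hmono k hk).le)
      fun k hk ↦ (hstep k hk).imp fun _ ↦ And.right
  have hX' : ∀ k < m, (a (k + 1) - a k) ^ 2 / 2 ≤ X := fun k hk ↦
    have ⟨_, hc, hgc⟩ := hstep k hk
    hX ▸ sq_div_two_le_neg_sInf_splitMoment hgi (hbounds k hk).1 (hmono k hk).le
      (hbounds k hk).2 hc hgc
  have hpos : 0 < (a 1 - a 0) ^ 2 / 2 := by have := hmono 0 hm; positivity
  refine ⟨fun k hk ↦ ?_, by linarith [hX' 0 hm]⟩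
  linarith [hX' k hk, sq_nonneg (a (k + 1) - a k)]
end

section
/- With the partition setup below, ∑ over k with ℓ_k > X of (ℓ_k − X)² ≤ 2X; that is, there cannot be too many intervals of constancy with length much larger than X. -/
/-!
On each interval of constancy the potential `h` is affine with slope `g = ±1`, because
`h β - h α = ∫_α^β g`. Summation by parts turns `h 1 = ∫₀¹ z g(z) dz` into the vanishing of
the trapezoid sum `∑ ℓ_k (h(a_k) + h(a_{k+1}))`, i.e. of `∫₀¹ h`. With `u = h + X ≥ 0`, the
trapezoid sum of `u` equals `2X`, while each of its terms is at least `ℓ_k²` since the endpoint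
values of `u` are nonnegative and differ by `ℓ_k`. Hence `∑ ℓ_k² ≤ 2X`, which also gives `X ≥ 0`.
-/

open scoped Classical

open MeasureTheory Set Finset

noncomputable def potential (g : ℝ → ℝ) (α : ℝ) : ℝ :=
  (∫ z in (0 : ℝ)..α, g z * z) + ∫ z in α..(1 : ℝ), g z * (z - 1)

theorem neg_one_le_potential {g : ℝ → ℝ} (hg : ∀ z ∈ Icc (0 : ℝ) 1, |g z| ≤ 1) {α : ℝ}
    (hα : α ∈ Icc (0 : ℝ) 1) : -1 ≤ potential g α := by
  have hbound : ∀ {x y : ℝ} {φ : ℝ → ℝ}, 0 ≤ x → x ≤ y → y ≤ 1 →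
      (∀ z ∈ Icc (0 : ℝ) 1, |φ z| ≤ 1) → -(y - x) ≤ ∫ z in x..y, g z * φ z := by
    intro x y φ hx hxy hy hφ
    have := intervalIntegral.norm_integral_le_of_norm_le_const (C := 1)
      (f := fun z => g z * φ z) (a := x) (b := y) fun z hz => by
        rw [uIoc_of_le hxy] at hz
        have hz' : z ∈ Icc (0 : ℝ) 1 := ⟨hx.trans hz.1.le, hz.2.trans hy⟩
        rw [Real.norm_eq_abs, abs_mul]
        exact mul_le_one₀ (hg z hz') (abs_nonneg _) (hφ z hz')
    rw [Real.norm_eq_abs, one_mul, abs_of_nonneg (sub_nonneg.2 hxy)] at this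
    linarith [neg_abs_le (∫ z in x..y, g z * φ z)]
  have h₁ := hbound le_rfl hα.1 hα.2 fun z hz => abs_le.2 ⟨by linarith [hz.1], hz.2⟩
  have h₂ := hbound hα.1 hα.2 le_rfl (φ := fun z => z - 1)
    fun z hz => abs_le.2 ⟨by linarith [hz.1], by linarith [hz.2]⟩
  unfold potential
  linarith

section ConstantPiece

variable {f g : ℝ → ℝ} {x y c : ℝ}

theorem intervalIntegrable_mul_of_eqOn_Ioo (hxy : x ≤ y) (hg : EqOn g (fun _ => c) (Ioo x y))
    (hf : Continuous f) : IntervalIntegrable (fun z => g z * f z) volume x y :=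
  ((by fun_prop : Continuous fun z => c * f z).intervalIntegrable x y).congr_uIoo fun z hz => by
    rw [uIoo_of_le hxy] at hz
    simp only [hg hz]

theorem integral_mul_of_eqOn_Ioo (hxy : x ≤ y) (hg : EqOn g (fun _ => c) (Ioo x y)) :
    ∫ z in x..y, g z * f z = c * ∫ z in x..y, f z := by
  rw [intervalIntegral.integral_congr_Ioo_of_le hxy (g := fun z => c * f z)
    fun z hz => by simp only [hg hz], intervalIntegral.integral_const_mul]

end ConstantPiece

theorem sum_range_trapezoid_eq (m : ℕ) (a H : ℕ → ℝ) :
    ∑ k ∈ range m, (a (k + 1) - a k) * (H k + H (k + 1)) =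
      2 * (a m * H m - a 0 * H 0) - ∑ k ∈ range m, (a (k + 1) + a k) * (H (k + 1) - H k) := by
  rw [← sum_range_sub (fun k => a k * H k), mul_sum, ← sum_sub_distrib]
  exact sum_congr rfl fun k _ => by ring

section Partition

variable {m : ℕ} {a s : ℕ → ℝ} {g : ℝ → ℝ}
  (hmono : ∀ k < m, a k ≤ a (k + 1)) (hgs : ∀ k < m, EqOn g (fun _ => s k) (Ioo (a k) (a (k + 1))))
include hmono hgs

theorem intervalIntegrable_mul_of_partition {f : ℝ → ℝ} (hf : Continuous f) {i j : ℕ}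
    (hij : i ≤ j) (hjm : j ≤ m) : IntervalIntegrable (fun z => g z * f z) volume (a i) (a j) :=
  IntervalIntegrable.trans_iterate_Ico hij fun k hk =>
    have hk : k < m := (mem_Ico.1 hk).2.trans_le hjm
    intervalIntegrable_mul_of_eqOn_Ioo (hmono k hk) (hgs k hk) hf

theorem potential_succ_sub (ha0 : a 0 = 0) (ham : a m = 1) {k : ℕ} (hk : k < m) :
    potential g (a (k + 1)) - potential g (a k) = s k * (a (k + 1) - a k) := by
  have hF {i j : ℕ} (hij : i ≤ j) (hjm : j ≤ m) :=
    intervalIntegrable_mul_of_partition hmono hgs (f := fun z => z) continuous_id hij hjm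
  have hG {i j : ℕ} (hij : i ≤ j) (hjm : j ≤ m) :=
    intervalIntegrable_mul_of_partition hmono hgs (f := fun z => z - 1) (by fun_prop) hij hjm
  have hF₀ := hF (Nat.zero_le k) hk.le
  have hG₁ := hG hk le_rfl
  rw [ha0] at hF₀
  rw [ham] at hG₁
  unfold potential
  rw [← intervalIntegral.integral_add_adjacent_intervals hF₀ (hF (Nat.le_add_right k 1) hk),
    ← intervalIntegral.integral_add_adjacent_intervals (hG (Nat.le_add_right k 1) hk) hG₁,
    integral_mul_of_eqOn_Ioo (hmono k hk) (hgs k hk),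
    integral_mul_of_eqOn_Ioo (hmono k hk) (hgs k hk)]
  simp only [integral_id, intervalIntegral.integral_sub, intervalIntegral.intervalIntegrable_id,
    intervalIntegrable_const, intervalIntegral.integral_const, smul_eq_mul, mul_one]
  ring

theorem two_mul_potential_one (ha0 : a 0 = 0) (ham : a m = 1) :
    2 * potential g 1 = ∑ k ∈ range m, s k * (a (k + 1) ^ 2 - a k ^ 2) := by
  have hsum := intervalIntegral.sum_integral_adjacent_intervals (n := m) (a := a)
    (f := fun z => g z * z) (μ := volume) fun k hk =>
    intervalIntegrable_mul_of_partition hmono hgs continuous_id k.le_succ hk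
  rw [ha0, ham] at hsum
  simp only [potential, intervalIntegral.integral_same, add_zero, ← hsum, mul_sum]
  refine sum_congr rfl fun k hk => ?_
  rw [integral_mul_of_eqOn_Ioo (hmono k (mem_range.1 hk)) (hgs k (mem_range.1 hk)), integral_id]
  ring

theorem abs_potential_succ_sub (hs : ∀ k < m, |s k| = 1) (ha0 : a 0 = 0) (ham : a m = 1)
    {k : ℕ} (hk : k < m) :
    |potential g (a (k + 1)) - potential g (a k)| = a (k + 1) - a k := by
  rw [potential_succ_sub hmono hgs ha0 ham hk, abs_mul, hs k hk, one_mul,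
    abs_of_nonneg (sub_nonneg.2 (hmono k hk))]

theorem sum_trapezoid_potential_eq_zero (ha0 : a 0 = 0) (ham : a m = 1) :
    ∑ k ∈ range m, (a (k + 1) - a k) * (potential g (a k) + potential g (a (k + 1))) = 0 := by
  rw [sum_range_trapezoid_eq, ha0, ham, zero_mul, sub_zero, one_mul,
    two_mul_potential_one hmono hgs ha0 ham, sub_eq_zero]
  refine sum_congr rfl fun k hk => ?_
  rw [potential_succ_sub hmono hgs ha0 ham (mem_range.1 hk)]
  ring

end Partition

theorem sq_le_mul_add_of_abs_sub_eq {ℓ u v : ℝ} (hu : 0 ≤ u) (hv : 0 ≤ v) (h : |v - u| = ℓ) :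
    ℓ ^ 2 ≤ ℓ * (u + v) := by
  subst h
  rw [sq]
  exact mul_le_mul_of_nonneg_left (abs_sub_le_iff.2 ⟨by linarith, by linarith⟩) (abs_nonneg _)

theorem sum_sq_le_two_mul_of_trapezoid {m : ℕ} {a H : ℕ → ℝ} {Y : ℝ} (ha0 : a 0 = 0)
    (ham : a m = 1) (hstep : ∀ k < m, |H (k + 1) - H k| = a (k + 1) - a k)
    (htrap : ∑ k ∈ range m, (a (k + 1) - a k) * (H k + H (k + 1)) = 0)
    (hY : ∀ k ≤ m, -Y ≤ H k) :
    ∑ k ∈ range m, (a (k + 1) - a k) ^ 2 ≤ 2 * Y :=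
  calc ∑ k ∈ range m, (a (k + 1) - a k) ^ 2
      ≤ ∑ k ∈ range m, (a (k + 1) - a k) * ((H k + Y) + (H (k + 1) + Y)) := by
        refine sum_le_sum fun k hk => ?_
        have hk := mem_range.1 hk
        refine sq_le_mul_add_of_abs_sub_eq (by linarith [hY k hk.le]) (by linarith [hY _ hk]) ?_
        rw [← hstep k hk]
        ring_nf
    _ = ∑ k ∈ range m, (a (k + 1) - a k) * (H k + H (k + 1)) +
          2 * Y * ∑ k ∈ range m, (a (k + 1) - a k) := by
        rw [mul_sum, ← sum_add_distrib]
        exact sum_congr rfl fun k _ => by ring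
    _ = 2 * Y := by rw [htrap, sum_range_sub, ha0, ham]; ring

theorem sum_filter_sq_sub_le {X : ℝ} (hX : 0 ≤ X) (t : Finset ℕ) (x : ℕ → ℝ) :
    ∑ k ∈ t.filter (fun k => X < x k), (x k - X) ^ 2 ≤ ∑ k ∈ t, x k ^ 2 :=
  calc ∑ k ∈ t.filter (fun k => X < x k), (x k - X) ^ 2
      ≤ ∑ k ∈ t.filter (fun k => X < x k), x k ^ 2 :=
        sum_le_sum fun k hk => by nlinarith [(mem_filter.1 hk).2]
    _ ≤ ∑ k ∈ t, x k ^ 2 :=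
        sum_le_sum_of_subset_of_nonneg (filter_subset _ _) fun k _ _ => sq_nonneg _

theorem stmt_11_general (m : ℕ) (a : ℕ → ℝ)
    (ha0 : a 0 = 0) (ham : a m = 1) (hmono : ∀ k < m, a k < a (k + 1))
    (g : ℝ → ℝ) (hg : ∀ z ∈ Set.Icc (0 : ℝ) 1, g z = 1 ∨ g z = -1)
    (hconst : ∀ k < m, ∀ z ∈ Set.Ioo (a k) (a (k + 1)),
      ∀ w ∈ Set.Ioo (a k) (a (k + 1)), g z = g w)
    (h : ℝ → ℝ)
    (hh : ∀ α, h α = (∫ z in (0 : ℝ)..α, g z * z) + ∫ z in α..(1 : ℝ), g z * (z - 1))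
    (X : ℝ) (hX : X = -sInf (h '' Set.Icc (0 : ℝ) 1)) :
    ∑ k ∈ (Finset.range m).filter (fun k => X < a (k + 1) - a k),
      (a (k + 1) - a k - X) ^ 2 ≤ 2 * X := by
  obtain rfl : h = potential g := funext hh
  have hle : ∀ k < m, a k ≤ a (k + 1) := fun k hk => (hmono k hk).le
  have hmem : ∀ k ≤ m, a k ∈ Icc (0 : ℝ) 1 := by
    have hmon : MonotoneOn a (Set.Iic m) := monotoneOn_of_le_succ ordConnected_Iic
      fun k _ _ hk => hle k (Order.succ_le_iff.1 hk)
    exact fun k hk =>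
      ⟨ha0 ▸ hmon (Nat.zero_le m) hk (Nat.zero_le k), ham ▸ hmon hk Set.self_mem_Iic hk⟩
  have habs : ∀ z ∈ Icc (0 : ℝ) 1, |g z| = 1 := fun z hz => by
    rcases hg z hz with h | h <;> simp [h]
  have hmid : ∀ k < m, (a k + a (k + 1)) / 2 ∈ Ioo (a k) (a (k + 1)) := fun k hk =>
    ⟨by linarith [hmono k hk], by linarith [hmono k hk]⟩
  set s : ℕ → ℝ := fun k => g ((a k + a (k + 1)) / 2)
  have hgs : ∀ k < m, EqOn g (fun _ => s k) (Ioo (a k) (a (k + 1))) :=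
    fun k hk z hz => hconst k hk z hz _ (hmid k hk)
  have hs : ∀ k < m, |s k| = 1 := fun k hk =>
    habs _ ⟨(hmem k hk.le).1.trans (hmid k hk).1.le, (hmid k hk).2.le.trans (hmem _ hk).2⟩
  have hbdd : BddBelow (potential g '' Icc 0 1) := ⟨-1, by
    rintro _ ⟨α, hα, rfl⟩
    exact neg_one_le_potential (fun z hz => (habs z hz).le) hα⟩
  have hsq := sum_sq_le_two_mul_of_trapezoid (Y := X) ha0 ham
    (fun k hk => abs_potential_succ_sub hle hgs hs ha0 ham hk)
    (sum_trapezoid_potential_eq_zero hle hgs ha0 ham) fun k hk => by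
      rw [hX, neg_neg]
      exact csInf_le hbdd (mem_image_of_mem _ (hmem k hk))
  have hX0 : 0 ≤ X := by
    nlinarith [sum_nonneg fun k (_ : k ∈ range m) => sq_nonneg (a (k + 1) - a k)]
  exact (sum_filter_sq_sub_le hX0 _ _).trans hsq

/-- with the partition setup, `∑_{k : ℓ_k > X} (ℓ_k − X)² ≤ 2X`, where
`ℓ_k = a_k − a_{k−1}` and `X = −min_{[0,1]} h`. -/
theorem stmt_11 (m : ℕ) (hm : 1 ≤ m) (a : ℕ → ℝ)
    (ha0 : a 0 = 0) (ham : a m = 1) (hmono : ∀ k < m, a k < a (k + 1))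
    (g : ℝ → ℝ) (hg : ∀ z ∈ Set.Icc (0 : ℝ) 1, g z = 1 ∨ g z = -1)
    (hconst : ∀ k < m, ∀ z ∈ Set.Ioo (a k) (a (k + 1)),
      ∀ w ∈ Set.Ioo (a k) (a (k + 1)), g z = g w)
    (h : ℝ → ℝ)
    (hh : ∀ α, h α = (∫ z in (0 : ℝ)..α, g z * z) + ∫ z in α..(1 : ℝ), g z * (z - 1))
    (X : ℝ) (hX : X = -sInf (h '' Set.Icc (0 : ℝ) 1)) :
    ∑ k ∈ (Finset.range m).filter (fun k => X < a (k + 1) - a k),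
      (a (k + 1) - a k - X) ^ 2 ≤ 2 * X :=
  stmt_11_general m a ha0 ham hmono g hg hconst h hh X hX
end

section
/- With the partition setup below, X ≥ 1/(4m); that is, if g is a ±1-valued function that is constant on each of m intervals partitioning [0,1], then −min_{α ∈ [0,1]} h(α) ≥ 1/(4m). -/
/-!
Writing `h t - h s = ∫ z in s..t, g z` shows that `h` is affine with slope `±1` on every piece
`[a k, a (k+1)]`. Integrating by parts piece by piece gives
`∫₀¹ h = h 1 - ∫₀¹ z g(z) dz = 0`. The trapezoid rule is exact on each piece, and the two endpoint
values are at least `-X` and differ by `ℓ_k`, so the integral over the piece is at least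
`-X ℓ_k + ℓ_k² / 2`. Summing, `0 ≥ -X + (∑ ℓ_k²) / 2 ≥ -X + 1 / (2m)` by Cauchy–Schwarz.
-/

open MeasureTheory Set intervalIntegral

theorem monotoneOn_Iic_of_le_succ {α : Type*} [Preorder α] {f : ℕ → α} {m : ℕ}
    (hf : ∀ n < m, f n ≤ f (n + 1)) : MonotoneOn f (Set.Iic m) := by
  have : Monotone fun n => f (min n m) := monotone_nat_of_le_succ fun n => by
    rcases lt_or_ge n m with hn | hn
    · rw [min_eq_left hn.le, min_eq_left hn]
      exact hf n hn
    · rw [min_eq_right hn, min_eq_right (hn.trans n.le_succ)]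
  intro i hi j hj hij
  simpa [min_eq_left (mem_Iic.1 hi), min_eq_left (mem_Iic.1 hj)] using this hij

theorem mul_add_sq_div_two_le_mul_add_div_two {ℓ p q L : ℝ} (hℓ : 0 ≤ ℓ) (hpq : |q - p| = ℓ)
    (hp : L ≤ p) (hq : L ≤ q) : ℓ * L + ℓ ^ 2 / 2 ≤ ℓ * (p + q) / 2 := by
  have : 2 * L + ℓ ≤ p + q := by
    rcases abs_cases (q - p) with ⟨h, -⟩ | ⟨h, -⟩ <;> linarith
  nlinarith

section Interval

variable {f f' : ℝ → ℝ} {u v : ℝ}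

theorem IntervalIntegrable.congr_Ioo (huv : u ≤ v) (hf : IntervalIntegrable f volume u v)
    (h : EqOn f f' (Ioo u v)) : IntervalIntegrable f' volume u v := by
  rw [intervalIntegrable_iff_integrableOn_Ioo_of_le huv] at hf ⊢
  exact hf.congr_fun h measurableSet_Ioo

theorem intervalIntegral.integral_congr_Ioo (huv : u ≤ v) (h : EqOn f f' (Ioo u v)) :
    ∫ x in u..v, f x = ∫ x in u..v, f' x := by
  rw [integral_of_le huv, integral_of_le huv, integral_Ioc_eq_integral_Ioo,
    integral_Ioc_eq_integral_Ioo]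
  exact setIntegral_congr_fun measurableSet_Ioo h

theorem intervalIntegral.integral_eq_trapezoid_of_affine {c : ℝ} (huv : u ≤ v)
    (hf : ∀ t ∈ Icc u v, f t = f u + c * (t - u)) :
    ∫ t in u..v, f t = (v - u) * (f u + f v) / 2 := by
  rw [integral_congr_Ioo huv fun t ht => hf t (Ioo_subset_Icc_self ht), hf v ⟨huv, le_rfl⟩,
    integral_add intervalIntegrable_const ((by fun_prop : Continuous _).intervalIntegrable _ _),
    integral_const, integral_const_mul, integral_sub intervalIntegrable_id intervalIntegrable_const,
    integral_id, integral_const, smul_eq_mul, smul_eq_mul]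
  ring

theorem IntervalIntegrable.of_affine {c : ℝ} (huv : u ≤ v)
    (hf : ∀ t ∈ Icc u v, f t = f u + c * (t - u)) : IntervalIntegrable f volume u v :=
  (by fun_prop : Continuous fun t => f u + c * (t - u)).intervalIntegrable u v |>.congr_Ioo huv
    fun t ht => (hf t (Ioo_subset_Icc_self ht)).symm

end Interval

section Partition

variable {m : ℕ} {a : ℕ → ℝ} {c : ℕ → ℝ} {g φ : ℝ → ℝ}

theorem partition_mem_Icc (hmono : ∀ k < m, a k ≤ a (k + 1)) {k : ℕ} (hk : k ≤ m) :
    a k ∈ Icc (a 0) (a m) :=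
  have hmon := monotoneOn_Iic_of_le_succ hmono
  ⟨hmon (mem_Iic.2 (Nat.zero_le m)) hk (Nat.zero_le k), hmon hk (mem_Iic.2 le_rfl) hk⟩

theorem sq_sub_le_mul_sum_sq_sub (a : ℕ → ℝ) (m : ℕ) :
    (a m - a 0) ^ 2 ≤ m * ∑ k ∈ Finset.range m, (a (k + 1) - a k) ^ 2 := by
  have := sq_sum_le_card_mul_sum_sq (s := Finset.range m) (f := fun k => a (k + 1) - a k)
  rwa [Finset.sum_range_sub, Finset.card_range] at this

theorem intervalIntegrable_of_eqOn_Ioo_partition (hmono : ∀ k < m, a k ≤ a (k + 1))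
    (hg : ∀ k < m, EqOn g (fun _ => c k) (Ioo (a k) (a (k + 1)))) :
    IntervalIntegrable g volume (a 0) (a m) :=
  IntervalIntegrable.trans_iterate fun k hk =>
    intervalIntegrable_const.congr_Ioo (hmono k hk) (hg k hk).symm

theorem integral_mul_id_of_eqOn_Ioo_partition (hmono : ∀ k < m, a k ≤ a (k + 1))
    (hg : ∀ k < m, EqOn g (fun _ => c k) (Ioo (a k) (a (k + 1)))) :
    ∫ z in a 0..a m, g z * z = ∑ k ∈ Finset.range m, c k * (a (k + 1) ^ 2 - a k ^ 2) / 2 := by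
  have hpiece : ∀ k < m, EqOn (fun z => c k * z) (fun z => g z * z) (Ioo (a k) (a (k + 1))) :=
    fun k hk z hz => by simp only [hg k hk hz]
  rw [← sum_integral_adjacent_intervals fun k hk =>
    ((continuous_const.mul continuous_id).intervalIntegrable _ _).congr_Ioo (hmono k hk)
      (hpiece k hk)]
  refine Finset.sum_congr rfl fun k hk => ?_
  have hk := Finset.mem_range.1 hk
  rw [← integral_congr_Ioo (hmono k hk) (hpiece k hk), intervalIntegral.integral_const_mul,
    integral_id]
  ring

theorem mul_add_sum_sq_le_integral_of_affine_on_partition (hmono : ∀ k < m, a k ≤ a (k + 1))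
    (hφ : ∀ k < m, ∀ t ∈ Icc (a k) (a (k + 1)), φ t = φ (a k) + c k * (t - a k))
    (hc : ∀ k < m, |c k| = 1) {L : ℝ} (hL : ∀ k ≤ m, L ≤ φ (a k)) :
    (a m - a 0) * L + (∑ k ∈ Finset.range m, (a (k + 1) - a k) ^ 2) / 2 ≤
      ∫ t in a 0..a m, φ t := by
  rw [Finset.sum_div, ← sum_integral_adjacent_intervals fun k hk =>
      IntervalIntegrable.of_affine (hmono k hk) (hφ k hk),
    ← Finset.sum_range_sub, Finset.sum_mul, ← Finset.sum_add_distrib]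
  refine Finset.sum_le_sum fun k hk => ?_
  have hk := Finset.mem_range.1 hk
  rw [integral_eq_trapezoid_of_affine (hmono k hk) (hφ k hk)]
  refine mul_add_sq_div_two_le_mul_add_div_two (sub_nonneg.2 (hmono k hk)) ?_ (hL k hk.le)
    (hL (k + 1) hk)
  rw [hφ k hk _ ⟨hmono k hk, le_rfl⟩, add_sub_cancel_left, abs_mul, hc k hk, one_mul,
    abs_of_nonneg (sub_nonneg.2 (hmono k hk))]

end Partition

section Potential

variable {m : ℕ} {a : ℕ → ℝ} {c : ℕ → ℝ} {g h : ℝ → ℝ} {s t : ℝ}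

theorem sub_eq_integral_of_potential
    (hh : ∀ α, h α = (∫ z in (0 : ℝ)..α, g z * z) + ∫ z in α..(1 : ℝ), g z * (z - 1))
    (hg : IntervalIntegrable g volume 0 1) (hs : s ∈ Icc (0 : ℝ) 1) (ht : t ∈ Icc (0 : ℝ) 1) :
    h t - h s = ∫ z in s..t, g z := by
  have hsub : ∀ {f : ℝ → ℝ} {x y : ℝ}, x ∈ Icc (0 : ℝ) 1 → y ∈ Icc (0 : ℝ) 1 →
      IntervalIntegrable f volume 0 1 → IntervalIntegrable f volume x y := fun hx hy hf =>
    hf.mono_set <| uIcc_subset_uIcc (by rwa [uIcc_of_le zero_le_one])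
      (by rwa [uIcc_of_le zero_le_one])
  have h0 : (0 : ℝ) ∈ Icc (0 : ℝ) 1 := left_mem_Icc.2 zero_le_one
  have h1 : (1 : ℝ) ∈ Icc (0 : ℝ) 1 := right_mem_Icc.2 zero_le_one
  have hp : IntervalIntegrable (fun z => g z * z) volume 0 1 := hg.mul_continuousOn (by fun_prop)
  have hq : IntervalIntegrable (fun z => g z * (z - 1)) volume 0 1 :=
    hg.mul_continuousOn (by fun_prop)
  have hpq : ∫ z in s..t, g z = (∫ z in s..t, g z * z) - ∫ z in s..t, g z * (z - 1) := by
    rw [← integral_sub (hsub hs ht hp) (hsub hs ht hq)]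
    exact integral_congr fun z _ => by ring
  rw [hh, hh, hpq, ← integral_add_adjacent_intervals (hsub h0 hs hp) (hsub hs ht hp),
    ← integral_add_adjacent_intervals (hsub hs ht hq) (hsub ht h1 hq)]
  ring

theorem potential_affine_on_partition
    (hh : ∀ α, h α = (∫ z in (0 : ℝ)..α, g z * z) + ∫ z in α..(1 : ℝ), g z * (z - 1))
    (ha0 : a 0 = 0) (ham : a m = 1) (hmono : ∀ k < m, a k ≤ a (k + 1))
    (hg : ∀ k < m, EqOn g (fun _ => c k) (Ioo (a k) (a (k + 1)))) :
    ∀ k < m, ∀ t ∈ Icc (a k) (a (k + 1)), h t = h (a k) + c k * (t - a k) := by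
  intro k hk t ht
  have hg01 : IntervalIntegrable g volume 0 1 :=
    ha0 ▸ ham ▸ intervalIntegrable_of_eqOn_Ioo_partition hmono hg
  have hak := ha0 ▸ ham ▸ partition_mem_Icc hmono hk.le
  have hak1 := ha0 ▸ ham ▸ partition_mem_Icc hmono hk
  have hdiff := sub_eq_integral_of_potential hh hg01 hak ⟨hak.1.trans ht.1, ht.2.trans hak1.2⟩
  rw [integral_congr_Ioo ht.1 ((hg k hk).mono (Ioo_subset_Ioo_right ht.2)),
    intervalIntegral.integral_const, smul_eq_mul] at hdiff
  linarith

theorem integral_potential_eq_zero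
    (hh : ∀ α, h α = (∫ z in (0 : ℝ)..α, g z * z) + ∫ z in α..(1 : ℝ), g z * (z - 1))
    (ha0 : a 0 = 0) (ham : a m = 1) (hmono : ∀ k < m, a k ≤ a (k + 1))
    (hg : ∀ k < m, EqOn g (fun _ => c k) (Ioo (a k) (a (k + 1)))) :
    ∫ t in (0 : ℝ)..1, h t = 0 := by
  have haff := potential_affine_on_partition hh ha0 ham hmono hg
  -- integration by parts on each piece: `∫ h = [t h(t)] - ∫ t g(t) dt`
  calc ∫ t in (0 : ℝ)..1, h t
      = ∑ k ∈ Finset.range m, ((a (k + 1) * h (a (k + 1)) - a k * h (a k)) -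
          c k * (a (k + 1) ^ 2 - a k ^ 2) / 2) := by
        rw [← ha0, ← ham, ← sum_integral_adjacent_intervals fun k hk =>
          IntervalIntegrable.of_affine (hmono k hk) (haff k hk)]
        refine Finset.sum_congr rfl fun k hk => ?_
        have hk := Finset.mem_range.1 hk
        rw [integral_eq_trapezoid_of_affine (hmono k hk) (haff k hk)]
        linear_combination -(a (k + 1) + a k) / 2 * haff k hk _ ⟨hmono k hk, le_rfl⟩
    _ = a m * h (a m) - a 0 * h (a 0) - ∫ z in a 0..a m, g z * z := by
        rw [Finset.sum_sub_distrib, Finset.sum_range_sub (fun k => a k * h (a k)),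
          integral_mul_id_of_eqOn_Ioo_partition hmono hg]
    _ = 0 := by simp [ha0, ham, hh 1]

theorem continuousOn_potential
    (hh : ∀ α, h α = (∫ z in (0 : ℝ)..α, g z * z) + ∫ z in α..(1 : ℝ), g z * (z - 1))
    (hg : IntervalIntegrable g volume 0 1) : ContinuousOn h (Icc 0 1) := by
  have hprim := continuousOn_primitive_interval' hg left_mem_uIcc
  rw [uIcc_of_le zero_le_one] at hprim
  refine ((continuousOn_const (c := h 0)).add hprim).congr fun t ht => ?_
  rw [Pi.add_apply, ← sub_eq_integral_of_potential hh hg (left_mem_Icc.2 zero_le_one) ht,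
    add_sub_cancel]

end Potential

theorem stmt_12_general (m : ℕ) (a : ℕ → ℝ)
    (ha0 : a 0 = 0) (ham : a m = 1) (hmono : ∀ k < m, a k < a (k + 1))
    (g : ℝ → ℝ) (hg : ∀ z ∈ Set.Icc (0 : ℝ) 1, g z = 1 ∨ g z = -1)
    (hconst : ∀ k < m, ∀ z ∈ Set.Ioo (a k) (a (k + 1)),
      ∀ w ∈ Set.Ioo (a k) (a (k + 1)), g z = g w)
    (h : ℝ → ℝ)
    (hh : ∀ α, h α = (∫ z in (0 : ℝ)..α, g z * z) + ∫ z in α..(1 : ℝ), g z * (z - 1))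
    (X : ℝ) (hX : X = -sInf (h '' Set.Icc (0 : ℝ) 1)) :
    X ≥ 1 / (4 * (m : ℝ)) := by
  have hle : ∀ k < m, a k ≤ a (k + 1) := fun k hk => (hmono k hk).le
  have hpart : ∀ k ≤ m, a k ∈ Icc 0 1 := fun k hk => ha0 ▸ ham ▸ partition_mem_Icc hle hk
  set c : ℕ → ℝ := fun k => g ((a k + a (k + 1)) / 2)
  have hmid : ∀ k < m, (a k + a (k + 1)) / 2 ∈ Ioo (a k) (a (k + 1)) := fun k hk =>
    ⟨left_lt_add_div_two.2 (hmono k hk), add_div_two_lt_right.2 (hmono k hk)⟩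
  have hstep : ∀ k < m, EqOn g (fun _ => c k) (Ioo (a k) (a (k + 1))) := fun k hk z hz =>
    hconst k hk z hz _ (hmid k hk)
  have hc : ∀ k < m, |c k| = 1 := fun k hk => by
    rcases hg _ ⟨(hpart k hk.le).1.trans (hmid k hk).1.le,
      (hmid k hk).2.le.trans (hpart (k + 1) hk).2⟩ with h1 | h1 <;> simp [c, h1]
  have hmin : ∀ k ≤ m, -X ≤ h (a k) := fun k hk => by
    rw [hX, neg_neg]
    exact csInf_le (isCompact_Icc.bddBelow_image (continuousOn_potential hh
      (ha0 ▸ ham ▸ intervalIntegrable_of_eqOn_Ioo_partition hle hstep)))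
      (mem_image_of_mem h (hpart k hk))
  have hbound := mul_add_sum_sq_le_integral_of_affine_on_partition hle
    (potential_affine_on_partition hh ha0 ham hle hstep) hc hmin
  rw [ha0, ham, integral_potential_eq_zero hh ha0 ham hle hstep] at hbound
  have hCS := sq_sub_le_mul_sum_sq_sub a m
  rw [ha0, ham] at hCS
  have hS : 0 ≤ ∑ k ∈ Finset.range m, (a (k + 1) - a k) ^ 2 :=
    Finset.sum_nonneg fun k _ => sq_nonneg _
  exact div_le_of_le_mul₀ (by positivity) (by linarith) (by nlinarith)

/-- with the partition setup into `m` intervals, `X ≥ 1/(4m)`, where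
`X = −min_{[0,1]} h`. -/
theorem stmt_12 (m : ℕ) (hm : 1 ≤ m) (a : ℕ → ℝ)
    (ha0 : a 0 = 0) (ham : a m = 1) (hmono : ∀ k < m, a k < a (k + 1))
    (g : ℝ → ℝ) (hg : ∀ z ∈ Set.Icc (0 : ℝ) 1, g z = 1 ∨ g z = -1)
    (hconst : ∀ k < m, ∀ z ∈ Set.Ioo (a k) (a (k + 1)),
      ∀ w ∈ Set.Ioo (a k) (a (k + 1)), g z = g w)
    (h : ℝ → ℝ)
    (hh : ∀ α, h α = (∫ z in (0 : ℝ)..α, g z * z) + ∫ z in α..(1 : ℝ), g z * (z - 1))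
    (X : ℝ) (hX : X = -sInf (h '' Set.Icc (0 : ℝ) 1)) :
    X ≥ 1 / (4 * (m : ℝ)) :=
  stmt_12_general m a ha0 ham hmono g hg hconst h hh X hX
end
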